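/- arXiv:2110.01041 — 12 statements merged into one kernel-verified Lean document; each statement's English description precedes it below -/
import Mathlib

section
/- Let {M^a}_{a=0}^{n-1} be a POVM on ℂ^D, i.e., each M^a is a positive semidefinite D×D complex matrix and Σ_{a=0}^{n-1} M^a = 1. Let {U^a}_{a=0}^{n-1} be D×D unitary matrices, so that the measurement has Kraus operators U^a·√(M^a). If for every a one has Tr[√(M^a)·(U^a)†·M^a·U^a·√(M^a)] = Tr[M^a] (this is the repeatability condition p(a,a|A,A) = p(a|A) for the maximally mixed input state 1/D), then every M^a is an orthogonal projection, i.e., (M^a)² = M^a; in other words, the measurement is projective. -/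
open Matrix Finset
open scoped ComplexOrder

noncomputable section

/-- The positive semidefinite square root, as `Matrix.PosSemidef.sqrt` was defined in Mathlib
(December 2024); it has since been removed from Mathlib. -/
def Matrix.PosSemidef.sqrt {n : Type*} [Fintype n] [DecidableEq n] {𝕜 : Type*} [RCLike 𝕜]
    {A : Matrix n n 𝕜} (hA : A.PosSemidef) : Matrix n n 𝕜 :=
  hA.1.eigenvectorUnitary.1 * diagonal ((↑) ∘ (√·) ∘ hA.1.eigenvalues) *
    (star hA.1.eigenvectorUnitary : Matrix n n 𝕜)

lemma Matrix.PosSemidef.isHermitian_sqrt {n : Type*} [Fintype n] [DecidableEq n] {𝕜 : Type*}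
    [RCLike 𝕜] {A : Matrix n n 𝕜} (hA : A.PosSemidef) : hA.sqrt.IsHermitian := by
  unfold Matrix.IsHermitian Matrix.PosSemidef.sqrt
  simp [conjTranspose_mul, diagonal_conjTranspose, mul_assoc, Function.comp_def,
    Matrix.star_eq_conjTranspose, Pi.star_def, RCLike.star_def]

lemma Matrix.PosSemidef.sqrt_mul_self {n : Type*} [Fintype n] [DecidableEq n] {𝕜 : Type*}
    [RCLike 𝕜] {A : Matrix n n 𝕜} (hA : A.PosSemidef) : hA.sqrt * hA.sqrt = A := by
  have hU : (star hA.1.eigenvectorUnitary : Matrix n n 𝕜) * hA.1.eigenvectorUnitary.1 = 1 :=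
    Unitary.star_mul_self_of_mem hA.1.eigenvectorUnitary.2
  conv_rhs => rw [hA.1.spectral_theorem, Unitary.conjStarAlgAut_apply]
  unfold Matrix.PosSemidef.sqrt
  rw [show ∀ a b c d e f : Matrix n n 𝕜, a * b * c * (d * e * f) = a * b * (c * d) * e * f by
    intros; simp only [mul_assoc], hU, mul_one, mul_assoc _ (diagonal _) (diagonal _), diagonal_mul_diagonal]
  congr 3
  funext i
  simp only [Function.comp_apply]
  rw [← RCLike.ofReal_mul, Real.mul_self_sqrt (hA.eigenvalues_nonneg i)]

attribute [local irreducible] Matrix.PosSemidef.sqrt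

/-- A positive semidefinite complex matrix has nonnegative trace. -/
lemma psd_trace_nonneg' {d : ℕ} {A : Matrix (Fin d) (Fin d) ℂ} (hA : A.PosSemidef) :
    0 ≤ A.trace := by
  rw [Matrix.trace]
  refine Finset.sum_nonneg fun i _ => ?_
  exact hA.diag_nonneg

/-- A positive semidefinite complex matrix with zero trace is zero. -/
lemma psd_trace_eq_zero' {d : ℕ} {A : Matrix (Fin d) (Fin d) ℂ} (hA : A.PosSemidef)
    (h : A.trace = 0) : A = 0 := by
  set B := hA.sqrt with hB
  have hBH : Bᴴ = B := hA.isHermitian_sqrt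
  have hBB : Bᴴ * B = A := by rw [hBH, hA.sqrt_mul_self]
  have htr : Matrix.trace (Bᴴ * B) = 0 := by rw [hBB]; exact h
  have hdiag : ∀ j, (Bᴴ * B).diag j = dotProduct (star fun i => B i j) (fun i => B i j) :=
    fun j => by
      simp [Matrix.diag, Matrix.mul_apply, dotProduct, Matrix.conjTranspose_apply]
  have hnn : ∀ j ∈ Finset.univ, (0:ℂ) ≤ (Bᴴ * B).diag j := fun j _ => by
    rw [hdiag]; exact dotProduct_star_self_nonneg _
  rw [Matrix.trace] at htr
  have hz := (Finset.sum_eq_zero_iff_of_nonneg hnn).1 htr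
  have hB0 : B = 0 := by
    ext i j
    have hj := hz j (Finset.mem_univ j)
    rw [hdiag] at hj
    exact congrFun (dotProduct_star_self_eq_zero.1 hj) i
  rw [← hBB, hB0]
  simp

/-- If a POVM `{M a}` measured with Kraus operators `U a * √(M a)` satisfies the
repeatability condition `Tr[√(M a)·(U a)†·(M a)·(U a)·√(M a)] = Tr[M a]`
(i.e. `p(a,a|A,A) = p(a|A)` on the maximally mixed state `1/D`),
then every POVM element is an orthogonal projection. -/
theorem povm_repeatable_on_maximally_mixed_implies_projective
    (D n : ℕ) (hD : 1 ≤ D) (hn : 1 ≤ n)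
    (M : Fin n → Matrix (Fin D) (Fin D) ℂ)
    (hM : ∀ a, (M a).PosSemidef)
    (hsum : ∑ a, M a = 1)
    (U : Fin n → Matrix (Fin D) (Fin D) ℂ)
    (hU : ∀ a, U a ∈ Matrix.unitaryGroup (Fin D) ℂ)
    (hrep : ∀ a,
      Matrix.trace ((hM a).sqrt * (U a)ᴴ * M a * U a * (hM a).sqrt)
        = Matrix.trace (M a)) :
    ∀ a, M a * M a = M a := by
  intro a
  set S := (hM a).sqrt with hSdef
  have hSH : Sᴴ = S := (hM a).isHermitian_sqrt
  have hSS : S * S = M a := (hM a).sqrt_mul_self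
  set N := (U a)ᴴ * M a * U a with hNdef
  have hNpsd : N.PosSemidef := (hM a).conjTranspose_mul_mul_same (U a)
  have hUU : U a * (U a)ᴴ = 1 := by
    have := (Matrix.mem_unitaryGroup_iff).1 (hU a)
    simpa [Matrix.star_eq_conjTranspose] using this
  -- rewrite the repeatability trace as Tr(N * M a)
  have h1 : Matrix.trace (N * M a) = Matrix.trace (M a) := by
    have e : S * (U a)ᴴ * M a * U a * S = S * (N * S) := by rw [hNdef]; noncomm_ring
    calc Matrix.trace (N * M a) = Matrix.trace (N * S * S) := by rw [← hSS]; congr 1; noncomm_ring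
      _ = Matrix.trace (S * (N * S)) := Matrix.trace_mul_comm _ _
      _ = Matrix.trace (S * (U a)ᴴ * M a * U a * S) := by rw [e]
      _ = Matrix.trace (M a) := hrep a
  -- Tr(N*N) = Tr(M*M)
  have h2 : Matrix.trace (N * N) = Matrix.trace (M a * M a) := by
    have hNN : N * N = (U a)ᴴ * (M a * M a) * U a := by
      rw [hNdef]
      calc (U a)ᴴ * M a * U a * ((U a)ᴴ * M a * U a)
          = (U a)ᴴ * M a * (U a * (U a)ᴴ) * M a * U a := by noncomm_ring
        _ = (U a)ᴴ * (M a * M a) * U a := by rw [hUU]; noncomm_ring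
    rw [hNN, Matrix.trace_mul_cycle]
    rw [show U a * (U a)ᴴ * (M a * M a) = (U a * (U a)ᴴ) * (M a * M a) by noncomm_ring,
      hUU, one_mul]
  -- Tr(M*N) = Tr(N*M)
  have h3 : Matrix.trace (M a * N) = Matrix.trace (N * M a) := Matrix.trace_mul_comm _ _
  have hD' : (N - M a)ᴴ = N - M a := by
    rw [Matrix.conjTranspose_sub, hNpsd.1, (hM a).1]
  have h4 : 0 ≤ Matrix.trace ((N - M a)ᴴ * (N - M a)) :=
    psd_trace_nonneg' (Matrix.posSemidef_conjTranspose_mul_self _)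
  have h5 : Matrix.trace ((N - M a)ᴴ * (N - M a))
      = Matrix.trace (N * N) - Matrix.trace (N * M a) - Matrix.trace (M a * N)
        + Matrix.trace (M a * M a) := by
    rw [hD']
    rw [show (N - M a) * (N - M a) = N * N - N * M a - M a * N + M a * M a by noncomm_ring]
    simp [Matrix.trace_add, Matrix.trace_sub]
  -- conclude Tr(M) ≤ Tr(M*M)
  have h6 : Matrix.trace (M a) ≤ Matrix.trace (M a * M a) := by
    rw [h5, h2, h3, h1] at h4
    set x := Matrix.trace (M a) with hx
    set y := Matrix.trace (M a * M a) with hy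
    have h4' : (0:ℂ) ≤ (y - x) + (y - x) := by
      convert h4 using 1; ring
    have hhalf : (0:ℂ) ≤ (2⁻¹ : ℂ) := by
      rw [show ((2⁻¹ : ℂ)) = ((2⁻¹ : ℝ) : ℂ) by norm_num]
      rw [Complex.zero_le_real]
      norm_num
    have hm := mul_nonneg hhalf h4'
    rw [show (2⁻¹:ℂ) * ((y - x) + (y - x)) = y - x by ring] at hm
    exact sub_nonneg.mp hm
  -- 1 - M a is positive semidefinite
  have hone : (1 - M a) = ∑ b ∈ Finset.univ.erase a, M b := by
    have h := Finset.add_sum_erase Finset.univ M (Finset.mem_univ a)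
    rw [hsum] at h
    rw [← h, add_sub_cancel_left]
  have hsub : (1 - M a).PosSemidef := by
    rw [hone]
    exact Finset.sum_induction _ _ (fun x y hx hy => hx.add hy) .zero (fun b _ => hM b)
  have hkey : (M a - M a * M a).PosSemidef := by
    have hc := hsub.mul_mul_conjTranspose_same S
    rw [hSH] at hc
    have heq : S * (1 - M a) * S = M a - M a * M a := by
      rw [← hSS]; noncomm_ring
    rwa [heq] at hc
  have htr0 : Matrix.trace (M a - M a * M a) = 0 := by
    have hle : Matrix.trace (M a - M a * M a) ≤ 0 := by
      rw [Matrix.trace_sub]; exact sub_nonpos.mpr h6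
    exact le_antisymm hle (psd_trace_nonneg' hkey)
  have hz := psd_trace_eq_zero' hkey htr0
  exact (sub_eq_zero.mp hz).symm
end
end

section
/- For every k ∈ {1, …, d−1}, (B_1^{(k)})†·B_1^{(k)} + (B_2^{(k)})†·B_2^{(k)} = 2·1, where 1 is the D×D identity matrix and X† denotes the conjugate transpose. -/
open Matrix Finset
open scoped ComplexOrder

noncomputable section

set_option maxHeartbeats 1600000 in
/-- For every `k ∈ {1,…,d−1}`, `(B₁ᵏ)†·B₁ᵏ + (B₂ᵏ)†·B₂ᵏ = 2·𝟙`. -/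
theorem B_sum_of_squares_identity
    (d D : ℕ) (hd : 2 ≤ d) (hD : 1 ≤ D)
    (ω : ℂ) (hω : ω = Complex.exp (2 * Real.pi * Complex.I / d))
    (a : ℕ → ℂ)
    (ha : ∀ k, a k = ((1 - Complex.I) / 2) * Complex.exp (Real.pi * Complex.I * k / (2 * d)))
    (A₁ A₂ A₃ A₄ : Matrix (Fin D) (Fin D) ℂ)
    (hA₁ : A₁ ∈ Matrix.unitaryGroup (Fin D) ℂ)
    (hA₂ : A₂ ∈ Matrix.unitaryGroup (Fin D) ℂ)
    (hA₃ : A₃ ∈ Matrix.unitaryGroup (Fin D) ℂ)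
    (hA₄ : A₄ ∈ Matrix.unitaryGroup (Fin D) ℂ)
    (hA₁d : A₁ ^ d = 1) (hA₂d : A₂ ^ d = 1) (hA₃d : A₃ ^ d = 1) (hA₄d : A₄ ^ d = 1)
    (B₁ B₂ : ℕ → Matrix (Fin D) (Fin D) ℂ)
    (hB₁ : ∀ k, B₁ k = a k • A₃ ^ (d - k) + (starRingEnd ℂ (a k) * ω ^ k) • A₄ ^ (d - k))
    (hB₂ : ∀ k, B₂ k = starRingEnd ℂ (a k) • A₃ ^ (d - k) + a k • A₄ ^ (d - k)) :
    ∀ k, 1 ≤ k → k ≤ d - 1 →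
      (B₁ k)ᴴ * B₁ k + (B₂ k)ᴴ * B₂ k = (2 : ℂ) • (1 : Matrix (Fin D) (Fin D) ℂ) := by
  intro k hk1 hk2
  have hd0 : (d : ℂ) ≠ 0 := by
    exact_mod_cast Nat.cast_ne_zero.mpr (by omega)
  set U := A₃ ^ (d - k) with hUdef
  set V := A₄ ^ (d - k) with hVdef
  have hUmem : U ∈ Matrix.unitaryGroup (Fin D) ℂ := pow_mem hA₃ _
  have hVmem : V ∈ Matrix.unitaryGroup (Fin D) ℂ := pow_mem hA₄ _
  have hU : Uᴴ * U = 1 := by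
    have := Matrix.mem_unitaryGroup_iff'.mp hUmem
    simpa [Matrix.star_eq_conjTranspose] using this
  have hV : Vᴴ * V = 1 := by
    have := Matrix.mem_unitaryGroup_iff'.mp hVmem
    simpa [Matrix.star_eq_conjTranspose] using this
  set E := Complex.exp (Real.pi * Complex.I * k / (2 * d)) with hEdef
  have hE0 : E ≠ 0 := Complex.exp_ne_zero _
  have hEconj : starRingEnd ℂ E = E⁻¹ := by
    rw [hEdef, ← Complex.exp_conj, ← Complex.exp_neg]
    congr 1
    simp [map_div₀, _root_.map_mul, Complex.conj_I, Complex.conj_ofNat]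
    ring
  have hwE : ω ^ k = E ^ 4 := by
    rw [hω, hEdef, ← Complex.exp_nat_mul, ← Complex.exp_nat_mul]
    congr 1
    field_simp
    ring
  have hcE : a k = ((1 - Complex.I) / 2) * E := ha k
  have hcconj : starRingEnd ℂ (a k) = ((1 + Complex.I) / 2) * E⁻¹ := by
    rw [hcE, _root_.map_mul, hEconj, map_div₀, map_sub, _root_.map_one, Complex.conj_I,
      Complex.conj_ofNat]
    ring
  -- expand matrices
  rw [hB₁, hB₂]
  rw [← hUdef, ← hVdef]
  simp only [conjTranspose_add, conjTranspose_smul, Matrix.add_mul, Matrix.mul_add,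
    Matrix.smul_mul, Matrix.mul_smul, smul_smul, hU, hV, Complex.star_def, _root_.map_mul, hcconj, hcE, hwE,
    map_pow, hEconj, map_div₀, map_add, map_sub, _root_.map_one, Complex.conj_I, map_neg, map_inv₀, inv_inv,
    Complex.conj_ofNat]
  match_scalars
  · field_simp
    linear_combination (-4 : ℂ) * Complex.I_sq
  · field_simp
    ring_nf
    simp only [Complex.I_sq]
    ring
  · field_simp
    ring_nf
    simp only [Complex.I_sq]
    ring
end
end

section
/- The following sum-of-squares identity holds: Σ_{k=1}^{d−1} Σ_{x=1}^{2} (1 − A_x^k·B_x^{(k)})†·(1 − A_x^k·B_x^{(k)}) = 4(d−1)·1 − β̂, where 1 is the D×D identity matrix and X† denotes the conjugate transpose. -/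
open Matrix Finset
open scoped ComplexOrder

noncomputable section

private lemma tsos_key (D : ℕ) (p3 p4 : Matrix (Fin D) (Fin D) ℂ) (c w : ℂ)
    (hp3 : p3ᴴ * p3 = 1) (hp4 : p4ᴴ * p4 = 1)
    (hc : starRingEnd ℂ c * c = 1/2) (hw : starRingEnd ℂ w * w = 1)
    (hx1 : (starRingEnd ℂ c)^2 * w + c^2 = 0) :
    (c • p3 + (starRingEnd ℂ c * w) • p4)ᴴ * (c • p3 + (starRingEnd ℂ c * w) • p4)
      + (starRingEnd ℂ c • p3 + c • p4)ᴴ * (starRingEnd ℂ c • p3 + c • p4)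
      = (2:ℂ) • (1 : Matrix (Fin D) (Fin D) ℂ) := by
  have hx2 : c^2 * starRingEnd ℂ w + (starRingEnd ℂ c)^2 = 0 := by
    have := congrArg (starRingEnd ℂ) hx1
    simpa using this
  simp only [conjTranspose_add, conjTranspose_smul, add_mul, mul_add, smul_mul_assoc,
    mul_smul_comm, smul_smul, hp3, hp4, star_mul', RingHom.id_apply]
  match_scalars
  all_goals simp only [← starRingEnd_apply, Complex.conj_conj]
  all_goals first
    | linear_combination hx1
    | linear_combination hx2
    | linear_combination (3 + starRingEnd ℂ w * w) * hc + (1/2 : ℂ) * hw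

private lemma tsos_assemble (D : ℕ) (q1 q2 B1 B2 : Matrix (Fin D) (Fin D) ℂ)
    (hq1 : q1ᴴ * q1 = 1) (hq2 : q2ᴴ * q2 = 1)
    (hkey : B1ᴴ * B1 + B2ᴴ * B2 = (2:ℂ) • (1 : Matrix (Fin D) (Fin D) ℂ)) :
    (1 - q1*B1)ᴴ * (1 - q1*B1) + (1 - q2*B2)ᴴ * (1 - q2*B2)
      = (4:ℂ) • (1 : Matrix (Fin D) (Fin D) ℂ)
        - (q1*B1 + q2*B2 + (q1*B1)ᴴ + (q2*B2)ᴴ) := by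
  have expand : ∀ (q B : Matrix (Fin D) (Fin D) ℂ), qᴴ*q = 1 →
      (1 - q*B)ᴴ*(1 - q*B) = 1 - (q*B)ᴴ - q*B + Bᴴ*B := by
    intro q B hq
    have e1 : (q*B)ᴴ*(q*B) = Bᴴ*B := by
      rw [conjTranspose_mul, mul_assoc, ← mul_assoc qᴴ, hq, one_mul]
    simp only [conjTranspose_sub, conjTranspose_one, sub_mul, mul_sub, one_mul, mul_one, e1]
    abel
  rw [expand _ _ hq1, expand _ _ hq2]
  have h4 : (4:ℂ) • (1 : Matrix (Fin D) (Fin D) ℂ) = 1 + 1 + (2:ℂ) • 1 := by module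
  rw [h4, ← hkey]
  abel

private lemma tsos_pow (D d : ℕ) (A : Matrix (Fin D) (Fin D) ℂ)
    (hA : A ∈ Matrix.unitaryGroup (Fin D) ℂ)
    (hAd : A ^ d = 1) (k : ℕ) (hk : k ≤ d) :
    (A ^ k)ᴴ = A ^ (d - k) ∧ (A ^ k)ᴴ * A ^ k = 1 := by
  have h1 : (A ^ k)ᴴ * A ^ k = 1 := by
    have := (Unitary.mem_iff.mp (pow_mem hA k)).1
    rwa [star_eq_conjTranspose] at this
  refine ⟨?_, h1⟩
  have h2 : A ^ k * A ^ (d - k) = 1 := by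
    rw [← pow_add, Nat.add_sub_cancel' hk, hAd]
  calc (A ^ k)ᴴ = (A ^ k)ᴴ * (A ^ k * A ^ (d - k)) := by rw [h2, mul_one]
    _ = A ^ (d - k) := by rw [← mul_assoc, h1, one_mul]

/-- Sum-of-squares decomposition:
`Σ_{k=1}^{d−1} Σ_{x=1}^{2} (𝟙 − Aₓᵏ·Bₓᵏ)†·(𝟙 − Aₓᵏ·Bₓᵏ) = 4(d−1)·𝟙 − β̂`. -/
theorem temporal_sum_of_squares_decomposition
    (d D : ℕ) (hd : 2 ≤ d) (hD : 1 ≤ D)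
    (ω : ℂ) (hω : ω = Complex.exp (2 * Real.pi * Complex.I / d))
    (a : ℕ → ℂ)
    (ha : ∀ k, a k = ((1 - Complex.I) / 2) * Complex.exp (Real.pi * Complex.I * k / (2 * d)))
    (A₁ A₂ A₃ A₄ : Matrix (Fin D) (Fin D) ℂ)
    (hA₁ : A₁ ∈ Matrix.unitaryGroup (Fin D) ℂ)
    (hA₂ : A₂ ∈ Matrix.unitaryGroup (Fin D) ℂ)
    (hA₃ : A₃ ∈ Matrix.unitaryGroup (Fin D) ℂ)
    (hA₄ : A₄ ∈ Matrix.unitaryGroup (Fin D) ℂ)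
    (hA₁d : A₁ ^ d = 1) (hA₂d : A₂ ^ d = 1) (hA₃d : A₃ ^ d = 1) (hA₄d : A₄ ^ d = 1)
    (B₁ B₂ : ℕ → Matrix (Fin D) (Fin D) ℂ)
    (hB₁ : ∀ k, B₁ k = a k • A₃ ^ (d - k) + (starRingEnd ℂ (a k) * ω ^ k) • A₄ ^ (d - k))
    (hB₂ : ∀ k, B₂ k = starRingEnd ℂ (a k) • A₃ ^ (d - k) + a k • A₄ ^ (d - k))
    (β : Matrix (Fin D) (Fin D) ℂ)
    (hβ : β = ∑ k ∈ Finset.Icc 1 (d - 1),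
      (a k • (A₁ ^ k * A₃ ^ (d - k))
        + (starRingEnd ℂ (a k) * ω ^ k) • (A₁ ^ k * A₄ ^ (d - k))
        + starRingEnd ℂ (a k) • (A₂ ^ k * A₃ ^ (d - k))
        + a k • (A₂ ^ k * A₄ ^ (d - k))
        + a k • (A₃ ^ (d - k) * A₁ ^ k)
        + (starRingEnd ℂ (a k) * ω ^ k) • (A₄ ^ (d - k) * A₁ ^ k)
        + starRingEnd ℂ (a k) • (A₃ ^ (d - k) * A₂ ^ k)
        + a k • (A₄ ^ (d - k) * A₂ ^ k))) :
    ∑ k ∈ Finset.Icc 1 (d - 1),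
        ((1 - A₁ ^ k * B₁ k)ᴴ * (1 - A₁ ^ k * B₁ k)
          + (1 - A₂ ^ k * B₂ k)ᴴ * (1 - A₂ ^ k * B₂ k))
      = ((4 * (d - 1) : ℕ) : ℂ) • (1 : Matrix (Fin D) (Fin D) ℂ) - β := by
  have hd0 : (d:ℂ) ≠ 0 := Nat.cast_ne_zero.mpr (by omega)
  -- basic conjugation facts
  have h1 : ∀ k : ℕ, (starRingEnd ℂ) ((Real.pi : ℂ) * Complex.I * k / (2 * d))
      = -((Real.pi : ℂ) * Complex.I * k / (2 * d)) := by
    intro k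
    simp only [map_div₀, _root_.map_mul, Complex.conj_ofReal, Complex.conj_I, _root_.map_natCast, _root_.map_ofNat]
    ring
  have h2 : (starRingEnd ℂ) ((1 - Complex.I)/2) = (1 + Complex.I)/2 := by
    simp only [map_div₀, _root_.map_sub, _root_.map_one, Complex.conj_I, _root_.map_ofNat, sub_neg_eq_add]
  -- |a k|² = 1/2
  have hc : ∀ k : ℕ, starRingEnd ℂ (a k) * a k = 1/2 := by
    intro k
    rw [ha, _root_.map_mul, ← Complex.exp_conj, h1, h2]
    rw [mul_mul_mul_comm, ← Complex.exp_add, neg_add_cancel, Complex.exp_zero, mul_one]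
    linear_combination (-1/4 : ℂ) * Complex.I_sq
  -- cross-term cancellation
  have hx1 : ∀ k : ℕ, (starRingEnd ℂ (a k))^2 * ω^k + (a k)^2 = 0 := by
    intro k
    rw [ha, hω, _root_.map_mul, ← Complex.exp_conj, h1, h2, mul_pow, mul_pow]
    have e1 : Complex.exp (-((Real.pi : ℂ) * Complex.I * k / (2 * d)))^2
          * Complex.exp (2 * Real.pi * Complex.I / d)^k
        = Complex.exp ((Real.pi : ℂ) * Complex.I * k / (2 * d))^2 := by
      rw [← Complex.exp_nat_mul, ← Complex.exp_nat_mul, ← Complex.exp_nat_mul,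
        ← Complex.exp_add]
      congr 1
      field_simp
      ring
    rw [mul_assoc, e1, ← add_mul]
    have h3 : ((1+Complex.I)/2)^2 + ((1-Complex.I)/2)^2 = 0 := by
      linear_combination (1/2 : ℂ) * Complex.I_sq
    rw [h3, zero_mul]
  -- ω facts
  have hωconj : starRingEnd ℂ ω * ω = 1 := by
    rw [hω, ← Complex.exp_conj, ← Complex.exp_add]
    have : (starRingEnd ℂ) ((2 * Real.pi * Complex.I : ℂ) / d)
        + (2 * Real.pi * Complex.I : ℂ)/d = 0 := by
      simp only [map_div₀, _root_.map_mul, Complex.conj_ofReal, Complex.conj_I, _root_.map_natCast, _root_.map_ofNat]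
      ring
    rw [this, Complex.exp_zero]
  have hω0 : ω ≠ 0 := by rw [hω]; exact Complex.exp_ne_zero _
  have hωd : ω ^ d = 1 := by
    rw [hω, ← Complex.exp_nat_mul]
    have : (d:ℂ) * (2 * Real.pi * Complex.I / d) = 2 * Real.pi * Complex.I := by field_simp
    rw [this, Complex.exp_two_pi_mul_I]
  have hωflip : ∀ k : ℕ, k ≤ d → ω ^ (d - k) = (starRingEnd ℂ ω) ^ k := by
    intro k hk
    have hcan : ω ^ (d - k) * ω ^ k = (starRingEnd ℂ ω) ^ k * ω ^ k := by
      rw [← pow_add, Nat.sub_add_cancel hk, hωd, ← mul_pow, hωconj, one_pow]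
    exact mul_right_cancel₀ (pow_ne_zero k hω0) hcan
  -- a (d - k) = conj (a k)
  have haflip : ∀ k : ℕ, k ≤ d → a (d - k) = starRingEnd ℂ (a k) := by
    intro k hkd
    rw [ha, ha, _root_.map_mul, ← Complex.exp_conj, h1, h2]
    have hcast : ((d - k : ℕ) : ℂ) = (d : ℂ) - k := by push_cast [hkd]; ring
    rw [hcast]
    have hsplit : (Real.pi : ℂ) * Complex.I * ((d:ℂ) - k) / (2 * d)
        = (Real.pi/2 : ℝ) * Complex.I + -((Real.pi : ℂ) * Complex.I * k / (2 * d)) := by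
      push_cast
      field_simp
      ring
    rw [hsplit, Complex.exp_add]
    have hI : Complex.exp ((Real.pi/2 : ℝ) * Complex.I) = Complex.I := by
      rw [Complex.exp_mul_I]; simp
    rw [hI]
    linear_combination (-Complex.exp (-((Real.pi:ℂ) * Complex.I * k / (2 * d))) / 2)
      * Complex.I_sq
  -- per-k step
  have step : ∀ k ∈ Finset.Icc 1 (d-1),
      (1 - A₁ ^ k * B₁ k)ᴴ * (1 - A₁ ^ k * B₁ k)
          + (1 - A₂ ^ k * B₂ k)ᴴ * (1 - A₂ ^ k * B₂ k)
        = (4:ℂ) • (1 : Matrix (Fin D) (Fin D) ℂ)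
          - (A₁ ^ k * B₁ k + A₂ ^ k * B₂ k + (A₁ ^ k * B₁ k)ᴴ + (A₂ ^ k * B₂ k)ᴴ) := by
    intro k hk
    rw [Finset.mem_Icc] at hk
    have hkd : d - k ≤ d := Nat.sub_le d k
    have hw : starRingEnd ℂ (ω ^ k) * ω ^ k = 1 := by
      rw [_root_.map_pow, ← mul_pow, hωconj, one_pow]
    apply tsos_assemble
    · exact (tsos_pow D d A₁ hA₁ hA₁d k (by omega)).2
    · exact (tsos_pow D d A₂ hA₂ hA₂d k (by omega)).2
    · rw [hB₁ k, hB₂ k]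
      exact tsos_key D (A₃ ^ (d-k)) (A₄ ^ (d-k)) (a k) (ω ^ k)
        (tsos_pow D d A₃ hA₃ hA₃d (d-k) hkd).2
        (tsos_pow D d A₄ hA₄ hA₄d (d-k) hkd).2
        (hc k) hw (hx1 k)
  rw [Finset.sum_congr rfl step, Finset.sum_sub_distrib, Finset.sum_const,
    Nat.card_Icc]
  congr 1
  · rw [← Nat.cast_smul_eq_nsmul ℂ (d - 1 + 1 - 1), smul_smul]
    congr 1
    have : d - 1 + 1 - 1 = d - 1 := by omega
    rw [this]
    push_cast
    ring
  · rw [hβ]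
    -- split β into "first half" and "second half"
    have hsplitβ : ∀ k ∈ Finset.Icc 1 (d-1),
        (a k • (A₁ ^ k * A₃ ^ (d - k))
          + (starRingEnd ℂ (a k) * ω ^ k) • (A₁ ^ k * A₄ ^ (d - k))
          + starRingEnd ℂ (a k) • (A₂ ^ k * A₃ ^ (d - k))
          + a k • (A₂ ^ k * A₄ ^ (d - k))
          + a k • (A₃ ^ (d - k) * A₁ ^ k)
          + (starRingEnd ℂ (a k) * ω ^ k) • (A₄ ^ (d - k) * A₁ ^ k)
          + starRingEnd ℂ (a k) • (A₃ ^ (d - k) * A₂ ^ k)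
          + a k • (A₄ ^ (d - k) * A₂ ^ k))
        = (A₁ ^ k * B₁ k + A₂ ^ k * B₂ k)
          + (a k • (A₃ ^ (d - k) * A₁ ^ k)
            + (starRingEnd ℂ (a k) * ω ^ k) • (A₄ ^ (d - k) * A₁ ^ k)
            + starRingEnd ℂ (a k) • (A₃ ^ (d - k) * A₂ ^ k)
            + a k • (A₄ ^ (d - k) * A₂ ^ k)) := by
      intro k _
      rw [hB₁ k, hB₂ k]
      simp only [mul_add, mul_smul_comm]
      abel
    rw [Finset.sum_congr rfl hsplitβ]
    have hG : ∑ k ∈ Finset.Icc 1 (d-1),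
        (a k • (A₃ ^ (d - k) * A₁ ^ k)
          + (starRingEnd ℂ (a k) * ω ^ k) • (A₄ ^ (d - k) * A₁ ^ k)
          + starRingEnd ℂ (a k) • (A₃ ^ (d - k) * A₂ ^ k)
          + a k • (A₄ ^ (d - k) * A₂ ^ k))
        = ∑ k ∈ Finset.Icc 1 (d-1), ((A₁ ^ k * B₁ k)ᴴ + (A₂ ^ k * B₂ k)ᴴ) := by
      refine Finset.sum_bij' (fun k _ => d - k) (fun k _ => d - k) ?_ ?_ ?_ ?_ ?_
      · intro k hk
        rw [Finset.mem_Icc] at hk ⊢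
        omega
      · intro k hk
        rw [Finset.mem_Icc] at hk ⊢
        omega
      · intro k hk
        rw [Finset.mem_Icc] at hk
        omega
      · intro k hk
        rw [Finset.mem_Icc] at hk
        omega
      · intro k hk
        rw [Finset.mem_Icc] at hk
        have hk1 : k ≤ d := by omega
        have hdk : d - k ≤ d := Nat.sub_le d k
        have hdd : d - (d - k) = k := by omega
        -- compute the conjugate transposes
        rw [hB₁ (d-k), hB₂ (d-k), hdd]
        rw [conjTranspose_mul, conjTranspose_mul,
          conjTranspose_add, conjTranspose_add, conjTranspose_smul, conjTranspose_smul,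
          conjTranspose_smul, conjTranspose_smul,
          (tsos_pow D d A₁ hA₁ hA₁d (d-k) hdk).1,
          (tsos_pow D d A₂ hA₂ hA₂d (d-k) hdk).1,
          (tsos_pow D d A₃ hA₃ hA₃d k hk1).1,
          (tsos_pow D d A₄ hA₄ hA₄d k hk1).1, hdd]
        rw [haflip k hk1, hωflip k hk1]
        simp only [add_mul, smul_mul_assoc, ← starRingEnd_apply, _root_.map_mul,
          _root_.map_pow, Complex.conj_conj]
        abel
    calc ∑ k ∈ Finset.Icc 1 (d-1),
          (A₁ ^ k * B₁ k + A₂ ^ k * B₂ k + (A₁ ^ k * B₁ k)ᴴ + (A₂ ^ k * B₂ k)ᴴ)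
        = ∑ k ∈ Finset.Icc 1 (d-1), (A₁ ^ k * B₁ k + A₂ ^ k * B₂ k)
            + ∑ k ∈ Finset.Icc 1 (d-1), ((A₁ ^ k * B₁ k)ᴴ + (A₂ ^ k * B₂ k)ᴴ) := by
          rw [← Finset.sum_add_distrib]
          exact Finset.sum_congr rfl fun k _ => by abel
      _ = ∑ k ∈ Finset.Icc 1 (d-1), (A₁ ^ k * B₁ k + A₂ ^ k * B₂ k)
            + ∑ k ∈ Finset.Icc 1 (d-1),
              (a k • (A₃ ^ (d - k) * A₁ ^ k)
                + (starRingEnd ℂ (a k) * ω ^ k) • (A₄ ^ (d - k) * A₁ ^ k)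
                + starRingEnd ℂ (a k) • (A₃ ^ (d - k) * A₂ ^ k)
                + a k • (A₄ ^ (d - k) * A₂ ^ k)) := by rw [hG]
      _ = _ := (Finset.sum_add_distrib).symm
end
end

section
/- The matrix 4(d−1)·1 − β̂ is positive semidefinite (in particular β̂ is Hermitian). Consequently, for every density matrix ρ (a D×D positive semidefinite matrix with trace 1), Tr[ρ·β̂] is real and Tr[ρ·β̂] ≤ 4(d−1). -/
open Matrix Finset
open scoped ComplexOrder

noncomputable section

/-- Sum-of-squares building block: for unitaries `U V C W` and scalars `p q r s`
satisfying suitable normalization/orthogonality relations, an explicit SOS identity. -/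
lemma temporal_sos_key {n : Type*} [Fintype n] [DecidableEq n]
    (U V C W : Matrix n n ℂ)
    (hU : U * Uᴴ = 1) (hU' : Uᴴ * U = 1) (hV : V * Vᴴ = 1) (hV' : Vᴴ * V = 1)
    (hC : C * Cᴴ = 1) (hC' : Cᴴ * C = 1) (hW : W * Wᴴ = 1) (hW' : Wᴴ * W = 1)
    (p q r s : ℂ)
    (h1 : star p * p + star r * r = 1) (h2 : star q * q + star s * s = 1)
    (h3 : star p * q + star r * s = 0) (h4 : p * star q + r * star s = 0) :
    ((Uᴴ - (p•C + q•W))ᴴ * (Uᴴ - (p•C + q•W)) + (Uᴴ - (p•C+q•W)) * (Uᴴ - (p•C+q•W))ᴴ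
     + (Vᴴ - (r•C + s•W))ᴴ * (Vᴴ - (r•C + s•W)) + (Vᴴ - (r•C+s•W)) * (Vᴴ - (r•C+s•W))ᴴ)
    = (8:ℂ) • 1 - (U*(p•C+q•W) + V*(r•C+s•W) + (p•C+q•W)*U + (r•C+s•W)*V)
        - (U*(p•C+q•W) + V*(r•C+s•W) + (p•C+q•W)*U + (r•C+s•W)*V)ᴴ := by
  simp only [conjTranspose_sub, conjTranspose_add, conjTranspose_smul, conjTranspose_mul,
    conjTranspose_conjTranspose, sub_mul, mul_sub, add_mul, mul_add, smul_mul_assoc,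
    mul_smul_comm, smul_smul, hU, hU', hV, hV', hC, hC', hW, hW']
  match_scalars <;>
    first
      | ring1
      | linear_combination 2*h1 + 2*h2
      | linear_combination h3
      | linear_combination h4

/-- A positive semidefinite matrix has nonnegative trace. -/
lemma temporal_trace_nonneg {n : Type*} [Fintype n] [DecidableEq n]
    {M : Matrix n n ℂ} (h : M.PosSemidef) : 0 ≤ M.trace := by
  rw [Matrix.trace]
  apply Finset.sum_nonneg
  intro i _
  have h2 := h.dotProduct_mulVec_nonneg (Pi.single i 1)
  simpa [Matrix.mulVec, dotProduct, Pi.single_apply] using h2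

/-- Half of a positive semidefinite matrix is positive semidefinite. -/
lemma temporal_half_psd {n : Type*} [Fintype n] [DecidableEq n]
    {M : Matrix n n ℂ} (h : M.PosSemidef) : ((1/2 : ℂ) • M).PosSemidef := by
  rw [posSemidef_iff_dotProduct_mulVec]
  constructor
  · show ((1/2 : ℂ) • M)ᴴ = _
    rw [conjTranspose_smul, h.1.eq]
    congr 1
    simp [Complex.ext_iff]
  · intro x
    rw [Matrix.smul_mulVec, dotProduct_smul]
    refine mul_nonneg ?_ (h.dotProduct_mulVec_nonneg x)
    rw [Complex.le_def]
    norm_num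

set_option maxHeartbeats 2000000 in
/-- `4(d−1)·𝟙 − β̂` is positive semidefinite (in particular `β̂` is Hermitian);
hence for every density matrix `ρ`, `Tr[ρ·β̂]` is real and `Tr[ρ·β̂] ≤ 4(d−1)`. -/
theorem temporal_operator_quantum_bound
    (d D : ℕ) (hd : 2 ≤ d) (hD : 1 ≤ D)
    (ω : ℂ) (hω : ω = Complex.exp (2 * Real.pi * Complex.I / d))
    (a : ℕ → ℂ)
    (ha : ∀ k, a k = ((1 - Complex.I) / 2) * Complex.exp (Real.pi * Complex.I * k / (2 * d)))
    (A₁ A₂ A₃ A₄ : Matrix (Fin D) (Fin D) ℂ)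
    (hA₁ : A₁ ∈ Matrix.unitaryGroup (Fin D) ℂ)
    (hA₂ : A₂ ∈ Matrix.unitaryGroup (Fin D) ℂ)
    (hA₃ : A₃ ∈ Matrix.unitaryGroup (Fin D) ℂ)
    (hA₄ : A₄ ∈ Matrix.unitaryGroup (Fin D) ℂ)
    (hA₁d : A₁ ^ d = 1) (hA₂d : A₂ ^ d = 1) (hA₃d : A₃ ^ d = 1) (hA₄d : A₄ ^ d = 1)
    (β : Matrix (Fin D) (Fin D) ℂ)
    (hβ : β = ∑ k ∈ Finset.Icc 1 (d - 1),
      (a k • (A₁ ^ k * A₃ ^ (d - k))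
        + (starRingEnd ℂ (a k) * ω ^ k) • (A₁ ^ k * A₄ ^ (d - k))
        + starRingEnd ℂ (a k) • (A₂ ^ k * A₃ ^ (d - k))
        + a k • (A₂ ^ k * A₄ ^ (d - k))
        + a k • (A₃ ^ (d - k) * A₁ ^ k)
        + (starRingEnd ℂ (a k) * ω ^ k) • (A₄ ^ (d - k) * A₁ ^ k)
        + starRingEnd ℂ (a k) • (A₃ ^ (d - k) * A₂ ^ k)
        + a k • (A₄ ^ (d - k) * A₂ ^ k))) :
    β.IsHermitian ∧
    (((4 * (d - 1) : ℕ) : ℂ) • (1 : Matrix (Fin D) (Fin D) ℂ) - β).PosSemidef ∧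
    ∀ ρ : Matrix (Fin D) (Fin D) ℂ, ρ.PosSemidef → ρ.trace = 1 →
      ((ρ * β).trace.im = 0 ∧ (ρ * β).trace.re ≤ 4 * ((d : ℝ) - 1)) := by
  have hd0 : (d:ℂ) ≠ 0 := Nat.cast_ne_zero.mpr (by omega)
  -- scalar facts
  have hωd : ω ^ d = 1 := by
    rw [hω, ← Complex.exp_nat_mul]
    rw [show (d:ℂ) * (2 * Real.pi * Complex.I / d) = 2 * Real.pi * Complex.I by field_simp]
    exact Complex.exp_two_pi_mul_I
  have ct : ∀ k : ℕ, (starRingEnd ℂ) ((Real.pi : ℂ) * Complex.I * k / (2*d))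
      = -((Real.pi : ℂ) * Complex.I * k / (2*d)) := by
    intro k
    simp [map_div₀, Complex.conj_I, Complex.conj_ofReal, map_ofNat]
    ring
  have hsa : ∀ k : ℕ, (starRingEnd ℂ) (a k)
      = ((1 + Complex.I)/2) * Complex.exp (-((Real.pi:ℂ)*Complex.I*k/(2*d))) := by
    intro k
    rw [ha, _root_.map_mul, ← Complex.exp_conj, ct]
    congr 1
    norm_num [map_div₀, Complex.conj_I, map_ofNat]
  have hmain : ∀ k : ℕ, ((starRingEnd ℂ) (a k))^2 * ω^k + (a k)^2 = 0 := by
    intro k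
    rw [hsa, ha, hω]
    rw [mul_pow, mul_pow, ← Complex.exp_nat_mul, ← Complex.exp_nat_mul, ← Complex.exp_nat_mul,
      mul_assoc, ← Complex.exp_add]
    rw [show (2:ℕ) * -((Real.pi:ℂ)*Complex.I*k/(2*d)) + (k:ℂ) * (2 * Real.pi * Complex.I / d)
        = (2:ℕ) * ((Real.pi:ℂ)*Complex.I*k/(2*d)) from by push_cast; field_simp; ring]
    linear_combination (Complex.exp ((2:ℕ) * ((Real.pi:ℂ)*Complex.I*k/(2*d))) / 2) * Complex.I_sq
  have hadk : ∀ k : ℕ, k ≤ d → a (d - k) = (starRingEnd ℂ) (a k) := by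
    intro k hk
    rw [ha, hsa]
    rw [show ((d - k : ℕ) : ℂ) = (d : ℂ) - k from by push_cast [hk]; ring]
    rw [show (Real.pi:ℂ) * Complex.I * ((d:ℂ) - k) / (2*d)
        = (Real.pi / 2 : ℝ) * Complex.I + -((Real.pi:ℂ)*Complex.I*k/(2*d)) from by
          push_cast; field_simp; ring]
    rw [Complex.exp_add, Complex.exp_mul_I]
    rw [← Complex.ofReal_cos, ← Complex.ofReal_sin, Real.cos_pi_div_two, Real.sin_pi_div_two]
    push_cast
    linear_combination (-(Complex.exp (-((Real.pi:ℂ)*Complex.I*k/(2*d))))/2) * Complex.I_sq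
  have hων : ∀ k : ℕ, (starRingEnd ℂ) (ω ^ k) * ω ^ k = 1 := by
    intro k
    rw [hω, ← Complex.exp_nat_mul, ← Complex.exp_conj, ← Complex.exp_add]
    rw [show (starRingEnd ℂ) ((k:ℂ) * (2 * Real.pi * Complex.I / d))
        + (k:ℂ) * (2 * Real.pi * Complex.I / d) = 0 from by
      simp [map_div₀, Complex.conj_I, Complex.conj_ofReal, map_ofNat]; ring]
    exact Complex.exp_zero
  have hωk : ∀ k : ℕ, k ≤ d → (starRingEnd ℂ) (ω ^ k) = ω ^ (d - k) := by
    intro k hk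
    have h1 : ω ^ (d - k) * ω ^ k = 1 := by
      rw [← pow_add, Nat.sub_add_cancel hk, hωd]
    have hne : ω ^ k ≠ 0 := by
      rw [hω, ← Complex.exp_nat_mul]; exact Complex.exp_ne_zero _
    exact mul_right_cancel₀ hne ((hων k).trans h1.symm)
  have haa : ∀ k : ℕ, (starRingEnd ℂ) (a k) * a k = 1/2 := by
    intro k
    rw [hsa, ha]
    have he : Complex.exp (-((Real.pi:ℂ)*Complex.I*k/(2*d)))
        * Complex.exp ((Real.pi:ℂ)*Complex.I*k/(2*d)) = 1 := by
      rw [← Complex.exp_add]; simp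
    linear_combination ((1 + Complex.I)*(1 - Complex.I)/4) * he - (1/4) * Complex.I_sq
  -- unitarity of powers
  have hu : ∀ (A : Matrix (Fin D) (Fin D) ℂ), A ∈ Matrix.unitaryGroup (Fin D) ℂ →
      ∀ k : ℕ, A^k * (A^k)ᴴ = 1 ∧ (A^k)ᴴ * A^k = 1 := by
    intro A hA k
    have h := pow_mem hA k
    constructor
    · simpa [Matrix.star_eq_conjTranspose] using Matrix.mem_unitaryGroup_iff.mp h
    · simpa [Matrix.star_eq_conjTranspose] using Matrix.mem_unitaryGroup_iff'.mp h
  have hpH : ∀ (A : Matrix (Fin D) (Fin D) ℂ), A ∈ Matrix.unitaryGroup (Fin D) ℂ →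
      A ^ d = 1 → ∀ k : ℕ, k ≤ d → (A^k)ᴴ = A^(d-k) := by
    intro A hA hAd k hk
    calc (A^k)ᴴ = (A^k)ᴴ * (A^k * A^(d-k)) := by
          rw [← pow_add, Nat.add_sub_cancel' hk, hAd, mul_one]
      _ = ((A^k)ᴴ * A^k) * A^(d-k) := by rw [mul_assoc]
      _ = A^(d-k) := by rw [(hu A hA k).2, one_mul]
  -- β is Hermitian
  have hherm : βᴴ = β := by
    rw [hβ, Matrix.conjTranspose_sum]
    refine Finset.sum_nbij' (fun k => d - k) (fun k => d - k) ?_ ?_ ?_ ?_ ?_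
    · intro k hk; simp only [Finset.mem_Icc] at *; omega
    · intro k hk; simp only [Finset.mem_Icc] at *; omega
    · intro k hk; simp only [Finset.mem_Icc] at hk; show d - (d - k) = k; omega
    · intro k hk; simp only [Finset.mem_Icc] at hk; show d - (d - k) = k; omega
    · intro k hk
      simp only [Finset.mem_Icc] at hk
      have hkd : k ≤ d := by omega
      have hdkd : d - k ≤ d := by omega
      have hss : d - (d - k) = k := by omega
      rw [hss, hadk k hkd, ← hωk k hkd]
      simp only [Complex.conj_conj]
      simp only [conjTranspose_add, conjTranspose_smul, conjTranspose_mul,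
        hpH A₁ hA₁ hA₁d k hkd, hpH A₂ hA₂ hA₂d k hkd, hpH A₃ hA₃ hA₃d (d-k) hdkd,
        hpH A₄ hA₄ hA₄d (d-k) hdkd, hss, RCLike.star_def, _root_.map_mul, Complex.conj_conj]
      match_scalars <;> ring1
  -- sum of squares
  set M : ℕ → Matrix (Fin D) (Fin D) ℂ :=
    fun k => a k • A₃^(d-k) + ((starRingEnd ℂ) (a k) * ω^k) • A₄^(d-k) with hM
  set N : ℕ → Matrix (Fin D) (Fin D) ℂ :=
    fun k => (starRingEnd ℂ) (a k) • A₃^(d-k) + a k • A₄^(d-k) with hN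
  have hβ' : β = ∑ k ∈ Finset.Icc 1 (d-1),
      (A₁^k * M k + A₂^k * N k + M k * A₁^k + N k * A₂^k) := by
    rw [hβ]
    refine Finset.sum_congr rfl fun k _ => ?_
    simp only [hM, hN, mul_add, add_mul, mul_smul_comm, smul_mul_assoc]
    abel
  have hkey : ∀ k ∈ Finset.Icc 1 (d-1),
      (((A₁^k)ᴴ - M k)ᴴ * ((A₁^k)ᴴ - M k) + ((A₁^k)ᴴ - M k) * ((A₁^k)ᴴ - M k)ᴴ
        + ((A₂^k)ᴴ - N k)ᴴ * ((A₂^k)ᴴ - N k) + ((A₂^k)ᴴ - N k) * ((A₂^k)ᴴ - N k)ᴴ)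
      = (8:ℂ) • 1 - (A₁^k * M k + A₂^k * N k + M k * A₁^k + N k * A₂^k)
          - (A₁^k * M k + A₂^k * N k + M k * A₁^k + N k * A₂^k)ᴴ := by
    intro k _
    simp only [hM, hN]
    refine temporal_sos_key (A₁^k) (A₂^k) (A₃^(d-k)) (A₄^(d-k))
      (hu A₁ hA₁ k).1 (hu A₁ hA₁ k).2 (hu A₂ hA₂ k).1 (hu A₂ hA₂ k).2
      (hu A₃ hA₃ (d-k)).1 (hu A₃ hA₃ (d-k)).2 (hu A₄ hA₄ (d-k)).1 (hu A₄ hA₄ (d-k)).2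
      _ _ _ _ ?_ ?_ ?_ ?_
    · simp only [RCLike.star_def, Complex.conj_conj]
      linear_combination 2 * haa k
    · simp only [RCLike.star_def, _root_.map_mul, Complex.conj_conj]
      linear_combination (a k * (starRingEnd ℂ) (a k)) * hων k + 2 * haa k
    · simp only [RCLike.star_def, _root_.map_mul, Complex.conj_conj]
      linear_combination hmain k
    · simp only [RCLike.star_def, _root_.map_mul, Complex.conj_conj]
      linear_combination ((starRingEnd ℂ) (ω^k)) * hmain k - ((starRingEnd ℂ) (a k))^2 * hων k
  -- the total SOS matrix
  set T : Matrix (Fin D) (Fin D) ℂ := ∑ k ∈ Finset.Icc 1 (d-1),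
      (((A₁^k)ᴴ - M k)ᴴ * ((A₁^k)ᴴ - M k) + ((A₁^k)ᴴ - M k) * ((A₁^k)ᴴ - M k)ᴴ
        + ((A₂^k)ᴴ - N k)ᴴ * ((A₂^k)ᴴ - N k) + ((A₂^k)ᴴ - N k) * ((A₂^k)ᴴ - N k)ᴴ) with hT
  have hTpsd : T.PosSemidef := by
    rw [hT]
    apply Finset.sum_induction _ Matrix.PosSemidef (fun A B hA hB => hA.add hB)
      Matrix.PosSemidef.zero
    intro k _
    exact (((Matrix.posSemidef_conjTranspose_mul_self _).add
      (Matrix.posSemidef_self_mul_conjTranspose _)).add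
      (Matrix.posSemidef_conjTranspose_mul_self _)).add
      (Matrix.posSemidef_self_mul_conjTranspose _)
  have hcard : (Finset.Icc 1 (d-1)).card = d - 1 := by
    rw [Nat.card_Icc]; omega
  have hTeq : T = ((8*(d-1):ℕ):ℂ) • (1 : Matrix (Fin D) (Fin D) ℂ) - β - βᴴ := by
    rw [hT, Finset.sum_congr rfl hkey]
    rw [Finset.sum_sub_distrib, Finset.sum_sub_distrib, Finset.sum_const, hcard,
      ← hβ', ← Matrix.conjTranspose_sum, ← hβ']
    congr 1
    congr 1
    rw [← Nat.cast_smul_eq_nsmul ℂ, smul_smul]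
    congr 1
    push_cast
    ring
  have hhalf : (((4 * (d - 1) : ℕ) : ℂ) • (1 : Matrix (Fin D) (Fin D) ℂ) - β)
      = (1/2 : ℂ) • T := by
    rw [hTeq, hherm]
    rw [smul_sub, smul_sub, smul_smul]
    rw [show (1/2 : ℂ) * ((8*(d-1):ℕ):ℂ) = ((4*(d-1):ℕ):ℂ) from by push_cast; ring]
    match_scalars <;> ring1
  have hpsd : (((4 * (d - 1) : ℕ) : ℂ) • (1 : Matrix (Fin D) (Fin D) ℂ) - β).PosSemidef := by
    rw [hhalf]
    exact temporal_half_psd hTpsd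
  refine ⟨hherm, hpsd, ?_⟩
  intro ρ hρ hρtr
  have hBtr : 0 ≤ (ρ * (((4 * (d - 1) : ℕ) : ℂ) • (1 : Matrix (Fin D) (Fin D) ℂ) - β)).trace := by
    obtain ⟨B, hB⟩ : ∃ B : Matrix (Fin D) (Fin D) ℂ, ρ = Bᴴ * B := by
      open scoped MatrixOrder in exact CStarAlgebra.nonneg_iff_eq_star_mul_self.mp hρ.nonneg
    rw [hB, Matrix.mul_assoc, Matrix.trace_mul_comm]
    exact temporal_trace_nonneg (hpsd.mul_mul_conjTranspose_same B)
  have htr : (ρ * (((4 * (d - 1) : ℕ) : ℂ) • (1 : Matrix (Fin D) (Fin D) ℂ) - β)).trace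
      = ((4 * (d - 1) : ℕ) : ℂ) - (ρ * β).trace := by
    rw [Matrix.mul_sub, Matrix.trace_sub, Matrix.mul_smul, Matrix.mul_one, Matrix.trace_smul,
      hρtr, smul_eq_mul, mul_one]
  rw [htr] at hBtr
  rw [Complex.le_def] at hBtr
  obtain ⟨hre, him⟩ := hBtr
  simp only [Complex.sub_re, Complex.sub_im, Complex.zero_re, Complex.zero_im,
    Complex.natCast_re, Complex.natCast_im] at hre him
  have hcst : ((4 * (d-1) : ℕ) : ℝ) = 4 * ((d:ℝ) - 1) := by
    have h1d : 1 ≤ d := by omega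
    push_cast [h1d]
    ring
  constructor
  · linarith [him]
  · linarith [hre, hcst]
end
end

section
/- For every integer d ≥ 2, the maximal quantum value of the temporal expression strictly exceeds its classical bound: 4(d−1) > 3·cot(π/(4d)) − cot(3π/(4d)) − 4, where cot x = cos x / sin x. -/
open Real

noncomputable section

/-- For every `d ≥ 2`, the maximal quantum value `4(d−1)` strictly exceeds the
classical bound `3·cot(π/(4d)) − cot(3π/(4d)) − 4`. -/
theorem quantum_exceeds_classical_bound (d : ℕ) (hd : 2 ≤ d) :
    3 * (Real.cos (Real.pi / (4 * d)) / Real.sin (Real.pi / (4 * d)))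
      - Real.cos (3 * Real.pi / (4 * d)) / Real.sin (3 * Real.pi / (4 * d)) - 4
      < 4 * ((d : ℝ) - 1) := by
  have hd' : (2:ℝ) ≤ d := by exact_mod_cast hd
  have hpi := Real.pi_gt_three
  set x := Real.pi / (4 * (d:ℝ)) with hx
  have hxpos : 0 < x := by
    apply div_pos Real.pi_pos; linarith
  have hxlt : x < Real.pi / 2 := by
    rw [hx, div_lt_div_iff₀ (by linarith) (by norm_num)]
    nlinarith [Real.pi_pos]
  have h3x : 3 * Real.pi / (4 * (d:ℝ)) = 3 * x := by
    rw [hx]; ring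
  have h3xpos : 0 < 3 * x := by linarith
  have h3xlt : 3 * x < Real.pi / 2 := by
    have : 3 * x = 3 * Real.pi / (4 * (d:ℝ)) := by rw [hx]; ring
    rw [this, div_lt_div_iff₀ (by linarith) (by norm_num)]
    nlinarith [Real.pi_pos]
  have hsin : 0 < Real.sin x :=
    Real.sin_pos_of_pos_of_lt_pi hxpos (by linarith)
  have hcos : 0 < Real.cos x :=
    Real.cos_pos_of_mem_Ioo ⟨by linarith, hxlt⟩
  have hsin3 : 0 < Real.sin (3 * x) :=
    Real.sin_pos_of_pos_of_lt_pi h3xpos (by linarith)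
  have hcos3 : 0 < Real.cos (3 * x) :=
    Real.cos_pos_of_mem_Ioo ⟨by linarith, h3xlt⟩
  have htan := Real.lt_tan hxpos hxlt
  rw [Real.tan_eq_sin_div_cos, lt_div_iff₀ hcos] at htan
  -- cot x < 1/x
  have hcot : Real.cos x / Real.sin x < 1 / x := by
    rw [div_lt_div_iff₀ hsin hxpos]
    nlinarith
  have hinv : 1 / x = 4 * (d:ℝ) / Real.pi := by
    rw [hx, one_div_div]
  have hterm3 : 0 < Real.cos (3 * Real.pi / (4 * (d:ℝ))) / Real.sin (3 * Real.pi / (4 * (d:ℝ))) := by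
    rw [h3x]; exact div_pos hcos3 hsin3
  have hkey : 3 * (Real.cos x / Real.sin x) < 4 * (d:ℝ) := by
    have h1 : 3 * (Real.cos x / Real.sin x) < 3 * (4 * (d:ℝ) / Real.pi) := by
      rw [← hinv]; linarith
    have h2 : 3 * (4 * (d:ℝ) / Real.pi) ≤ 4 * (d:ℝ) := by
      rw [mul_div_assoc', div_le_iff₀ Real.pi_pos]
      nlinarith
    linarith
  linarith
end
end

section
/- Fix an integer d ≥ 2, let ω = exp(2πi/d) and a_k = ((1−i)/2)·exp(πik/(2d)) for k = 1, …, d−1. Then for all integers v_1, v_2, v_3, v_4, the deterministic value of the temporal expression satisfies Re( 2·Σ_{k=1}^{d−1} [ a_k·ω^{k(v_1−v_3)} + a_k*·ω^{k(v_1−v_4+1)} + a_k*·ω^{k(v_2−v_3)} + a_k·ω^{k(v_2−v_4)} ] ) ≤ 3·cot(π/(4d)) − cot(3π/(4d)) − 4, where a_k* denotes the complex conjugate of a_k and cot x = cos x / sin x. (This is the classical bound C_d of the temporal inequality τ_d ≤ C_d: a macrorealist model assigns fixed outcome values v_i ∈ ℤ to the observables A_i, unchanged by preceding measurements, and every classical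 strategy is a convex mixture of such deterministic assignments.) -/
open Matrix Finset

noncomputable section

namespace TemporalAux

open Real

/-- angle `n·π/(4d)` -/
def ang (d : ℕ) (n : ℤ) : ℝ := n * Real.pi / (4 * d)

/-- cotangent at angle `n·π/(4d)` -/
def ct (d : ℕ) (n : ℤ) : ℝ := Real.cos (ang d n) / Real.sin (ang d n)

variable {d : ℕ} (hd : 2 ≤ d)

lemma dR_pos (hd : 2 ≤ d) : (0:ℝ) < (d:ℝ) := by positivity

lemma ang_add (hd : 2 ≤ d) (a b : ℤ) : ang d (a + b) = ang d a + ang d b := by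
  have : (d:ℝ) ≠ 0 := ne_of_gt (dR_pos hd)
  unfold ang; push_cast; field_simp

lemma ang_pos (hd : 2 ≤ d) {n : ℤ} (hn : 1 ≤ n) : 0 < ang d n := by
  have hdp := dR_pos hd
  have hn' : (0:ℝ) < (n:ℝ) := by exact_mod_cast hn
  unfold ang; positivity

lemma ang_nonneg (hd : 2 ≤ d) {n : ℤ} (hn : 0 ≤ n) : 0 ≤ ang d n := by
  have hdp := dR_pos hd
  have hn' : (0:ℝ) ≤ (n:ℝ) := by exact_mod_cast hn
  unfold ang; positivity

lemma ang_le_pi (hd : 2 ≤ d) {n : ℤ} (hn : n ≤ 4 * d) : ang d n ≤ Real.pi := by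
  have hdp := dR_pos hd
  have hn' : (n:ℝ) ≤ 4 * d := by exact_mod_cast hn
  unfold ang
  rw [div_le_iff₀ (by positivity)]
  nlinarith [Real.pi_pos]

lemma ang_lt_pi (hd : 2 ≤ d) {n : ℤ} (hn : n ≤ 4 * d - 1) : ang d n < Real.pi := by
  have hdp := dR_pos hd
  have hn' : (n:ℝ) < 4 * d := by
    have : (n:ℝ) ≤ 4 * d - 1 := by exact_mod_cast hn
    linarith
  unfold ang
  rw [div_lt_iff₀ (by positivity)]
  nlinarith [Real.pi_pos]

lemma ang_mono (hd : 2 ≤ d) {a b : ℤ} (h : a ≤ b) : ang d a ≤ ang d b := by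
  have hdp := dR_pos hd
  have h' : (a:ℝ) ≤ b := by exact_mod_cast h
  unfold ang
  have := Real.pi_pos
  gcongr

lemma sin_ang_pos (hd : 2 ≤ d) {n : ℤ} (h1 : 1 ≤ n) (h2 : n ≤ 4 * d - 1) :
    0 < Real.sin (ang d n) :=
  Real.sin_pos_of_pos_of_lt_pi (ang_pos hd h1) (ang_lt_pi hd h2)

lemma ct_add_ct (hd : 2 ≤ d) {a b : ℤ} (ha1 : 1 ≤ a) (ha2 : a ≤ 4 * d - 1)
    (hb1 : 1 ≤ b) (hb2 : b ≤ 4 * d - 1) :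
    ct d a + ct d b = Real.sin (ang d (a + b)) / (Real.sin (ang d a) * Real.sin (ang d b)) := by
  have hsa := sin_ang_pos hd ha1 ha2
  have hsb := sin_ang_pos hd hb1 hb2
  rw [ct, ct, ang_add hd, Real.sin_add]
  field_simp
  ring

lemma ct_sub_ct (hd : 2 ≤ d) {a b : ℤ} (ha1 : 1 ≤ a) (ha2 : a ≤ 4 * d - 1)
    (hb1 : 1 ≤ b) (hb2 : b ≤ 4 * d - 1) :
    ct d a - ct d b = Real.sin (ang d (b - a)) / (Real.sin (ang d a) * Real.sin (ang d b)) := by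
  have hsa := sin_ang_pos hd ha1 ha2
  have hsb := sin_ang_pos hd hb1 hb2
  have : ang d (b - a) = ang d b - ang d a := by
    have h := ang_add hd (b - a) a
    simp only [sub_add_cancel] at h
    linarith
  rw [ct, ct, this, Real.sin_sub]
  field_simp

/-- monotonicity -/
lemma L3 (hd : 2 ≤ d) {a b : ℤ} (ha1 : 1 ≤ a) (hab : a ≤ b) (hb2 : b ≤ 4 * d - 1) :
    ct d b ≤ ct d a := by
  have ha2 : a ≤ 4 * d - 1 := le_trans hab hb2
  have hb1 : 1 ≤ b := le_trans ha1 hab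
  have h := ct_sub_ct hd ha1 ha2 hb1 hb2
  have hnum : 0 ≤ Real.sin (ang d (b - a)) := by
    apply Real.sin_nonneg_of_nonneg_of_le_pi (ang_nonneg hd (by omega))
    exact le_of_lt (ang_lt_pi hd (by omega))
  have hden : 0 < Real.sin (ang d a) * Real.sin (ang d b) :=
    mul_pos (sin_ang_pos hd ha1 ha2) (sin_ang_pos hd hb1 hb2)
  nlinarith [div_nonneg hnum (le_of_lt hden)]

/-- push apart -/
lemma L1 (hd : 2 ≤ d) {a b : ℤ} (ha : 1 ≤ a) (hb : 1 ≤ b) (hab : a + b ≤ 4 * d) :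
    ct d a + ct d b ≤ ct d 1 + ct d (a + b - 1) := by
  have ha2 : a ≤ 4 * d - 1 := by omega
  have hb2 : b ≤ 4 * d - 1 := by omega
  have h1 : (1:ℤ) ≤ 4 * d - 1 := by omega
  have hab1 : (1:ℤ) ≤ a + b - 1 := by omega
  have hab2 : a + b - 1 ≤ 4 * d - 1 := by omega
  rw [ct_add_ct hd ha ha2 hb hb2, ct_add_ct hd le_rfl h1 hab1 hab2]
  have he : 1 + (a + b - 1) = a + b := by ring
  rw [he]
  have hsT : 0 ≤ Real.sin (ang d (a + b)) := by
    apply Real.sin_nonneg_of_nonneg_of_le_pi (ang_nonneg hd (by omega))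
    exact ang_le_pi hd hab
  have hden2 : 0 < Real.sin (ang d 1) * Real.sin (ang d (a + b - 1)) :=
    mul_pos (sin_ang_pos hd le_rfl h1) (sin_ang_pos hd hab1 hab2)
  apply div_le_div_of_nonneg_left hsT hden2
  -- need sin(ang 1) * sin(ang (a+b−1)) ≤ sin(ang a) * sin(ang b)
  -- use product-to-sum
  have key : ∀ u v : ℝ, 2 * (Real.sin u * Real.sin v) = Real.cos (u - v) - Real.cos (u + v) := by
    intro u v
    rw [Real.cos_sub, Real.cos_add]; ring
  have e1 := key (ang d a) (ang d b)
  have e2 := key (ang d 1) (ang d (a + b - 1))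
  have hang : ang d 1 + ang d (a + b - 1) = ang d a + ang d b := by
    rw [← ang_add hd, ← ang_add hd, he]
  -- cos (ang 1 − ang (a+b−1)) ≤ cos (ang a − ang b)
  have hcos : Real.cos (ang d 1 - ang d (a + b - 1)) ≤ Real.cos (ang d a - ang d b) := by
    have habs : ang d 1 - ang d (a + b - 1) = - ang d (a + b - 2) := by
      have := ang_add hd (a + b - 2) 1
      have h2 := ang_add hd (a + b - 2) 1
      have e3 : a + b - 2 + 1 = a + b - 1 := by ring
      rw [e3] at h2
      linarith
    rw [habs, Real.cos_neg]
    rcases le_total a b with hab' | hab'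
    · have : ang d a - ang d b = - ang d (b - a) := by
        have h2 := ang_add hd (b - a) a
        have e3 : b - a + a = b := by ring
        rw [e3] at h2; linarith
      rw [this, Real.cos_neg]
      apply Real.cos_le_cos_of_nonneg_of_le_pi (ang_nonneg hd (by omega))
      · exact le_of_lt (ang_lt_pi hd (by omega))
      · exact ang_mono hd (by omega)
    · have : ang d a - ang d b = ang d (a - b) := by
        have h2 := ang_add hd (a - b) b
        have e3 : a - b + b = a := by ring
        rw [e3] at h2; linarith
      rw [this]
      apply Real.cos_le_cos_of_nonneg_of_le_pi (ang_nonneg hd (by omega))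
      · exact le_of_lt (ang_lt_pi hd (by omega))
      · exact ang_mono hd (by omega)
  rw [hang] at e2
  linarith

/-- opposite pair kills -/
lemma L2 (hd : 2 ≤ d) {a b : ℤ} (ha1 : 1 ≤ a) (ha2 : a ≤ 4 * d - 1)
    (hb1 : 1 ≤ b) (hb2 : b ≤ 4 * d - 1) (hab : 4 * d ≤ a + b) :
    ct d a + ct d b ≤ 0 := by
  rw [ct_add_ct hd ha1 ha2 hb1 hb2]
  have hsT : Real.sin (ang d (a + b)) ≤ 0 := by
    have h1 : Real.sin (ang d (a + b)) = - Real.sin (ang d (a + b) - Real.pi) := by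
      rw [Real.sin_sub_pi]; ring
    rw [h1, neg_nonpos]
    apply Real.sin_nonneg_of_nonneg_of_le_pi
    · have := ang_le_pi (n := 4 * d) hd le_rfl
      have h2 : ang d (4 * d) ≤ ang d (a + b) := ang_mono hd hab
      have h3 : ang d (4 * d) = Real.pi := by
        have hdp := dR_pos hd
        unfold ang
        push_cast
        field_simp
      linarith
    · have h2 : ang d (a + b) ≤ ang d (8 * d) := ang_mono hd (by omega)
      have h3 : ang d (8 * d) = 2 * Real.pi := by
        have hdp := dR_pos hd
        have : (d:ℝ) ≠ 0 := ne_of_gt hdp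
        unfold ang
        push_cast
        field_simp
        ring
      linarith
  have hden : 0 < Real.sin (ang d a) * Real.sin (ang d b) :=
    mul_pos (sin_ang_pos hd ha1 ha2) (sin_ang_pos hd hb1 hb2)
  exact div_nonpos_of_nonpos_of_nonneg hsT (le_of_lt hden)

lemma ct_one_nonneg (hd : 2 ≤ d) : 0 ≤ ct d 1 := by
  apply div_nonneg _ (le_of_lt (sin_ang_pos hd le_rfl (by omega)))
  apply Real.cos_nonneg_of_mem_Icc
  constructor
  · have := Real.pi_pos
    linarith [ang_pos (n := 1) hd le_rfl]
  · have h2 : ang d 1 ≤ ang d d := ang_mono hd (by omega)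
    have h3 : ang d d = Real.pi / 4 := by
      have : (d:ℝ) ≠ 0 := ne_of_gt (dR_pos hd)
      unfold ang; rw [div_eq_iff (mul_ne_zero four_ne_zero this)]; push_cast; ring
    linarith [Real.pi_pos]

lemma ct_period (hd : 2 ≤ d) (n k : ℤ) : ct d (n + 4 * d * k) = ct d n := by
  have hdne : (d:ℝ) ≠ 0 := ne_of_gt (dR_pos hd)
  have hang : ang d (n + 4 * d * k) = ang d n + k * Real.pi := by
    unfold ang; push_cast; field_simp
  have hne : ((-1 : ℝ)) ^ k ≠ 0 := by
    apply zpow_ne_zero; norm_num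
  rw [ct, ct, hang, Real.cos_add_int_mul_pi, Real.sin_add_int_mul_pi,
    mul_div_mul_left _ _ hne]

lemma ct_neg (hd : 2 ≤ d) (n : ℤ) : ct d (-n) = - ct d n := by
  have : ang d (-n) = - ang d n := by unfold ang; push_cast; ring
  rw [ct, ct, this, Real.cos_neg, Real.sin_neg, div_neg]

lemma ct_reflect (hd : 2 ≤ d) (n : ℤ) : ct d (4 * d - n) = - ct d n := by
  have h : (4 * (d:ℤ) - n) = -n + 4 * d * 1 := by ring
  rw [h, ct_period hd, ct_neg hd]

lemma ct_three (hd : 2 ≤ d) : ct d 3 = - ct d (4 * d - 3) := by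
  rw [ct_reflect hd 3, neg_neg]

/-- core optimization -/
lemma core (hd : 2 ≤ d) {m1 m2 m3 m4 : ℤ}
    (h11 : 1 ≤ m1) (h12 : m1 ≤ 4 * d - 1) (h21 : 1 ≤ m2) (h22 : m2 ≤ 4 * d - 1)
    (h31 : 1 ≤ m3) (h32 : m3 ≤ 4 * d - 1) (h41 : 1 ≤ m4) (h42 : m4 ≤ 4 * d - 1)
    (hsum : m1 + m2 + m3 + m4 = 4 * d ∨ m1 + m2 + m3 + m4 = 8 * d ∨
      m1 + m2 + m3 + m4 = 12 * d) :
    ct d m1 + ct d m2 + ct d m3 + ct d m4 ≤ 3 * ct d 1 + ct d (4 * d - 3) := by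
  have hct3 : ct d 3 ≤ ct d 1 := L3 hd le_rfl (by omega) (by omega)
  have hct1 := ct_one_nonneg hd
  -- note ct (4d−3) relation proved elsewhere; here prove directly w.r.t. goal
  rcases hsum with h | h | h
  · -- sum = 4d : chain of push-aparts
    have s1 : ct d m1 + ct d m2 ≤ ct d 1 + ct d (m1 + m2 - 1) :=
      L1 hd h11 h21 (by omega)
    have s2 : ct d (m1 + m2 - 1) + ct d m3 ≤ ct d 1 + ct d (m1 + m2 - 1 + m3 - 1) :=
      L1 hd (by omega) h31 (by omega)
    have s3 : ct d (m1 + m2 - 1 + m3 - 1) + ct d m4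
        ≤ ct d 1 + ct d (m1 + m2 - 1 + m3 - 1 + m4 - 1) :=
      L1 hd (by omega) h41 (by omega)
    have e : m1 + m2 - 1 + m3 - 1 + m4 - 1 = 4 * d - 3 := by omega
    rw [e] at s3
    linarith
  · -- sum = 8d
    rcases le_or_gt ((4 * d : ℤ)) (m1 + m2) with hge | hlt
    · have s1 : ct d m1 + ct d m2 ≤ 0 := L2 hd h11 h12 h21 h22 hge
      have s2 : ct d m3 ≤ ct d 1 := L3 hd le_rfl h31 h32
      have s3 : ct d m4 ≤ ct d 1 := L3 hd le_rfl h41 h42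
      have s4 : ct d 3 = - ct d (4 * d - 3) := ct_three hd
      linarith
    · have hge' : 4 * d ≤ m3 + m4 := by omega
      have s1 : ct d m3 + ct d m4 ≤ 0 := L2 hd h31 h32 h41 h42 hge'
      have s2 : ct d m1 ≤ ct d 1 := L3 hd le_rfl h11 h12
      have s3 : ct d m2 ≤ ct d 1 := L3 hd le_rfl h21 h22
      have s4 : ct d 3 = - ct d (4 * d - 3) := ct_three hd
      linarith
  · -- sum = 12d : both pairs kill
    have hge1 : 4 * d ≤ m1 + m2 := by omega
    have hge2 : 4 * d ≤ m3 + m4 := by omega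
    have s1 : ct d m1 + ct d m2 ≤ 0 := L2 hd h11 h12 h21 h22 hge1
    have s2 : ct d m3 + ct d m4 ≤ 0 := L2 hd h31 h32 h41 h42 hge2
    have s4 : ct d 3 = - ct d (4 * d - 3) := ct_three hd
    linarith

lemma ct_emod (hd : 2 ≤ d) (p : ℤ) : ct d p = ct d (p % (4 * d)) := by
  conv_lhs => rw [← Int.emod_add_mul_ediv p (4 * d)]
  rw [ct_period hd]

lemma emod_bounds (hd : 2 ≤ d) {p : ℤ} (hp : p % 2 = 1) :
    1 ≤ p % (4 * d) ∧ p % (4 * d) ≤ 4 * d - 1 := by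
  have hne : (4 * (d:ℤ)) ≠ 0 := by positivity
  have h0 : 0 ≤ p % (4 * d) := Int.emod_nonneg p hne
  have h1 : p % (4 * (d:ℤ)) < 4 * d := Int.emod_lt_of_pos p (by positivity)
  have hne0 : p % (4 * (d:ℤ)) ≠ 0 := by
    intro h
    have hdvd : (4 * (d:ℤ)) ∣ p := Int.dvd_of_emod_eq_zero h
    have h2 : (2:ℤ) ∣ p := dvd_trans ⟨2 * d, by ring⟩ hdvd
    omega
  omega

lemma opt (hd : 2 ≤ d) (x w y z : ℤ) (h : x + w + 1 = y + z) :
    ct d (4*x+1) + ct d (4*w+1) - ct d (4*y-1) - ct d (4*z-1)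
      ≤ 3 * ct d 1 - ct d 3 := by
  have hp := emod_bounds hd (p := 4*x+1) (by omega)
  have hq := emod_bounds hd (p := 4*w+1) (by omega)
  have hr := emod_bounds hd (p := 4*y-1) (by omega)
  have hs := emod_bounds hd (p := 4*z-1) (by omega)
  set p := (4*x+1) % (4*(d:ℤ)) with hpdef
  set q := (4*w+1) % (4*(d:ℤ)) with hqdef
  set r := (4*y-1) % (4*(d:ℤ)) with hrdef
  set s := (4*z-1) % (4*(d:ℤ)) with hsdef
  have ep : ct d (4*x+1) = ct d p := ct_emod hd _
  have eq' : ct d (4*w+1) = ct d q := ct_emod hd _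
  have er : ct d (4*y-1) = - ct d (4*d - r) := by
    rw [ct_emod hd (4*y-1), ← hrdef, ct_reflect hd r, neg_neg]
  have es : ct d (4*z-1) = - ct d (4*d - s) := by
    rw [ct_emod hd (4*z-1), ← hsdef, ct_reflect hd s, neg_neg]
  obtain ⟨k, hk⟩ : ∃ k : ℤ, p + q + (4*d - r) + (4*d - s) = 4*d*k := by
    refine ⟨2 - (4*x+1)/(4*(d:ℤ)) - (4*w+1)/(4*(d:ℤ)) + (4*y-1)/(4*(d:ℤ)) + (4*z-1)/(4*(d:ℤ)), ?_⟩
    have e1 : p = 4*x+1 - 4*(d:ℤ)*((4*x+1)/(4*(d:ℤ))) := by rw [hpdef, Int.emod_def]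
    have e2 : q = 4*w+1 - 4*(d:ℤ)*((4*w+1)/(4*(d:ℤ))) := by rw [hqdef, Int.emod_def]
    have e3 : r = 4*y-1 - 4*(d:ℤ)*((4*y-1)/(4*(d:ℤ))) := by rw [hrdef, Int.emod_def]
    have e4 : s = 4*z-1 - 4*(d:ℤ)*((4*z-1)/(4*(d:ℤ))) := by rw [hsdef, Int.emod_def]
    linear_combination (4:ℤ) * h + e1 + e2 - e3 - e4
  have hd2 : (2:ℤ) ≤ (d:ℤ) := by exact_mod_cast hd
  have hk13 : k = 1 ∨ k = 2 ∨ k = 3 := by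
    have hT4 : 4 ≤ p + q + (4*(d:ℤ) - r) + (4*(d:ℤ) - s) := by omega
    have hT16 : p + q + (4*(d:ℤ) - r) + (4*(d:ℤ) - s) ≤ 16*(d:ℤ) - 4 := by omega
    have hk1 : 1 ≤ k := by nlinarith
    have hk3 : k ≤ 3 := by nlinarith
    omega
  have hsum : p + q + (4*(d:ℤ) - r) + (4*(d:ℤ) - s) = 4*(d:ℤ) ∨
      p + q + (4*(d:ℤ) - r) + (4*(d:ℤ) - s) = 8*(d:ℤ) ∨
      p + q + (4*(d:ℤ) - r) + (4*(d:ℤ) - s) = 12*(d:ℤ) := by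
    rcases hk13 with h' | h' | h' <;> subst h' <;> omega
  have hcore := core hd hp.1 hp.2 hq.1 hq.2
    (show (1:ℤ) ≤ 4*(d:ℤ) - r by omega) (show 4*(d:ℤ) - r ≤ 4*(d:ℤ) - 1 by omega)
    (show (1:ℤ) ≤ 4*(d:ℤ) - s by omega) (show 4*(d:ℤ) - s ≤ 4*(d:ℤ) - 1 by omega)
    hsum
  rw [ep, eq', er, es, ct_three hd]
  linarith

open Complex in
/-- the basic oscillating term -/
def zz (d : ℕ) (n : ℤ) : ℂ := Complex.exp (Real.pi * Complex.I * n / (2 * d))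

lemma sin_ang_ne (hd : 2 ≤ d) {n : ℤ} (hn : n % 2 = 1) : Real.sin (ang d n) ≠ 0 := by
  intro h
  rw [Real.sin_eq_zero_iff] at h
  obtain ⟨k, hk⟩ := h
  have hdne : (d:ℝ) ≠ 0 := ne_of_gt (dR_pos hd)
  rw [ang] at hk
  have h2 : (k:ℝ) * (4*(d:ℝ)) * Real.pi = (n:ℝ) * Real.pi := by
    field_simp at hk
    rw [← hk]; ring
  have h3 : (k:ℝ) * (4*(d:ℝ)) = (n:ℝ) := mul_right_cancel₀ Real.pi_ne_zero h2
  have h4 : k * (4*(d:ℤ)) = n := by exact_mod_cast h3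
  have h5 : (2:ℤ) ∣ n := ⟨k * (2*d), by rw [← h4]; ring⟩
  omega

lemma zz_ne_one (hd : 2 ≤ d) {n : ℤ} (hn : n % 2 = 1) : zz d n ≠ 1 := by
  intro h
  rw [zz, Complex.exp_eq_one_iff] at h
  obtain ⟨k, hk⟩ := h
  have hdne : ((d:ℂ)) ≠ 0 := by
    simp only [ne_eq, Nat.cast_eq_zero]
    omega
  have hπ : ((Real.pi:ℂ)) ≠ 0 := by exact_mod_cast Real.pi_ne_zero
  have h2 : (n:ℂ) = (k:ℂ) * (4*(d:ℂ)) := by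
    field_simp [hπ, Complex.I_ne_zero] at hk
    have hk' : (Real.pi:ℂ) * Complex.I * (n:ℂ) = (Real.pi:ℂ) * Complex.I * ((k:ℂ)*(4*(d:ℂ))) := by
      linear_combination ((Real.pi:ℂ) * Complex.I) * hk
    exact mul_left_cancel₀ (mul_ne_zero hπ Complex.I_ne_zero) hk'
  have h4 : n = k * (4*(d:ℤ)) := by exact_mod_cast h2
  have h5 : (2:ℤ) ∣ n := ⟨k * (2*d), by rw [h4]; ring⟩
  omega

lemma sum_zz (hd : 2 ≤ d) (n : ℤ) (hn : n % 2 = 1) :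
    ∑ k ∈ Finset.Icc 1 (d-1), (zz d n)^k = ((zz d n)^d - zz d n)/(zz d n - 1) := by
  have h1 : Finset.Icc 1 (d-1) = Finset.Ico 1 d := by
    have : d - 1 + 1 = d := by omega
    rw [← this]
    rfl
  rw [h1, geom_sum_Ico (zz_ne_one hd hn) (by omega), pow_one]

lemma zz_pow_d (hd : 2 ≤ d) (n : ℤ) :
    (zz d n)^d = Complex.exp (Real.pi * Complex.I * n / 2) := by
  have hdne : ((d:ℂ)) ≠ 0 := by
    simp only [ne_eq, Nat.cast_eq_zero]; omega
  rw [zz, ← Complex.exp_nat_mul]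
  congr 1
  field_simp

lemma exp_A (hd : 2 ≤ d) (m : ℤ) :
    Complex.exp (Real.pi * Complex.I * ((4*m+1 : ℤ) : ℂ) / 2) = Complex.I := by
  have h : (Real.pi : ℂ) * Complex.I * ((4*m+1 : ℤ) : ℂ) / 2
      = (m:ℂ) * (2 * Real.pi * Complex.I) + ((Real.pi/2 : ℝ) : ℂ) * Complex.I := by
    push_cast; ring
  rw [h, Complex.exp_add, Complex.exp_int_mul_two_pi_mul_I, one_mul, Complex.exp_mul_I,
    ← Complex.ofReal_cos, ← Complex.ofReal_sin, Real.cos_pi_div_two, Real.sin_pi_div_two]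
  norm_num

lemma exp_B (hd : 2 ≤ d) (m : ℤ) :
    Complex.exp (Real.pi * Complex.I * ((4*m-1 : ℤ) : ℂ) / 2) = -Complex.I := by
  have h : (Real.pi : ℂ) * Complex.I * ((4*m-1 : ℤ) : ℂ) / 2
      = (m:ℂ) * (2 * Real.pi * Complex.I) + ((-(Real.pi/2) : ℝ) : ℂ) * Complex.I := by
    push_cast; ring
  rw [h, Complex.exp_add, Complex.exp_int_mul_two_pi_mul_I, one_mul, Complex.exp_mul_I,
    ← Complex.ofReal_cos, ← Complex.ofReal_sin]
  simp [Real.cos_pi_div_two, Real.sin_pi_div_two]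

lemma zz_eq_CS (hd : 2 ≤ d) (n : ℤ) :
    zz d n = ((Real.cos (ang d n)^2 - Real.sin (ang d n)^2 : ℝ) : ℂ)
      + ((2 * Real.cos (ang d n) * Real.sin (ang d n) : ℝ) : ℂ) * Complex.I := by
  have hdne : ((d:ℂ)) ≠ 0 := by
    simp only [ne_eq, Nat.cast_eq_zero]; omega
  have h : (Real.pi : ℂ) * Complex.I * (n:ℂ) / (2*(d:ℂ)) = ((2 * ang d n : ℝ) : ℂ) * Complex.I := by
    rw [ang]; push_cast; field_simp; ring
  rw [zz, h, Complex.exp_mul_I, ← Complex.ofReal_cos, ← Complex.ofReal_sin]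
  have hc : Real.cos (2 * ang d n) = Real.cos (ang d n)^2 - Real.sin (ang d n)^2 := by
    rw [Real.cos_two_mul]
    have := Real.sin_sq_add_cos_sq (ang d n)
    linarith
  have hs : Real.sin (2 * ang d n) = 2 * Real.cos (ang d n) * Real.sin (ang d n) := by
    rw [Real.sin_two_mul]; ring
  rw [hc, hs]

lemma lemA (hd : 2 ≤ d) (m : ℤ) :
    ((1 - Complex.I) * ∑ k ∈ Finset.Icc 1 (d-1), (zz d (4*m+1))^k).re
      = ct d (4*m+1) - 1 := by
  set n : ℤ := 4*m+1 with hn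
  set C := Real.cos (ang d n) with hC
  set S := Real.sin (ang d n) with hS
  have hSne : S ≠ 0 := sin_ang_ne hd (by omega)
  have h1 : S^2 + C^2 = 1 := Real.sin_sq_add_cos_sq _
  have hz1 : zz d n - 1 ≠ 0 := sub_ne_zero.mpr (zz_ne_one hd (by omega))
  have hzd : (zz d n)^d = Complex.I := by
    rw [zz_pow_d hd n, hn]; exact exp_A hd m
  have hzCS := zz_eq_CS hd n
  rw [← hC, ← hS] at hzCS
  have hScC : ((S:ℝ):ℂ) ≠ 0 := by exact_mod_cast hSne
  have h1C : ((S:ℝ):ℂ)^2 + ((C:ℝ):ℂ)^2 = 1 := by exact_mod_cast h1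
  have main : (1 - Complex.I) * (Complex.I - zz d n) * ((S:ℝ):ℂ)
      = (((C:ℝ):ℂ) - ((S:ℝ):ℂ)) * (zz d n - 1) := by
    rw [hzCS]
    push_cast
    linear_combination (-((C:ℝ):ℂ) - ((S:ℝ):ℂ) * Complex.I) * h1C
      + (-((S:ℝ):ℂ) + 2*((C:ℝ):ℂ)*((S:ℝ):ℂ)^2) * Complex.I_sq
  have key : (1 - Complex.I) * (((zz d n)^d - zz d n)/(zz d n - 1)) = (((C/S - 1 : ℝ)) : ℂ) := by
    rw [hzd, mul_div_assoc', div_eq_iff hz1]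
    push_cast
    field_simp
    linear_combination main
  rw [sum_zz hd n (by omega), key, Complex.ofReal_re]
  rfl

lemma lemB (hd : 2 ≤ d) (m : ℤ) :
    ((1 + Complex.I) * ∑ k ∈ Finset.Icc 1 (d-1), (zz d (4*m-1))^k).re
      = - ct d (4*m-1) - 1 := by
  set n : ℤ := 4*m-1 with hn
  set C := Real.cos (ang d n) with hC
  set S := Real.sin (ang d n) with hS
  have hSne : S ≠ 0 := sin_ang_ne hd (by omega)
  have h1 : S^2 + C^2 = 1 := Real.sin_sq_add_cos_sq _
  have hz1 : zz d n - 1 ≠ 0 := sub_ne_zero.mpr (zz_ne_one hd (by omega))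
  have hzd : (zz d n)^d = -Complex.I := by
    rw [zz_pow_d hd n, hn]; exact exp_B hd m
  have hzCS := zz_eq_CS hd n
  rw [← hC, ← hS] at hzCS
  have hScC : ((S:ℝ):ℂ) ≠ 0 := by exact_mod_cast hSne
  have h1C : ((S:ℝ):ℂ)^2 + ((C:ℝ):ℂ)^2 = 1 := by exact_mod_cast h1
  have main : (1 + Complex.I) * (-Complex.I - zz d n) * ((S:ℝ):ℂ)
      = ((-(C:ℝ):ℂ) - ((S:ℝ):ℂ)) * (zz d n - 1) := by
    rw [hzCS]
    push_cast
    linear_combination (((C:ℝ):ℂ) + ((S:ℝ):ℂ) * Complex.I) * h1C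
      + (-((S:ℝ):ℂ) - 2*((C:ℝ):ℂ)*((S:ℝ):ℂ)^2) * Complex.I_sq
  have key : (1 + Complex.I) * (((zz d n)^d - zz d n)/(zz d n - 1)) = (((-(C/S) - 1 : ℝ)) : ℂ) := by
    rw [hzd, mul_div_assoc', div_eq_iff hz1]
    push_cast
    field_simp
    linear_combination main
  rw [sum_zz hd n (by omega), key, Complex.ofReal_re]
  rfl

lemma termA (hd : 2 ≤ d) (k : ℕ) (m : ℤ) :
    Complex.exp (Real.pi * Complex.I * k / (2*d))
        * Complex.exp (2*Real.pi*Complex.I/d) ^ ((k:ℤ)*m)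
      = (zz d (4*m+1))^k := by
  have hdne : ((d:ℂ)) ≠ 0 := by
    simp only [ne_eq, Nat.cast_eq_zero]; omega
  rw [← Complex.exp_int_mul, zz, ← Complex.exp_nat_mul, ← Complex.exp_add]
  congr 1
  push_cast
  field_simp
  ring

lemma termB (hd : 2 ≤ d) (k : ℕ) (m : ℤ) :
    Complex.exp (-(Real.pi * Complex.I * k) / (2*d))
        * Complex.exp (2*Real.pi*Complex.I/d) ^ ((k:ℤ)*m)
      = (zz d (4*m-1))^k := by
  have hdne : ((d:ℂ)) ≠ 0 := by
    simp only [ne_eq, Nat.cast_eq_zero]; omega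
  rw [← Complex.exp_int_mul, zz, ← Complex.exp_nat_mul, ← Complex.exp_add]
  congr 1
  push_cast
  field_simp
  ring

lemma conj_ak (d : ℕ) (k : ℕ) :
    (starRingEnd ℂ) (((1 - Complex.I)/2) * Complex.exp (Real.pi * Complex.I * k / (2*d)))
      = ((1+Complex.I)/2) * Complex.exp (-(Real.pi * Complex.I * k) / (2*d)) := by
  rw [_root_.map_mul, ← Complex.exp_conj]
  congr 1
  · rw [map_div₀, map_sub, _root_.map_one, Complex.conj_I, map_ofNat]
    ring
  · congr 1
    rw [map_div₀, _root_.map_mul, _root_.map_mul, Complex.conj_I, _root_.map_mul,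
      Complex.conj_ofReal, Complex.conj_natCast, map_ofNat, Complex.conj_natCast]
    ring

end TemporalAux

open TemporalAux in
/-- Classical (macrorealist) bound: every deterministic assignment
`A_i ↦ v_i ∈ ℤ` gives a value of the temporal expression at most
`C_d = 3·cot(π/(4d)) − cot(3π/(4d)) − 4`. -/
theorem deterministic_value_le_classical_bound
    (d : ℕ) (hd : 2 ≤ d)
    (ω : ℂ) (hω : ω = Complex.exp (2 * Real.pi * Complex.I / d))
    (a : ℕ → ℂ)
    (ha : ∀ k, a k = ((1 - Complex.I) / 2) * Complex.exp (Real.pi * Complex.I * k / (2 * d)))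
    (v₁ v₂ v₃ v₄ : ℤ) :
    (2 * ∑ k ∈ Finset.Icc 1 (d - 1),
        (a k * ω ^ ((k : ℤ) * (v₁ - v₃))
          + starRingEnd ℂ (a k) * ω ^ ((k : ℤ) * (v₁ - v₄ + 1))
          + starRingEnd ℂ (a k) * ω ^ ((k : ℤ) * (v₂ - v₃))
          + a k * ω ^ ((k : ℤ) * (v₂ - v₄)))).re
      ≤ 3 * (Real.cos (Real.pi / (4 * d)) / Real.sin (Real.pi / (4 * d)))
          - Real.cos (3 * Real.pi / (4 * d)) / Real.sin (3 * Real.pi / (4 * d)) - 4 := by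
  have key : (2 : ℂ) * ∑ k ∈ Finset.Icc 1 (d - 1),
        (a k * ω ^ ((k : ℤ) * (v₁ - v₃))
          + starRingEnd ℂ (a k) * ω ^ ((k : ℤ) * (v₁ - v₄ + 1))
          + starRingEnd ℂ (a k) * ω ^ ((k : ℤ) * (v₂ - v₃))
          + a k * ω ^ ((k : ℤ) * (v₂ - v₄)))
      = (1 - Complex.I) * ∑ k ∈ Finset.Icc 1 (d-1), (zz d (4*(v₁-v₃)+1))^k
        + (1 + Complex.I) * ∑ k ∈ Finset.Icc 1 (d-1), (zz d (4*(v₁-v₄+1)-1))^k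
        + (1 + Complex.I) * ∑ k ∈ Finset.Icc 1 (d-1), (zz d (4*(v₂-v₃)-1))^k
        + (1 - Complex.I) * ∑ k ∈ Finset.Icc 1 (d-1), (zz d (4*(v₂-v₄)+1))^k := by
    rw [Finset.mul_sum, Finset.mul_sum, Finset.mul_sum, Finset.mul_sum, Finset.mul_sum,
      ← Finset.sum_add_distrib, ← Finset.sum_add_distrib, ← Finset.sum_add_distrib]
    apply Finset.sum_congr rfl
    intro k _
    have t1 := termA hd k (v₁-v₃)
    have t2 := termB hd k (v₁-v₄+1)
    have t3 := termB hd k (v₂-v₃)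
    have t4 := termA hd k (v₂-v₄)
    rw [ha k, hω, conj_ak d k, ← t1, ← t2, ← t3, ← t4]
    ring
  rw [key, Complex.add_re, Complex.add_re, Complex.add_re,
    lemA hd (v₁-v₃), lemB hd (v₁-v₄+1), lemB hd (v₂-v₃), lemA hd (v₂-v₄)]
  have hopt := opt hd (v₁-v₃) (v₂-v₄) (v₁-v₄+1) (v₂-v₃) (by ring)
  have e1 : ct d 1 = Real.cos (Real.pi/(4*(d:ℝ)))/Real.sin (Real.pi/(4*(d:ℝ))) := by
    have : ang d 1 = Real.pi/(4*(d:ℝ)) := by rw [ang]; push_cast; ring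
    rw [ct, this]
  have e3 : ct d 3 = Real.cos (3*Real.pi/(4*(d:ℝ)))/Real.sin (3*Real.pi/(4*(d:ℝ))) := by
    have : ang d 3 = 3*Real.pi/(4*(d:ℝ)) := by rw [ang]; push_cast; ring
    rw [ct, this]
  rw [e1, e3] at hopt
  linarith
end
end

section
/- Suppose in addition that Tr[β̂] = 4(d−1)·D (i.e., the temporal expression attains its maximal quantum value 4(d−1) on the maximally mixed state ρ = 1/D). Then A_x^k · B_x^{(k)} = 1 for all x ∈ {1,2} and all k ∈ {1, …, d−1}; in particular each B_x^{(k)} is unitary with B_x^{(k)} = (A_x^k)†. -/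
open Matrix Finset

noncomputable section

/-- Frobenius norm as trace. -/
private lemma frob_trace {D : ℕ} (M : Matrix (Fin D) (Fin D) ℂ) :
    (Mᴴ * M).trace = ((∑ i, ∑ j, Complex.normSq (M i j) : ℝ) : ℂ) := by
  simp [Matrix.trace, Matrix.mul_apply, Matrix.conjTranspose_apply, Matrix.diag]
  rw [Finset.sum_comm]
  congr 1; ext i; congr 1; ext j
  rw [Complex.normSq_eq_conj_mul_self]

private lemma key_trace_identity {D : ℕ} (U V P Q : Matrix (Fin D) (Fin D) ℂ) (c w : ℂ)
    (hUU : U * Uᴴ = 1) (hVV : V * Vᴴ = 1) (hPP : Pᴴ * P = 1) (hQQ : Qᴴ * Q = 1)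
    (hcc : starRingEnd ℂ c * c = 1/2) (hc2 : c^2 + (starRingEnd ℂ c)^2 * w = 0)
    (hw : starRingEnd ℂ w * w = 1) :
    ((Uᴴ - (c•P + (starRingEnd ℂ c * w)•Q))ᴴ * (Uᴴ - (c•P + (starRingEnd ℂ c * w)•Q))).trace
      + ((Vᴴ - ((starRingEnd ℂ c)•P + c•Q))ᴴ * (Vᴴ - ((starRingEnd ℂ c)•P + c•Q))).trace
    = 4*D - ((U*(c•P + (starRingEnd ℂ c * w)•Q)).trace + (V*((starRingEnd ℂ c)•P + c•Q)).trace)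
      - starRingEnd ℂ ((U*(c•P + (starRingEnd ℂ c * w)•Q)).trace
          + (V*((starRingEnd ℂ c)•P + c•Q)).trace) := by
  have h4 : c^2 * starRingEnd ℂ w + (starRingEnd ℂ c)^2 = 0 := by
    linear_combination (starRingEnd ℂ w) * hc2 - (starRingEnd ℂ c)^2 * hw
  have e1 : (Pᴴ * Uᴴ).trace = starRingEnd ℂ ((U * P).trace) := by
    rw [← Matrix.conjTranspose_mul, Matrix.trace_conjTranspose]; rfl
  have e2 : (Qᴴ * Uᴴ).trace = starRingEnd ℂ ((U * Q).trace) := by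
    rw [← Matrix.conjTranspose_mul, Matrix.trace_conjTranspose]; rfl
  have e3 : (Pᴴ * Vᴴ).trace = starRingEnd ℂ ((V * P).trace) := by
    rw [← Matrix.conjTranspose_mul, Matrix.trace_conjTranspose]; rfl
  have e4 : (Qᴴ * Vᴴ).trace = starRingEnd ℂ ((V * Q).trace) := by
    rw [← Matrix.conjTranspose_mul, Matrix.trace_conjTranspose]; rfl
  simp only [Matrix.conjTranspose_sub, Matrix.conjTranspose_add, Matrix.conjTranspose_smul,
    Matrix.conjTranspose_conjTranspose, Matrix.sub_mul, Matrix.mul_sub, Matrix.add_mul,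
    Matrix.mul_add, Matrix.smul_mul, Matrix.mul_smul, smul_smul,
    Matrix.trace_sub, Matrix.trace_add, Matrix.trace_smul, smul_eq_mul,
    hUU, hVV, hPP, hQQ, Matrix.trace_one, Fintype.card_fin,
    e1, e2, e3, e4, map_add, _root_.map_mul, Complex.conj_conj, Complex.star_def]
  ring_nf
  linear_combination (4*(D:ℂ)) * hcc + (D:ℂ)*c*(starRingEnd ℂ c) * hw
    + ((Pᴴ*Q).trace) * hc2 + ((Qᴴ*P).trace) * h4

/-- If the temporal expression attains its maximal quantum value `4(d−1)` on the
maximally mixed state (`Tr[β̂] = 4(d−1)·D`), then `Aₓᵏ·Bₓᵏ = 𝟙` for all `x ∈ {1,2}`,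
`k ∈ {1,…,d−1}`; in particular each `Bₓᵏ` is unitary and equals `(Aₓᵏ)†`. -/
theorem maximal_violation_forces_B_inverse
    (d D : ℕ) (hd : 2 ≤ d) (hD : 1 ≤ D)
    (ω : ℂ) (hω : ω = Complex.exp (2 * Real.pi * Complex.I / d))
    (a : ℕ → ℂ)
    (ha : ∀ k, a k = ((1 - Complex.I) / 2) * Complex.exp (Real.pi * Complex.I * k / (2 * d)))
    (A₁ A₂ A₃ A₄ : Matrix (Fin D) (Fin D) ℂ)
    (hA₁ : A₁ ∈ Matrix.unitaryGroup (Fin D) ℂ)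
    (hA₂ : A₂ ∈ Matrix.unitaryGroup (Fin D) ℂ)
    (hA₃ : A₃ ∈ Matrix.unitaryGroup (Fin D) ℂ)
    (hA₄ : A₄ ∈ Matrix.unitaryGroup (Fin D) ℂ)
    (hA₁d : A₁ ^ d = 1) (hA₂d : A₂ ^ d = 1) (hA₃d : A₃ ^ d = 1) (hA₄d : A₄ ^ d = 1)
    (B₁ B₂ : ℕ → Matrix (Fin D) (Fin D) ℂ)
    (hB₁ : ∀ k, B₁ k = a k • A₃ ^ (d - k) + (starRingEnd ℂ (a k) * ω ^ k) • A₄ ^ (d - k))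
    (hB₂ : ∀ k, B₂ k = starRingEnd ℂ (a k) • A₃ ^ (d - k) + a k • A₄ ^ (d - k))
    (β : Matrix (Fin D) (Fin D) ℂ)
    (hβ : β = ∑ k ∈ Finset.Icc 1 (d - 1),
      (a k • (A₁ ^ k * A₃ ^ (d - k))
        + (starRingEnd ℂ (a k) * ω ^ k) • (A₁ ^ k * A₄ ^ (d - k))
        + starRingEnd ℂ (a k) • (A₂ ^ k * A₃ ^ (d - k))
        + a k • (A₂ ^ k * A₄ ^ (d - k))
        + a k • (A₃ ^ (d - k) * A₁ ^ k)
        + (starRingEnd ℂ (a k) * ω ^ k) • (A₄ ^ (d - k) * A₁ ^ k)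
        + starRingEnd ℂ (a k) • (A₃ ^ (d - k) * A₂ ^ k)
        + a k • (A₄ ^ (d - k) * A₂ ^ k)))
    (htr : β.trace = ((4 * (d - 1) * D : ℕ) : ℂ)) :
    ∀ k, 1 ≤ k → k ≤ d - 1 →
      A₁ ^ k * B₁ k = 1 ∧ A₂ ^ k * B₂ k = 1 ∧
      B₁ k ∈ Matrix.unitaryGroup (Fin D) ℂ ∧ B₂ k ∈ Matrix.unitaryGroup (Fin D) ℂ ∧
      B₁ k = (A₁ ^ k)ᴴ ∧ B₂ k = (A₂ ^ k)ᴴ := by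
  have hd0 : (d:ℂ) ≠ 0 := Nat.cast_ne_zero.mpr (by omega)
  -- scalar facts
  set z : ℕ → ℂ := fun k => Real.pi * Complex.I * k / (2 * d) with hz
  have hstar : ∀ k, starRingEnd ℂ (a k) = ((1 + Complex.I) / 2) * Complex.exp (-(z k)) := by
    intro k
    rw [ha k, _root_.map_mul, ← Complex.exp_conj]
    congr 1
    · simp [map_ofNat]
    · congr 1
      simp [hz, map_div₀, map_ofNat, Complex.conj_I]
      ring
  have hcc : ∀ k, starRingEnd ℂ (a k) * a k = 1/2 := by
    intro k
    rw [hstar k, ha k]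
    have h1 : Complex.exp (-(z k)) * Complex.exp (z k) = 1 := by
      rw [← Complex.exp_add, show -(z k) + z k = 0 from by ring, Complex.exp_zero]
    linear_combination ((1+Complex.I)*(1-Complex.I)/4) * h1 - (1/4) * Complex.I_sq
  have hωk : ∀ k : ℕ, ω^k = Complex.exp (4 * z k) := by
    intro k
    rw [hω, ← Complex.exp_nat_mul]
    congr 1
    simp only [hz]
    field_simp
    ring
  have hc2 : ∀ k, (a k)^2 + (starRingEnd ℂ (a k))^2 * ω^k = 0 := by
    intro k
    rw [hstar k, ha k, hωk k]
    have h2 : Complex.exp (-(z k))^2 * Complex.exp (4 * z k) = Complex.exp (z k) ^ 2 := by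
      rw [← Complex.exp_nat_mul, ← Complex.exp_nat_mul, ← Complex.exp_add]
      congr 1
      push_cast
      ring
    linear_combination ((1+Complex.I)/2)^2 * h2 + ((Complex.exp (z k))^2/2) * Complex.I_sq
  have hw : ∀ k, starRingEnd ℂ (ω^k) * ω^k = 1 := by
    intro k
    have hsω : starRingEnd ℂ ω * ω = 1 := by
      rw [hω, ← Complex.exp_conj, ← Complex.exp_add]
      rw [show starRingEnd ℂ (2 * ↑Real.pi * Complex.I / ↑d) + 2 * ↑Real.pi * Complex.I / ↑d = 0 from by
        simp [map_div₀, map_ofNat, Complex.conj_I]; ring]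
      exact Complex.exp_zero
    rw [map_pow, ← mul_pow, hsω, one_pow]
  -- unitarity facts
  have hU1 : ∀ k : ℕ, A₁ ^ k * (A₁ ^ k)ᴴ = 1 := fun k => by
    rw [← Matrix.star_eq_conjTranspose]; exact (Unitary.mem_iff.mp (pow_mem hA₁ k)).2
  have hU2 : ∀ k : ℕ, A₂ ^ k * (A₂ ^ k)ᴴ = 1 := fun k => by
    rw [← Matrix.star_eq_conjTranspose]; exact (Unitary.mem_iff.mp (pow_mem hA₂ k)).2
  have hP1 : ∀ k : ℕ, (A₃ ^ k)ᴴ * A₃ ^ k = 1 := fun k => by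
    rw [← Matrix.star_eq_conjTranspose]; exact (Unitary.mem_iff.mp (pow_mem hA₃ k)).1
  have hQ1 : ∀ k : ℕ, (A₄ ^ k)ᴴ * A₄ ^ k = 1 := fun k => by
    rw [← Matrix.star_eq_conjTranspose]; exact (Unitary.mem_iff.mp (pow_mem hA₄ k)).1
  -- notation
  set S : ℕ → ℂ := fun k => (A₁^k * B₁ k).trace + (A₂^k * B₂ k).trace with hS
  set r : ℕ → ℝ := fun k =>
      (∑ i, ∑ j, Complex.normSq ((((A₁^k)ᴴ - B₁ k)) i j))
      + (∑ i, ∑ j, Complex.normSq ((((A₂^k)ᴴ - B₂ k)) i j)) with hr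
  -- trace of β
  have hβtr : β.trace = ∑ k ∈ Finset.Icc 1 (d-1), 2 * S k := by
    rw [hβ, Matrix.trace_sum]
    refine Finset.sum_congr rfl fun k _ => ?_
    simp only [hS, hB₁, hB₂, Matrix.mul_add, Matrix.mul_smul, Matrix.trace_add,
      Matrix.trace_smul, smul_eq_mul]
    rw [Matrix.trace_mul_comm (A₃^(d-k)) (A₁^k), Matrix.trace_mul_comm (A₄^(d-k)) (A₁^k),
      Matrix.trace_mul_comm (A₃^(d-k)) (A₂^k), Matrix.trace_mul_comm (A₄^(d-k)) (A₂^k)]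
    ring
  -- per-k identity
  have hkey : ∀ k : ℕ, ((r k : ℝ) : ℂ) = 4*D - S k - starRingEnd ℂ (S k) := by
    intro k
    have := key_trace_identity (A₁^k) (A₂^k) (A₃^(d-k)) (A₄^(d-k)) (a k) (ω^k)
      (hU1 k) (hU2 k) (hP1 (d-k)) (hQ1 (d-k)) (hcc k) (hc2 k) (hw k)
    rw [← hB₁ k, ← hB₂ k] at this
    simp only [hr, hS, Complex.ofReal_add]
    rw [← frob_trace, ← frob_trace]
    exact this
  -- sum of r is zero
  have hsum : ∑ k ∈ Finset.Icc 1 (d-1), ((r k : ℝ) : ℂ) = 0 := by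
    have hSsum : (2:ℂ) * ∑ k ∈ Finset.Icc 1 (d-1), S k = ((4 * (d - 1) * D : ℕ) : ℂ) := by
      rw [← htr, hβtr, Finset.mul_sum]
    have hcard : (Finset.Icc 1 (d-1)).card = d - 1 := by
      rw [Nat.card_Icc]; omega
    have hstarS : starRingEnd ℂ (∑ k ∈ Finset.Icc 1 (d-1), S k)
        = ∑ k ∈ Finset.Icc 1 (d-1), S k := by
      have h2 : (∑ k ∈ Finset.Icc 1 (d-1), S k) = ((4 * (d - 1) * D : ℕ) : ℂ) / 2 := by
        rw [eq_div_iff (two_ne_zero)]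
        linear_combination hSsum
      rw [h2, map_div₀, map_natCast, map_ofNat]
    calc ∑ k ∈ Finset.Icc 1 (d-1), ((r k : ℝ) : ℂ)
        = ∑ k ∈ Finset.Icc 1 (d-1), (4*(D:ℂ) - S k - starRingEnd ℂ (S k)) := by
          exact Finset.sum_congr rfl fun k _ => hkey k
      _ = (d-1) * (4*(D:ℂ)) - (∑ k ∈ Finset.Icc 1 (d-1), S k)
            - starRingEnd ℂ (∑ k ∈ Finset.Icc 1 (d-1), S k) := by
          rw [Finset.sum_sub_distrib, Finset.sum_sub_distrib, Finset.sum_const, hcard, map_sum]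
          push_cast [Nat.cast_sub (by omega : 1 ≤ d), nsmul_eq_mul]
          ring
      _ = 0 := by
          rw [hstarS]
          have : (∑ k ∈ Finset.Icc 1 (d-1), S k) = ((4 * (d - 1) * D : ℕ) : ℂ) / 2 := by
            rw [← hSsum]; ring
          rw [this]
          push_cast [Nat.cast_sub (by omega : 1 ≤ d)]
          ring
  -- each r k = 0
  have hr0 : ∀ k ∈ Finset.Icc 1 (d-1), r k = 0 := by
    have : ∑ k ∈ Finset.Icc 1 (d-1), r k = 0 := by
      have := hsum
      rw [← Complex.ofReal_sum] at this
      exact_mod_cast this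
    intro k hk
    refine (Finset.sum_eq_zero_iff_of_nonneg fun k _ => ?_).mp this k hk
    rw [hr]
    exact add_nonneg (Finset.sum_nonneg fun i _ => Finset.sum_nonneg fun j _ => Complex.normSq_nonneg _) (Finset.sum_nonneg fun i _ => Finset.sum_nonneg fun j _ => Complex.normSq_nonneg _)
  -- conclusions
  intro k hk1 hk2
  have hkmem : k ∈ Finset.Icc 1 (d-1) := Finset.mem_Icc.mpr ⟨hk1, hk2⟩
  have hrk := hr0 k hkmem
  simp only [hr] at hrk
  have h1nn : (0:ℝ) ≤ ∑ i, ∑ j, Complex.normSq (((A₁^k)ᴴ - B₁ k) i j) := Finset.sum_nonneg fun i _ => Finset.sum_nonneg fun j _ => Complex.normSq_nonneg _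
  have h2nn : (0:ℝ) ≤ ∑ i, ∑ j, Complex.normSq (((A₂^k)ᴴ - B₂ k) i j) := Finset.sum_nonneg fun i _ => Finset.sum_nonneg fun j _ => Complex.normSq_nonneg _
  have hz1 : ∑ i, ∑ j, Complex.normSq (((A₁^k)ᴴ - B₁ k) i j) = 0 := by linarith
  have hz2 : ∑ i, ∑ j, Complex.normSq (((A₂^k)ᴴ - B₂ k) i j) = 0 := by linarith
  have hm0 : ∀ (M : Matrix (Fin D) (Fin D) ℂ),
      (∑ i, ∑ j, Complex.normSq (M i j)) = 0 → M = 0 := by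
    intro M hM
    ext i j
    have hi := (Finset.sum_eq_zero_iff_of_nonneg fun i _ => Finset.sum_nonneg fun j _ => Complex.normSq_nonneg _).mp hM i (Finset.mem_univ i)
    have hij := (Finset.sum_eq_zero_iff_of_nonneg fun j _ => Complex.normSq_nonneg _).mp hi j (Finset.mem_univ j)
    simpa using Complex.normSq_eq_zero.mp hij
  have hB1e : B₁ k = (A₁^k)ᴴ := by
    have := hm0 _ hz1
    rw [sub_eq_zero] at this
    exact this.symm
  have hB2e : B₂ k = (A₂^k)ᴴ := by
    have := hm0 _ hz2
    rw [sub_eq_zero] at this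
    exact this.symm
  refine ⟨?_, ?_, ?_, ?_, hB1e, hB2e⟩
  · rw [hB1e]; exact hU1 k
  · rw [hB2e]; exact hU2 k
  · rw [hB1e, ← Matrix.star_eq_conjTranspose]
    exact Unitary.star_mem (pow_mem hA₁ k)
  · rw [hB2e, ← Matrix.star_eq_conjTranspose]
    exact Unitary.star_mem (pow_mem hA₂ k)
end
end

section
/- Suppose in addition that A_x^k · B_x^{(k)} = 1 for all x ∈ {1,2} and all k ∈ {1, …, d−1} (the relations forced by maximal violation of the temporal inequality on the maximally mixed state). Then for all k ∈ {1, …, d−1}, A_3^k · A_4^{d−k} = ω^{−k} · A_4^k · A_3^{d−k}. -/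
open Matrix Finset

noncomputable section

/-- The relations `Aₓᵏ·Bₓᵏ = 𝟙` forced by maximal violation imply the
twisted commutation relation `A₃ᵏ·A₄^{d−k} = ω^{−k}·A₄ᵏ·A₃^{d−k}`. -/
theorem maximal_violation_relations_imply_twisted_commutation
    (d D : ℕ) (hd : 2 ≤ d) (hD : 1 ≤ D)
    (ω : ℂ) (hω : ω = Complex.exp (2 * Real.pi * Complex.I / d))
    (a : ℕ → ℂ)
    (ha : ∀ k, a k = ((1 - Complex.I) / 2) * Complex.exp (Real.pi * Complex.I * k / (2 * d)))
    (A₁ A₂ A₃ A₄ : Matrix (Fin D) (Fin D) ℂ)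
    (hA₁ : A₁ ∈ Matrix.unitaryGroup (Fin D) ℂ)
    (hA₂ : A₂ ∈ Matrix.unitaryGroup (Fin D) ℂ)
    (hA₃ : A₃ ∈ Matrix.unitaryGroup (Fin D) ℂ)
    (hA₄ : A₄ ∈ Matrix.unitaryGroup (Fin D) ℂ)
    (hA₁d : A₁ ^ d = 1) (hA₂d : A₂ ^ d = 1) (hA₃d : A₃ ^ d = 1) (hA₄d : A₄ ^ d = 1)
    (B₁ B₂ : ℕ → Matrix (Fin D) (Fin D) ℂ)
    (hB₁ : ∀ k, B₁ k = a k • A₃ ^ (d - k) + (starRingEnd ℂ (a k) * ω ^ k) • A₄ ^ (d - k))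
    (hB₂ : ∀ k, B₂ k = starRingEnd ℂ (a k) • A₃ ^ (d - k) + a k • A₄ ^ (d - k))
    (hmax : ∀ k, 1 ≤ k → k ≤ d - 1 → A₁ ^ k * B₁ k = 1 ∧ A₂ ^ k * B₂ k = 1) :
    ∀ k, 1 ≤ k → k ≤ d - 1 →
      A₃ ^ k * A₄ ^ (d - k) = ω ^ (-(k : ℤ)) • (A₄ ^ k * A₃ ^ (d - k)) := by
  intro k hk1 hk2
  -- Scalar facts
  have hak := ha k
  have hc : (starRingEnd ℂ) (a k)
      = ((1 + Complex.I) / 2) * Complex.exp (-(Real.pi * Complex.I * k / (2 * d))) := by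
    rw [hak, _root_.map_mul, ← Complex.exp_conj]
    congr 1
    · simp [Complex.conj_I, map_ofNat]
    · congr 1
      simp [Complex.conj_I, map_ofNat]
      ring
  have h2 : a k * (starRingEnd ℂ) (a k) = 1/2 := by
    rw [hc, hak]
    rw [mul_mul_mul_comm, ← Complex.exp_add, add_neg_cancel, Complex.exp_zero, mul_one]
    ring_nf
    rw [Complex.I_sq]; ring
  have h2' : (starRingEnd ℂ) (a k) * a k = 1/2 := by rw [mul_comm]; exact h2
  have hS : (starRingEnd ℂ) (a k) ^ 2 * ω ^ k = -(a k ^ 2) := by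
    rw [hc, hak, hω, mul_pow, mul_pow, ← Complex.exp_nat_mul, ← Complex.exp_nat_mul,
      ← Complex.exp_nat_mul, mul_assoc, ← Complex.exp_add]
    have he : (2:ℂ) * (-(Real.pi * Complex.I * k / (2 * d))) + k * (2 * Real.pi * Complex.I / d)
        = 2 * (Real.pi * Complex.I * k / (2 * d)) := by ring
    push_cast
    rw [he]
    have hI : ((1 + Complex.I) / 2) ^ 2 = -(((1 - Complex.I) / 2) ^ 2) := by
      ring_nf
      rw [Complex.I_sq]; ring
    rw [hI]; ring
  have ha0 : a k ≠ 0 := by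
    intro h
    rw [h, zero_mul] at h2
    norm_num at h2
  have hc0 : (starRingEnd ℂ) (a k) ≠ 0 := by simpa using ha0
  have hω0 : ω ≠ 0 := by rw [hω]; exact Complex.exp_ne_zero _
  -- Matrix setup
  set X := A₃ ^ (d - k) with hXdef
  set Y := A₄ ^ (d - k) with hYdef
  have hXu : X ∈ Matrix.unitaryGroup (Fin D) ℂ := pow_mem hA₃ _
  have hYu : Y ∈ Matrix.unitaryGroup (Fin D) ℂ := pow_mem hA₄ _
  have hA2k : (A₂ ^ k) ∈ Matrix.unitaryGroup (Fin D) ℂ := pow_mem hA₂ _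
  have hdk : k + (d - k) = d := by omega
  have hX3 : A₃ ^ k * X = 1 := by rw [hXdef, ← pow_add, hdk, hA₃d]
  have hY4 : A₄ ^ k * Y = 1 := by rw [hYdef, ← pow_add, hdk, hA₄d]
  have hA3k : A₃ ^ k = star X := by
    calc A₃ ^ k = A₃ ^ k * (X * star X) := by rw [hXu.2, mul_one]
    _ = (A₃ ^ k * X) * star X := by rw [mul_assoc]
    _ = star X := by rw [hX3, one_mul]
  have hA4k : A₄ ^ k = star Y := by
    calc A₄ ^ k = A₄ ^ k * (Y * star Y) := by rw [hYu.2, mul_one]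
    _ = (A₄ ^ k * Y) * star Y := by rw [mul_assoc]
    _ = star Y := by rw [hY4, one_mul]
  -- B₂ k is the star of A₂^k, hence unitary
  have hmk := (hmax k hk1 hk2).2
  have hB2star : B₂ k = star (A₂ ^ k) := by
    calc B₂ k = (star (A₂ ^ k) * (A₂ ^ k)) * B₂ k := by rw [hA2k.1, one_mul]
    _ = star (A₂ ^ k) * ((A₂ ^ k) * B₂ k) := by rw [mul_assoc]
    _ = star (A₂ ^ k) := by rw [hmk, mul_one]
  have hBu : B₂ k * star (B₂ k) = 1 := by
    rw [hB2star, star_star]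
    exact hA2k.1
  -- Expand unitarity of B₂ k
  have hBex : ((starRingEnd ℂ) (a k) * a k) • (1 : Matrix (Fin D) (Fin D) ℂ)
      + ((starRingEnd ℂ) (a k) * (starRingEnd ℂ) (a k)) • (X * star Y)
      + ((a k * a k) • (Y * star X) + (a k * (starRingEnd ℂ) (a k)) • (1 : Matrix (Fin D) (Fin D) ℂ))
      = 1 := by
    have h := hBu
    rw [hB₂ k] at h
    rw [star_add, star_smul, star_smul, add_mul, mul_add, mul_add,
      smul_mul_smul_comm, smul_mul_smul_comm, smul_mul_smul_comm, smul_mul_smul_comm] at h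
    simp only [RCLike.star_def, Complex.conj_conj] at h
    rw [hXu.2, hYu.2] at h
    exact h
  have hkey : (starRingEnd ℂ) (a k) ^ 2 • (X * star Y) + a k ^ 2 • (Y * star X) = 0 := by
    have h : (starRingEnd ℂ) (a k) ^ 2 • (X * star Y) + a k ^ 2 • (Y * star X)
        + (((starRingEnd ℂ) (a k) * a k) • (1 : Matrix (Fin D) (Fin D) ℂ)
          + (a k * (starRingEnd ℂ) (a k)) • (1 : Matrix (Fin D) (Fin D) ℂ))
        = 1 := by
      rw [pow_two, pow_two]
      calc ((starRingEnd ℂ) (a k) * (starRingEnd ℂ) (a k)) • (X * star Y)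
            + (a k * a k) • (Y * star X)
            + (((starRingEnd ℂ) (a k) * a k) • (1 : Matrix (Fin D) (Fin D) ℂ)
              + (a k * (starRingEnd ℂ) (a k)) • (1 : Matrix (Fin D) (Fin D) ℂ))
          = ((starRingEnd ℂ) (a k) * a k) • (1 : Matrix (Fin D) (Fin D) ℂ)
            + ((starRingEnd ℂ) (a k) * (starRingEnd ℂ) (a k)) • (X * star Y)
            + ((a k * a k) • (Y * star X)
              + (a k * (starRingEnd ℂ) (a k)) • (1 : Matrix (Fin D) (Fin D) ℂ)) := by
            abel
        _ = 1 := hBex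
    have hone : ((starRingEnd ℂ) (a k) * a k) • (1 : Matrix (Fin D) (Fin D) ℂ)
        + (a k * (starRingEnd ℂ) (a k)) • (1 : Matrix (Fin D) (Fin D) ℂ) = 1 := by
      rw [h2, h2', ← add_smul]; norm_num
    rw [hone] at h
    rwa [add_eq_right] at h
  -- X * star Y = ω^k • (Y * star X)
  have hXY : X * star Y = ω ^ k • (Y * star X) := by
    apply smul_right_injective (Matrix (Fin D) (Fin D) ℂ) (pow_ne_zero 2 hc0)
    show (starRingEnd ℂ) (a k) ^ 2 • (X * star Y)
        = (starRingEnd ℂ) (a k) ^ 2 • (ω ^ k • (Y * star X))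
    rw [smul_smul, hS, neg_smul, eq_neg_iff_add_eq_zero]
    exact hkey
  -- conclude
  have hfin : star Y * X = ω ^ k • (star X * Y) := by
    calc star Y * X = (star X * X) * (star Y * X) := by rw [hXu.1, one_mul]
    _ = star X * ((X * star Y) * X) := by noncomm_ring
    _ = star X * ((ω ^ k • (Y * star X)) * X) := by rw [hXY]
    _ = ω ^ k • (star X * (Y * (star X * X))) := by
        rw [smul_mul_assoc, mul_smul_comm]
        congr 1
        noncomm_ring
    _ = ω ^ k • (star X * Y) := by rw [hXu.1, mul_one]
  rw [hA3k, hA4k, _root_.zpow_neg, zpow_natCast]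
  rw [hfin, smul_smul, inv_mul_cancel₀ (pow_ne_zero k hω0), one_smul]
end
end

section
/- Suppose in addition that A_x^k · B_x^{(k)} = 1 for all x ∈ {1,2} and all k ∈ {1, …, d−1} (the relations forced by maximal violation of the temporal inequality on the maximally mixed state). Then B_x^{(k)} = (B_x^{(1)})^k for all x ∈ {1,2} and all k ∈ {1, …, d−1}; explicitly, a_k·A_3^{d−k} + a_k*·ω^k·A_4^{d−k} = (a_1·A_3^{d−1} + a_1*·ω·A_4^{d−1})^k and a_k*·A_3^{d−k} + a_k·A_4^{d−k} = (a_1*·A_3^{d−1} + a_1·A_4^{d−1})^k. -/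
open Matrix Finset

noncomputable section

/-- The relations `Aₓᵏ·Bₓᵏ = 𝟙` forced by maximal violation imply
`Bₓ⁽ᵏ⁾ = (Bₓ⁽¹⁾)ᵏ` for all `x ∈ {1,2}` and `k ∈ {1,…,d−1}`. -/
theorem maximal_violation_relations_imply_B_powers
    (d D : ℕ) (hd : 2 ≤ d) (hD : 1 ≤ D)
    (ω : ℂ) (hω : ω = Complex.exp (2 * Real.pi * Complex.I / d))
    (a : ℕ → ℂ)
    (ha : ∀ k, a k = ((1 - Complex.I) / 2) * Complex.exp (Real.pi * Complex.I * k / (2 * d)))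
    (A₁ A₂ A₃ A₄ : Matrix (Fin D) (Fin D) ℂ)
    (hA₁ : A₁ ∈ Matrix.unitaryGroup (Fin D) ℂ)
    (hA₂ : A₂ ∈ Matrix.unitaryGroup (Fin D) ℂ)
    (hA₃ : A₃ ∈ Matrix.unitaryGroup (Fin D) ℂ)
    (hA₄ : A₄ ∈ Matrix.unitaryGroup (Fin D) ℂ)
    (hA₁d : A₁ ^ d = 1) (hA₂d : A₂ ^ d = 1) (hA₃d : A₃ ^ d = 1) (hA₄d : A₄ ^ d = 1)
    (B₁ B₂ : ℕ → Matrix (Fin D) (Fin D) ℂ)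
    (hB₁ : ∀ k, B₁ k = a k • A₃ ^ (d - k) + (starRingEnd ℂ (a k) * ω ^ k) • A₄ ^ (d - k))
    (hB₂ : ∀ k, B₂ k = starRingEnd ℂ (a k) • A₃ ^ (d - k) + a k • A₄ ^ (d - k))
    (hmax : ∀ k, 1 ≤ k → k ≤ d - 1 → A₁ ^ k * B₁ k = 1 ∧ A₂ ^ k * B₂ k = 1) :
    ∀ k, 1 ≤ k → k ≤ d - 1 →
      B₁ k = (B₁ 1) ^ k ∧ B₂ k = (B₂ 1) ^ k := by
  intro k hk1 hk2
  obtain ⟨h1, h2⟩ := hmax k hk1 hk2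
  obtain ⟨h1', h2'⟩ := hmax 1 le_rfl (by omega)
  rw [pow_one] at h1' h2'
  have e1 : B₁ k = (A₁ ^ k)⁻¹ := (Matrix.inv_eq_right_inv h1).symm
  have e2 : B₂ k = (A₂ ^ k)⁻¹ := (Matrix.inv_eq_right_inv h2).symm
  have f1 : B₁ 1 = A₁⁻¹ := (Matrix.inv_eq_right_inv h1').symm
  have f2 : B₂ 1 = A₂⁻¹ := (Matrix.inv_eq_right_inv h2').symm
  rw [e1, e2, f1, f2, Matrix.inv_pow', Matrix.inv_pow']
  exact ⟨rfl, rfl⟩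
end
end

section
/- For every integer d ≥ 2, the matrix T_d is unitary, satisfies T_d^d = 1, and Tr[T_d^k] = 0 for every k with 1 ≤ k ≤ d−1; equivalently, the spectrum of T_d consists exactly of the d-th roots of unity ω^0, ω^1, …, ω^{d−1}, each with multiplicity one. -/
open Matrix Finset

noncomputable section

namespace TAux
variable {d : ℕ}

noncomputable def zeta (d : ℕ) : ℂ := Complex.exp (2 * Real.pi * Complex.I / d)
noncomputable def mu (d : ℕ) (i : Fin d) : ℂ :=
  Complex.exp (2 * Real.pi * Complex.I * ((i : ℂ) + 1 / 2) / d)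
noncomputable def av (d : ℕ) (i : Fin d) : ℂ :=
  (-1 : ℂ) ^ (if (i : ℕ) = 0 then 1 else 0 : ℕ) *
    Complex.exp (2 * Real.pi * Complex.I * ((i : ℂ) + 1 / 2) / (2 * d))
noncomputable def lam (d : ℕ) (k : Fin d) : ℂ := Complex.exp (2 * Real.pi * Complex.I * (k : ℂ) / d)
noncomputable def P (d : ℕ) : Matrix (Fin d) (Fin d) ℂ :=
  Matrix.of fun i k => av d i / (mu d i - lam d k)
noncomputable def B (d : ℕ) : Matrix (Fin d) (Fin d) ℂ :=
  Matrix.diagonal (fun k => -((4 : ℂ) * lam d k) / (d:ℂ)^2) * (P d)ᵀ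

lemma dC_ne (hd : 2 ≤ d) : (d : ℂ) ≠ 0 := Nat.cast_ne_zero.mpr (by omega)

lemma sgn_mul_self (i : Fin d) :
    (-1 : ℂ) ^ (if (i : ℕ) = 0 then 1 else 0 : ℕ) *
      (-1 : ℂ) ^ (if (i : ℕ) = 0 then 1 else 0 : ℕ) = 1 := by
  split_ifs <;> norm_num

lemma conj_sgn (i : Fin d) :
    (starRingEnd ℂ) ((-1 : ℂ) ^ (if (i : ℕ) = 0 then 1 else 0 : ℕ)) =
      (-1 : ℂ) ^ (if (i : ℕ) = 0 then 1 else 0 : ℕ) := by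
  split_ifs <;> simp

lemma av_sq (hd : 2 ≤ d) (i : Fin d) : av d i * av d i = mu d i := by
  rw [av, mu]
  have harg : 2 * Real.pi * Complex.I * ((i : ℂ) + 1 / 2) / (2 * d) +
      2 * Real.pi * Complex.I * ((i : ℂ) + 1 / 2) / (2 * d) =
      2 * Real.pi * Complex.I * ((i : ℂ) + 1 / 2) / d := by
    have := dC_ne hd; field_simp; ring
  calc _ = ((-1 : ℂ) ^ (if (i : ℕ) = 0 then 1 else 0 : ℕ) *
        (-1 : ℂ) ^ (if (i : ℕ) = 0 then 1 else 0 : ℕ)) * (Complex.exp _ * Complex.exp _) := by ring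
    _ = _ := by rw [sgn_mul_self, ← Complex.exp_add, harg, one_mul]

lemma av_mul_conj (i : Fin d) : av d i * (starRingEnd ℂ) (av d i) = 1 := by
  rw [av]
  set θ : ℂ := 2 * Real.pi * Complex.I * ((i : ℂ) + 1 / 2) / (2 * d) with hθ
  have hconjθ : (starRingEnd ℂ) θ = -θ := by
    rw [hθ]
    simp [map_div₀, Complex.conj_I, map_ofNat]
    ring
  rw [_root_.map_mul, conj_sgn, ← Complex.exp_conj, hconjθ]
  calc _ = ((-1:ℂ) ^ (if (i : ℕ) = 0 then 1 else 0 : ℕ) * (-1:ℂ) ^ (if (i : ℕ) = 0 then 1 else 0 : ℕ))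
        * (Complex.exp θ * Complex.exp (-θ)) := by ring
    _ = 1 := by rw [sgn_mul_self, ← Complex.exp_add, add_neg_cancel, Complex.exp_zero, one_mul]

lemma av_ne (i : Fin d) : av d i ≠ 0 := by
  intro h
  have := av_mul_conj (d := d) i
  rw [h, zero_mul] at this
  exact zero_ne_one this

lemma mu_mul_conj (hd : 2 ≤ d) (i : Fin d) : mu d i * (starRingEnd ℂ) (mu d i) = 1 := by
  rw [← av_sq hd, _root_.map_mul]
  calc _ = (av d i * (starRingEnd ℂ) (av d i)) * (av d i * (starRingEnd ℂ) (av d i)) := by ring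
    _ = 1 := by rw [av_mul_conj, one_mul]

lemma zeta_prim (hd : 2 ≤ d) : IsPrimitiveRoot (zeta d) d :=
  Complex.isPrimitiveRoot_exp d (by omega)

lemma lam_eq (hd : 2 ≤ d) (k : Fin d) : lam d k = zeta d ^ (k : ℕ) := by
  rw [lam, zeta, ← Complex.exp_nat_mul]
  congr 1
  have := dC_ne hd; field_simp

lemma lam_pow_d (hd : 2 ≤ d) (k : Fin d) : lam d k ^ d = 1 := by
  rw [lam_eq hd, ← pow_mul, mul_comm (k : ℕ) d, pow_mul, (zeta_prim hd).pow_eq_one, one_pow]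

lemma lam_ne_zero (k : Fin d) : lam d k ≠ 0 := Complex.exp_ne_zero _

lemma lam_inj (hd : 2 ≤ d) {k l : Fin d} (h : lam d k = lam d l) : k = l := by
  rw [lam_eq hd, lam_eq hd] at h
  exact Fin.ext ((zeta_prim hd).pow_inj k.isLt l.isLt h)

lemma mu_pow (hd : 2 ≤ d) (i : Fin d) (r : ℕ) :
    mu d i ^ r = Complex.exp (Real.pi * Complex.I * r / d) * (zeta d ^ r) ^ (i : ℕ) := by
  rw [mu, zeta, ← Complex.exp_nat_mul, ← pow_mul, ← Complex.exp_nat_mul, ← Complex.exp_add]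
  congr 1
  have := dC_ne hd; push_cast; field_simp; ring

lemma mu_pow_d (hd : 2 ≤ d) (i : Fin d) : mu d i ^ d = -1 := by
  rw [mu_pow hd, (zeta_prim hd).pow_eq_one, one_pow, mul_one]
  have : (Real.pi : ℂ) * Complex.I * d / d = Real.pi * Complex.I := by
    have := dC_ne hd; field_simp
  rw [this, Complex.exp_pi_mul_I]

lemma mu_ne_lam (hd : 2 ≤ d) (i k : Fin d) : mu d i ≠ lam d k := by
  intro h
  have h1 : (-1 : ℂ) = 1 := by rw [← mu_pow_d hd i, h, lam_pow_d hd]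
  norm_num at h1

lemma sum_mu_pow_not_dvd (hd : 2 ≤ d) {r : ℕ} (hr : ¬ d ∣ r) :
    ∑ j : Fin d, mu d j ^ r = 0 := by
  have hx : zeta d ^ r ≠ 1 := fun h => hr (((zeta_prim hd).pow_eq_one_iff_dvd r).mp h)
  have hxd : (zeta d ^ r) ^ d = 1 := by
    rw [← pow_mul, mul_comm r d, pow_mul, (zeta_prim hd).pow_eq_one, one_pow]
  calc ∑ j : Fin d, mu d j ^ r
      = ∑ j : Fin d, Complex.exp (Real.pi * Complex.I * r / d) * (zeta d ^ r) ^ (j : ℕ) := by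
        exact Finset.sum_congr rfl fun j _ => mu_pow hd j r
    _ = Complex.exp (Real.pi * Complex.I * r / d) * ∑ j : Fin d, (zeta d ^ r) ^ (j : ℕ) := by
        rw [Finset.mul_sum]
    _ = 0 := by
        rw [Fin.sum_univ_eq_sum_range (fun j => (zeta d ^ r) ^ j) d, geom_sum_eq hx, hxd]
        simp

lemma sum_mu_pow_d (hd : 2 ≤ d) : ∑ j : Fin d, mu d j ^ d = -d := by
  have h1 : ∀ j : Fin d, mu d j ^ d = -1 := mu_pow_d hd
  rw [Finset.sum_congr rfl fun j _ => h1 j]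
  simp

lemma sub_ne (hd : 2 ≤ d) (i k : Fin d) : mu d i - lam d k ≠ 0 :=
  sub_ne_zero.mpr (mu_ne_lam hd i k)

lemma geom2 (hd : 2 ≤ d) (i k : Fin d) :
    (∑ m ∈ range d, lam d k ^ m * mu d i ^ (d - 1 - m)) * (lam d k - mu d i) = 2 := by
  have hg := geom_sum₂_mul (lam d k) (mu d i) d
  rw [lam_pow_d hd, mu_pow_d hd] at hg
  linear_combination hg

lemma inv_frac (hd : 2 ≤ d) (i k : Fin d) :
    (mu d i - lam d k)⁻¹ =
      -(1/2) * ∑ m ∈ range d, lam d k ^ m * mu d i ^ (d - 1 - m) := by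
  refine inv_eq_of_mul_eq_one_right ?_
  linear_combination (1/2) * geom2 hd i k

lemma not_dvd_of_between {r : ℕ} (h1 : 0 < r) (h2 : r < d) : ¬ d ∣ r :=
  fun h => absurd (Nat.le_of_dvd h1 h) (by omega)

lemma key1 (hd : 2 ≤ d) (k : Fin d) :
    ∑ j : Fin d, mu d j / (mu d j - lam d k) = d / 2 := by
  have step : ∀ j : Fin d, mu d j / (mu d j - lam d k) =
      -(1/2) * ∑ m ∈ range d, lam d k ^ m * mu d j ^ (d - m) := by
    intro j
    have hterm : ∀ m ∈ range d,
        lam d k ^ m * mu d j ^ (d - 1 - m) * mu d j = lam d k ^ m * mu d j ^ (d - m) := by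
      intro m hm
      rw [mul_assoc, ← pow_succ]
      congr 2
      have := Finset.mem_range.mp hm; omega
    calc mu d j / (mu d j - lam d k)
        = -(1/2) * ∑ m ∈ range d, lam d k ^ m * mu d j ^ (d - 1 - m) * mu d j := by
          rw [div_eq_mul_inv, inv_frac hd, ← Finset.sum_mul]; ring
      _ = -(1/2) * ∑ m ∈ range d, lam d k ^ m * mu d j ^ (d - m) := by
          rw [Finset.sum_congr rfl hterm]
  have inner : ∀ m ∈ range d,
      (∑ j : Fin d, lam d k ^ m * mu d j ^ (d - m)) = if m = 0 then -(d:ℂ) else 0 := by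
    intro m hm
    have hm' := Finset.mem_range.mp hm
    rw [← Finset.mul_sum]
    by_cases h0 : m = 0
    · subst h0; simp [sum_mu_pow_d hd]
    · have hdvd : ¬ d ∣ (d - m) := not_dvd_of_between (by omega) (by omega)
      rw [sum_mu_pow_not_dvd hd hdvd, mul_zero, if_neg h0]
  calc ∑ j : Fin d, mu d j / (mu d j - lam d k)
      = ∑ j : Fin d, -(1/2) * ∑ m ∈ range d, lam d k ^ m * mu d j ^ (d - m) := by
        exact Finset.sum_congr rfl fun j _ => step j
    _ = -(1/2) * ∑ m ∈ range d, ∑ j : Fin d, lam d k ^ m * mu d j ^ (d - m) := by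
        rw [← Finset.mul_sum, Finset.sum_comm]
    _ = -(1/2) * ∑ m ∈ range d, (if m = 0 then -(d:ℂ) else 0) := by
        rw [Finset.sum_congr rfl inner]
    _ = d / 2 := by
        rw [Finset.sum_ite_eq' (range d) 0 (fun _ => -(d:ℂ))]
        simp only [Finset.mem_range, if_pos (by omega : 0 < d)]
        ring

lemma not_dvd_of_between2 (hd : 2 ≤ d) {r : ℕ} (h1 : 0 < r) (h2 : r < 2*d) (h3 : r ≠ d) :
    ¬ d ∣ r := by
  rintro ⟨c, rfl⟩
  have hc2 : c < 2 := by
    by_contra hc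
    push_neg at hc
    have : d * 2 ≤ d * c := Nat.mul_le_mul_left d hc
    omega
  interval_cases c <;> omega

lemma key2 (hd : 2 ≤ d) (k l : Fin d) :
    ∑ j : Fin d, mu d j / ((mu d j - lam d k) * (mu d j - lam d l)) =
      if k = l then -((d:ℂ)^2 / (4 * lam d k)) else 0 := by
  have step : ∀ j : Fin d, mu d j / ((mu d j - lam d k) * (mu d j - lam d l)) =
      (1/4) * ∑ m ∈ range d, ∑ n ∈ range d,
        lam d k ^ m * lam d l ^ n * mu d j ^ (2*d - 1 - m - n) := by
    intro j
    have hterm : ∀ m ∈ range d, ∀ n ∈ range d,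
        lam d k ^ m * mu d j ^ (d - 1 - m) * (lam d l ^ n * mu d j ^ (d - 1 - n)) * mu d j
          = lam d k ^ m * lam d l ^ n * mu d j ^ (2*d - 1 - m - n) := by
      intro m hm n hn
      have hm' := Finset.mem_range.mp hm
      have hn' := Finset.mem_range.mp hn
      have hexp : (d - 1 - m) + (d - 1 - n) + 1 = 2*d - 1 - m - n := by omega
      rw [← hexp, pow_add, pow_add, pow_one]
      ring
    calc mu d j / ((mu d j - lam d k) * (mu d j - lam d l))
        = (1/4) * ((∑ m ∈ range d, lam d k ^ m * mu d j ^ (d - 1 - m)) *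
            (∑ n ∈ range d, lam d l ^ n * mu d j ^ (d - 1 - n)) * mu d j) := by
          rw [div_eq_mul_inv, mul_inv, inv_frac hd, inv_frac hd]; ring
      _ = (1/4) * ∑ m ∈ range d, ∑ n ∈ range d,
            lam d k ^ m * mu d j ^ (d - 1 - m) * (lam d l ^ n * mu d j ^ (d - 1 - n)) * mu d j := by
          rw [Finset.sum_mul_sum, Finset.sum_mul]
          congr 1
          refine Finset.sum_congr rfl fun m hm => ?_
          rw [Finset.sum_mul]
      _ = _ := by
          congr 1
          refine Finset.sum_congr rfl fun m hm => Finset.sum_congr rfl fun n hn => ?_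
          exact hterm m hm n hn
  have inner2 : ∀ m ∈ range d, ∀ n ∈ range d,
      (∑ j : Fin d, lam d k ^ m * lam d l ^ n * mu d j ^ (2*d - 1 - m - n)) =
        if n = d - 1 - m then lam d k ^ m * lam d l ^ n * (-(d:ℂ)) else 0 := by
    intro m hm n hn
    have hm' := Finset.mem_range.mp hm
    have hn' := Finset.mem_range.mp hn
    rw [← Finset.mul_sum]
    by_cases h : n = d - 1 - m
    · have hr : 2*d - 1 - m - n = d := by omega
      rw [hr, sum_mu_pow_d hd, if_pos h]
    · have hr : ¬ d ∣ (2*d - 1 - m - n) :=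
        not_dvd_of_between2 hd (by omega) (by omega) (by omega)
      rw [sum_mu_pow_not_dvd hd hr, mul_zero, if_neg h]
  have swap : ∑ j : Fin d, mu d j / ((mu d j - lam d k) * (mu d j - lam d l)) =
      (1/4) * ∑ m ∈ range d, ∑ n ∈ range d,
        (if n = d - 1 - m then lam d k ^ m * lam d l ^ n * (-(d:ℂ)) else 0) := by
    calc ∑ j : Fin d, mu d j / ((mu d j - lam d k) * (mu d j - lam d l))
        = ∑ j : Fin d, (1/4) * ∑ m ∈ range d, ∑ n ∈ range d,
            lam d k ^ m * lam d l ^ n * mu d j ^ (2*d - 1 - m - n) := by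
          exact Finset.sum_congr rfl fun j _ => step j
      _ = (1/4) * ∑ m ∈ range d, ∑ n ∈ range d, ∑ j : Fin d,
            lam d k ^ m * lam d l ^ n * mu d j ^ (2*d - 1 - m - n) := by
          rw [← Finset.mul_sum]
          congr 1
          rw [Finset.sum_comm]
          refine Finset.sum_congr rfl fun m hm => Finset.sum_comm
      _ = _ := by
          congr 1
          exact Finset.sum_congr rfl fun m hm => Finset.sum_congr rfl fun n hn =>
            inner2 m hm n hn
  rw [swap]
  have collapse : ∀ m ∈ range d,
      (∑ n ∈ range d, if n = d - 1 - m then lam d k ^ m * lam d l ^ n * (-(d:ℂ)) else 0)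
        = lam d k ^ m * lam d l ^ (d - 1 - m) * (-(d:ℂ)) := by
    intro m hm
    rw [Finset.sum_ite_eq' (range d) (d - 1 - m)
      (fun n => lam d k ^ m * lam d l ^ n * (-(d:ℂ)))]
    rw [if_pos (Finset.mem_range.mpr (by omega))]
  rw [Finset.sum_congr rfl collapse]
  have hG : (∑ m ∈ range d, lam d k ^ m * lam d l ^ (d - 1 - m)) * (lam d k - lam d l)
      = 0 := by
    rw [geom_sum₂_mul, lam_pow_d hd, lam_pow_d hd, sub_self]
  by_cases hkl : k = l
  · subst hkl
    have hterm : ∀ m ∈ range d, lam d k ^ m * lam d k ^ (d - 1 - m) * (-(d:ℂ))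
        = lam d k ^ (d-1) * (-(d:ℂ)) := by
      intro m hm
      rw [← pow_add]
      congr 2
      have := Finset.mem_range.mp hm; omega
    rw [Finset.sum_congr rfl hterm, Finset.sum_const, Finset.card_range, if_pos rfl,
      nsmul_eq_mul]
    have hl1 : lam d k ^ (d-1) * lam d k = 1 := by
      rw [← pow_succ]
      have h1 : d - 1 + 1 = d := by omega
      rw [h1, lam_pow_d hd]
    have hinv : lam d k ^ (d-1) = (lam d k)⁻¹ := eq_inv_of_mul_eq_one_left hl1
    have hlne := lam_ne_zero (d := d) k
    rw [hinv]
    field_simp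
  · have hne : lam d k - lam d l ≠ 0 := sub_ne_zero.mpr (fun h => hkl (lam_inj hd h))
    have hG0 : (∑ m ∈ range d, lam d k ^ m * lam d l ^ (d - 1 - m)) = 0 := by
      rcases mul_eq_zero.mp hG with h | h
      · exact h
      · exact absurd h hne
    rw [if_neg hkl]
    calc (1/4) * ∑ m ∈ range d, lam d k ^ m * lam d l ^ (d - 1 - m) * (-(d:ℂ))
        = (1/4) * ((∑ m ∈ range d, lam d k ^ m * lam d l ^ (d - 1 - m)) * (-(d:ℂ))) := by
          rw [Finset.sum_mul]
      _ = 0 := by rw [hG0]; ring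

lemma conj_av_eq (i : Fin d) : (starRingEnd ℂ) (av d i) = (av d i)⁻¹ :=
  eq_inv_of_mul_eq_one_left (by rw [mul_comm]; exact av_mul_conj i)

lemma conj_mu_eq (hd : 2 ≤ d) (i : Fin d) : (starRingEnd ℂ) (mu d i) = (mu d i)⁻¹ :=
  eq_inv_of_mul_eq_one_left (by rw [mul_comm]; exact mu_mul_conj hd i)

section Main
variable (hd : 2 ≤ d) (T : Matrix (Fin d) (Fin d) ℂ)
  (hTf : ∀ i j, T i j = (if i = j then mu d i else 0) - (2/(d:ℂ)) * (av d i * av d j))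

include hd hTf

lemma T_unitary : T * star T = 1 := by
  have hdne := dC_ne hd
  ext i j
  rw [Matrix.mul_apply, Matrix.one_apply]
  have hsum : ∀ k : Fin d, T i k * (star T) k j =
      (if i = k then (if j = k then mu d i * (starRingEnd ℂ) (mu d j) else 0) else 0)
      - (if i = k then (2/(d:ℂ)) * mu d i * ((starRingEnd ℂ) (av d j) * (starRingEnd ℂ) (av d k)) else 0)
      - (if j = k then (2/(d:ℂ)) * (starRingEnd ℂ) (mu d j) * (av d i * av d k) else 0)
      + (2/(d:ℂ))^2 * (av d i * (starRingEnd ℂ) (av d j)) * (av d k * (starRingEnd ℂ) (av d k)) := by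
    intro k
    rw [Matrix.star_apply, hTf i k, hTf j k]
    by_cases hik : i = k <;> by_cases hjk : j = k <;>
      simp [hik, hjk, Complex.star_def, map_sub, _root_.map_mul, map_div₀, map_ofNat] <;> ring
  rw [Finset.sum_congr rfl fun k _ => hsum k]
  rw [Finset.sum_add_distrib, Finset.sum_sub_distrib, Finset.sum_sub_distrib]
  rw [Finset.sum_ite_eq, Finset.sum_ite_eq, Finset.sum_ite_eq]
  simp only [Finset.mem_univ, if_true]
  rw [← Finset.mul_sum]
  have hav_sum : ∑ k : Fin d, av d k * (starRingEnd ℂ) (av d k) = (d : ℂ) := by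
    rw [Finset.sum_congr rfl fun k _ => av_mul_conj k]
    simp
  rw [hav_sum]
  have hmi : mu d i = av d i * av d i := (av_sq hd i).symm
  have hmj : mu d j = av d j * av d j := (av_sq hd j).symm
  by_cases hij : i = j
  · subst hij
    rw [if_pos rfl, if_pos rfl, conj_av_eq, conj_mu_eq hd]
    rw [hmi]
    have hane := av_ne (d := d) i
    field_simp
    ring
  · rw [if_neg (fun h => hij h.symm), if_neg hij, conj_av_eq, conj_av_eq, conj_mu_eq hd]
    rw [hmi, hmj]
    have hai := av_ne (d := d) i
    have haj := av_ne (d := d) j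
    field_simp
    ring

lemma TP_eq : T * P d = P d * Matrix.diagonal (lam d) := by
  have hdne := dC_ne hd
  ext i k
  rw [Matrix.mul_apply, Matrix.mul_diagonal]
  have hsum : ∀ j : Fin d, T i j * P d j k =
      (if i = j then mu d i * P d j k else 0)
        - (2/(d:ℂ)) * av d i * (mu d j / (mu d j - lam d k)) := by
    intro j
    rw [hTf i j]
    have hthis : av d j * (av d j / (mu d j - lam d k)) = mu d j / (mu d j - lam d k) := by
      rw [mul_div_assoc', av_sq hd]
    simp only [P, Matrix.of_apply]
    by_cases hij : i = j
    · rw [if_pos hij, if_pos hij, ← hthis]; ring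
    · rw [if_neg hij, if_neg hij, ← hthis]; ring
  rw [Finset.sum_congr rfl fun j _ => hsum j]
  rw [Finset.sum_sub_distrib, Finset.sum_ite_eq]
  simp only [Finset.mem_univ, if_true]
  rw [← Finset.mul_sum, key1 hd]
  show mu d i * (av d i / (mu d i - lam d k)) - 2 / (d:ℂ) * av d i * ((d:ℂ)/2)
      = av d i / (mu d i - lam d k) * lam d k
  have hne := sub_ne hd i k
  field_simp
  ring

omit hTf in
lemma BP_eq : B d * P d = 1 := by
  have hdne := dC_ne hd
  ext k l
  rw [B, Matrix.mul_assoc, Matrix.diagonal_mul, Matrix.one_apply]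
  rw [Matrix.mul_apply]
  have hsum : ∀ j : Fin d, (P d)ᵀ k j * P d j l =
      mu d j / ((mu d j - lam d k) * (mu d j - lam d l)) := by
    intro j
    rw [Matrix.transpose_apply]
    show (av d j / (mu d j - lam d k)) * (av d j / (mu d j - lam d l)) = _
    rw [div_mul_div_comm, av_sq hd]
  rw [Finset.sum_congr rfl fun j _ => hsum j, key2 hd]
  by_cases hkl : k = l
  · rw [if_pos hkl, if_pos hkl]
    have := lam_ne_zero (d := d) k
    field_simp
  · rw [if_neg hkl, if_neg hkl, mul_zero]

end Main

lemma T_form (hd : 2 ≤ d) (T : Matrix (Fin d) (Fin d) ℂ)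
    (hT : ∀ i j : Fin d, T i j =
      (if i = j then Complex.exp (2 * Real.pi * Complex.I * ((i : ℂ) + 1 / 2) / d) else 0)
        - (2 / d) * (-1 : ℂ) ^ ((if (i : ℕ) = 0 then 1 else 0)
            + (if (j : ℕ) = 0 then 1 else 0) : ℕ)
          * Complex.exp (2 * Real.pi * Complex.I * ((i : ℂ) + (j : ℂ) + 1) / (2 * d))) :
    ∀ i j, T i j = (if i = j then mu d i else 0) - (2/(d:ℂ)) * (av d i * av d j) := by
  intro i j
  rw [hT i j]
  have hprod : av d i * av d j =
      (-1 : ℂ) ^ ((if (i : ℕ) = 0 then 1 else 0) + (if (j : ℕ) = 0 then 1 else 0) : ℕ)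
        * Complex.exp (2 * Real.pi * Complex.I * ((i : ℂ) + (j : ℂ) + 1) / (2 * d)) := by
    rw [av, av, pow_add, mul_mul_mul_comm, ← Complex.exp_add]
    have harg : 2 * Real.pi * Complex.I * ((i : ℂ) + 1 / 2) / (2 * d) +
        2 * Real.pi * Complex.I * ((j : ℂ) + 1 / 2) / (2 * d) =
        2 * Real.pi * Complex.I * ((i : ℂ) + (j : ℂ) + 1) / (2 * d) := by
      have := dC_ne hd; field_simp; ring
    rw [harg]
  rw [hprod, mu]; ring

end TAux

open TAux in
/-- `T_d` is unitary, satisfies `T_d^d = 𝟙`, and `Tr[T_d^k] = 0` for `1 ≤ k ≤ d−1`;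
i.e. its spectrum consists of all `d`-th roots of unity, each with multiplicity one. -/
theorem T_unitary_order_d_traceless_powers
    (d : ℕ) (hd : 2 ≤ d)
    (ω : ℂ) (hω : ω = Complex.exp (2 * Real.pi * Complex.I / d))
    (T : Matrix (Fin d) (Fin d) ℂ)
    (hT : ∀ i j : Fin d, T i j =
      (if i = j then Complex.exp (2 * Real.pi * Complex.I * ((i : ℂ) + 1 / 2) / d) else 0)
        - (2 / d) * (-1 : ℂ) ^ ((if (i : ℕ) = 0 then 1 else 0)
            + (if (j : ℕ) = 0 then 1 else 0) : ℕ)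
          * Complex.exp (2 * Real.pi * Complex.I * ((i : ℂ) + (j : ℂ) + 1) / (2 * d))) :
    T ∈ Matrix.unitaryGroup (Fin d) ℂ ∧
    T ^ d = 1 ∧
    ∀ k, 1 ≤ k → k ≤ d - 1 → (T ^ k).trace = 0 := by
  have hTf := T_form hd T hT
  have hBP := BP_eq hd
  have hPB : P d * B d = 1 := mul_eq_one_comm.mp hBP
  have hTP := TP_eq hd T hTf
  have hTeq : T = P d * Matrix.diagonal (lam d) * B d := by
    calc T = T * (P d * B d) := by rw [hPB, Matrix.mul_one]
      _ = (T * P d) * B d := by rw [Matrix.mul_assoc]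
      _ = P d * Matrix.diagonal (lam d) * B d := by rw [hTP]
  have hconj : ∀ X Y : Matrix (Fin d) (Fin d) ℂ,
      (P d * X * B d) * (P d * Y * B d) = P d * (X * Y) * B d := by
    intro X Y
    calc (P d * X * B d) * (P d * Y * B d) = P d * X * (B d * P d) * (Y * B d) := by
          simp only [Matrix.mul_assoc]
      _ = P d * (X * Y) * B d := by
          rw [hBP, Matrix.mul_one]; simp only [Matrix.mul_assoc]
  have hpow : ∀ n : ℕ, T ^ n = P d * (Matrix.diagonal (lam d)) ^ n * B d := by
    intro n
    induction n with
    | zero => rw [pow_zero, pow_zero, Matrix.mul_one, hPB]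
    | succ n ih => rw [pow_succ, pow_succ, ih, hTeq, hconj]
  refine ⟨Matrix.mem_unitaryGroup_iff.mpr (T_unitary hd T hTf), ?_, ?_⟩
  · rw [hpow d, Matrix.diagonal_pow]
    have h1 : Matrix.diagonal (lam d ^ d) = (1 : Matrix (Fin d) (Fin d) ℂ) := by
      rw [show (lam d ^ d) = (1 : Fin d → ℂ) from funext fun k => by
        simp [Pi.pow_apply, lam_pow_d hd k]]
      exact Matrix.diagonal_one
    rw [h1, Matrix.mul_one, hPB]
  · intro k hk1 hk2
    rw [hpow k, Matrix.trace_mul_comm (P d * (Matrix.diagonal (lam d)) ^ k) (B d),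
      ← Matrix.mul_assoc, hBP, Matrix.one_mul, Matrix.diagonal_pow, Matrix.trace_diagonal]
    have hterm : ∀ j : Fin d, (lam d ^ k) j = (zeta d ^ k) ^ (j : ℕ) := by
      intro j
      rw [Pi.pow_apply, lam_eq hd, ← pow_mul, ← pow_mul, mul_comm (j : ℕ) k]
    rw [Finset.sum_congr rfl fun j _ => hterm j]
    have hx : zeta d ^ k ≠ 1 :=
      (zeta_prim hd).pow_ne_one_of_pos_of_lt (by omega) (by omega)
    have hxd : (zeta d ^ k) ^ d = 1 := by
      rw [← pow_mul, mul_comm k d, pow_mul, (zeta_prim hd).pow_eq_one, one_pow]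
    rw [Fin.sum_univ_eq_sum_range (fun j => (zeta d ^ k) ^ j) d, geom_sum_eq hx, hxd]
    simp

end
end

section
/- For every integer d ≥ 2 and every r ∈ {0, …, d−1}, the vector v_r ∈ ℂ^d with components (v_r)_q = (2/d)·(−1)^{δ_{q,0}}·ω^{−q/2}/(1 − ω^{r−q−1/2}) for q = 0, …, d−1 is an eigenvector of T_d with eigenvalue ω^r, i.e., T_d·v_r = ω^r·v_r. -/
open Matrix Finset

noncomputable section

/-- Auxiliary: `Efun d x = exp(2πi·x/d)`. -/
def Efun (d : ℕ) (x : ℂ) : ℂ := Complex.exp (2 * Real.pi * Complex.I * x / d)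

lemma Efun_mul (d : ℕ) (x y : ℂ) : Efun d x * Efun d y = Efun d (x + y) := by
  unfold Efun; rw [← Complex.exp_add]; congr 1; ring

lemma Efun_pow (d : ℕ) (x : ℂ) (n : ℕ) : Efun d x ^ n = Efun d (n * x) := by
  unfold Efun; rw [← Complex.exp_nat_mul]; congr 1; ring

lemma Efun_zero (d : ℕ) : Efun d 0 = 1 := by
  unfold Efun; simp

lemma key_sum (d : ℕ) (hd : 0 < d) (α β : ℂ) (hα : α ^ d = -1) (hβ : β ^ d = 1)
    (hβk : ∀ k : ℕ, 0 < k → k < d → β ^ k ≠ 1) :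
    ∑ q : Fin d, (1 - α * β ^ (q : ℕ))⁻¹ = d / 2 := by
  have hz : ∀ q : ℕ, (α * β ^ q) ^ d = -1 := by
    intro q
    rw [mul_pow, ← pow_mul, mul_comm q d, pow_mul, hβ, one_pow, mul_one, hα]
  have hterm : ∀ q : Fin d, (1 - α * β ^ (q:ℕ))⁻¹
      = (∑ k ∈ Finset.range d, (α * β ^ (q:ℕ)) ^ k) / 2 := by
    intro q
    set z := α * β ^ (q:ℕ) with hzdef
    have h2 : (1 - z) * ∑ k ∈ Finset.range d, z ^ k = 2 := by
      have hg : (∑ k ∈ Finset.range d, z ^ k) * (z - 1) = z ^ d - 1 := geom_sum_mul z d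
      have : (1 - z) * ∑ k ∈ Finset.range d, z ^ k = 1 - z ^ d := by linear_combination -hg
      rw [this, hz (q:ℕ)]; ring
    have h1z : (1 - z) ≠ 0 := left_ne_zero_of_mul (h2 ▸ two_ne_zero)
    field_simp
    linear_combination -h2
  rw [Finset.sum_congr rfl (fun q _ => hterm q), ← Finset.sum_div]
  have hmain : ∑ q : Fin d, ∑ k ∈ Finset.range d, (α * β ^ (q:ℕ)) ^ k = d := by
    rw [Finset.sum_comm]
    have hinner : ∀ k ∈ Finset.range d,
        (∑ q : Fin d, (α * β ^ (q:ℕ)) ^ k) = if k = 0 then (d:ℂ) else 0 := by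
      intro k hk
      rcases Nat.eq_zero_or_pos k with hk0 | hk0
      · simp [hk0]
      · rw [if_neg hk0.ne']
        have : ∀ q : Fin d, (α * β ^ (q:ℕ)) ^ k = α ^ k * (β ^ k) ^ (q:ℕ) := by
          intro q; rw [mul_pow, ← pow_mul, ← pow_mul, mul_comm (q:ℕ) k]
        rw [Finset.sum_congr rfl (fun q _ => this q), ← Finset.mul_sum]
        have hne : β ^ k ≠ 1 := hβk k hk0 (Finset.mem_range.mp hk)
        rw [Fin.sum_univ_eq_sum_range (fun i => (β ^ k) ^ i) d, geom_sum_eq hne]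
        rw [← pow_mul, mul_comm k d, pow_mul, hβ, one_pow]
        simp
    rw [Finset.sum_congr rfl hinner,
      Finset.sum_ite_eq' (Finset.range d) 0 (fun _ => (d:ℂ)),
      if_pos (Finset.mem_range.mpr hd)]
  rw [hmain]

lemma cross_helper (A si sj E1 Ej Emj Δi : ℂ) (hsj : sj * sj = 1)
    (hE : Ej * Emj = 1) (hΔ : Δi ≠ 0) :
    A * (si * sj) * (E1 * Ej) * (A * sj * Emj / Δi) = A * si * E1 * (A * Δi⁻¹) := by
  field_simp
  linear_combination (A * si * E1 * A * Ej * Emj) * hsj + (A * si * E1 * A) * hE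

lemma final_helper (A si E1 E2 Emi Er Z : ℂ) (hΔ : 1 - Z ≠ 0)
    (h1 : E1 * Emi = E2) (h2 : E2 * Z = Er * Emi) :
    E1 * (A * si * Emi / (1 - Z)) - A * si * E2 = Er * (A * si * Emi / (1 - Z)) := by
  field_simp
  linear_combination (A * si) * h1 + (A * si) * h2

set_option maxHeartbeats 1000000 in
/-- For every `r ∈ {0,…,d−1}`, the vector with components
`(v_r)_q = (2/d)·(−1)^{δ_{q,0}}·ω^{−q/2}/(1 − ω^{r−q−1/2})`
is an eigenvector of `T_d` with eigenvalue `ω^r`. -/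
theorem T_eigenvector
    (d : ℕ) (hd : 2 ≤ d)
    (ω : ℂ) (hω : ω = Complex.exp (2 * Real.pi * Complex.I / d))
    (T : Matrix (Fin d) (Fin d) ℂ)
    (hT : ∀ i j : Fin d, T i j =
      (if i = j then Complex.exp (2 * Real.pi * Complex.I * ((i : ℂ) + 1 / 2) / d) else 0)
        - (2 / d) * (-1 : ℂ) ^ ((if (i : ℕ) = 0 then 1 else 0)
            + (if (j : ℕ) = 0 then 1 else 0) : ℕ)
          * Complex.exp (2 * Real.pi * Complex.I * ((i : ℂ) + (j : ℂ) + 1) / (2 * d)))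
    (r : Fin d) (v : Fin d → ℂ)
    (hv : ∀ q : Fin d, v q =
      (2 / d) * (-1 : ℂ) ^ ((if (q : ℕ) = 0 then 1 else 0) : ℕ)
        * Complex.exp (2 * Real.pi * Complex.I * (-(q : ℂ) / 2) / d)
        / (1 - Complex.exp (2 * Real.pi * Complex.I * ((r : ℂ) - (q : ℂ) - 1 / 2) / d))) :
    T.mulVec v = ω ^ (r : ℕ) • v := by
  have hdpos : 0 < d := by omega
  have hd0 : (d : ℂ) ≠ 0 := Nat.cast_ne_zero.mpr (by omega)
  have hπ : (Real.pi : ℂ) ≠ 0 := by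
    exact_mod_cast Real.pi_ne_zero
  have hI : Complex.I ≠ 0 := Complex.I_ne_zero
  set s : Fin d → ℂ := fun q => (-1 : ℂ) ^ (if (q : ℕ) = 0 then 1 else 0) with hs
  have hs2 : ∀ q : Fin d, s q * s q = 1 := by
    intro q; simp only [hs]; split <;> norm_num
  have hsne : ∀ q : Fin d, s q ≠ 0 := by
    intro q; simp only [hs]; split <;> norm_num
  -- the basic exponentials
  set α : ℂ := Efun d ((r : ℂ) - 1/2) with hαdef
  set β : ℂ := Efun d (-1) with hβdef
  have hα : α ^ d = -1 := by
    rw [hαdef, Efun_pow]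
    unfold Efun
    have harg : 2 * (Real.pi:ℂ) * Complex.I * ((d:ℂ) * ((r:ℂ) - 1/2)) / d
        = ((r:ℤ):ℂ) * (2 * Real.pi * Complex.I) + (-((Real.pi:ℂ) * Complex.I)) := by
      field_simp
      push_cast; ring
    rw [harg, Complex.exp_add, Complex.exp_int_mul_two_pi_mul_I, Complex.exp_neg,
      Complex.exp_pi_mul_I]
    norm_num
  have hβ : β ^ d = 1 := by
    rw [hβdef, Efun_pow]
    unfold Efun
    have harg : 2 * (Real.pi:ℂ) * Complex.I * ((d:ℂ) * (-1)) / d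
        = ((-1 : ℤ):ℂ) * (2 * Real.pi * Complex.I) := by
      field_simp
      norm_num
    rw [harg, Complex.exp_int_mul_two_pi_mul_I]
  have hβk : ∀ k : ℕ, 0 < k → k < d → β ^ k ≠ 1 := by
    intro k hk1 hk2 hcon
    rw [hβdef, Efun_pow] at hcon
    unfold Efun at hcon
    rw [Complex.exp_eq_one_iff] at hcon
    obtain ⟨n, hn⟩ := hcon
    have hked : -(k : ℂ) = n * d := by
      field_simp at hn
      have h2πI : (2 * (Real.pi:ℂ) * Complex.I) ≠ 0 :=
        mul_ne_zero (mul_ne_zero two_ne_zero hπ) hI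
      have h' : (-(k:ℂ)) * (2 * (Real.pi:ℂ) * Complex.I)
          = ((n:ℂ) * d) * (2 * (Real.pi:ℂ) * Complex.I) := by linear_combination (2 * (Real.pi:ℂ) * Complex.I) * hn
      exact mul_right_cancel₀ h2πI h'
    have hkd : (k : ℤ) = (-n) * d := by
      have : ((k : ℤ) : ℂ) = (((-n) * d : ℤ) : ℂ) := by push_cast; linear_combination -hked
      exact_mod_cast this
    have hdvd : (d : ℤ) ∣ (k : ℤ) := ⟨-n, by linarith [hkd]⟩
    have : (d : ℤ) ≤ (k : ℤ) := Int.le_of_dvd (by exact_mod_cast hk1) hdvd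
    omega
  -- relation between the matrix exponentials and Efun
  have hzeq : ∀ q : Fin d,
      Complex.exp (2 * Real.pi * Complex.I * ((r : ℂ) - (q : ℂ) - 1 / 2) / d)
        = α * β ^ (q : ℕ) := by
    intro q
    rw [hβdef, Efun_pow, hαdef, Efun_mul]
    unfold Efun
    congr 2
    ring
  have hΔne : ∀ q : Fin d,
      (1 - Complex.exp (2 * Real.pi * Complex.I * ((r : ℂ) - (q : ℂ) - 1 / 2) / d)) ≠ 0 := by
    intro q hcon
    have h1 : Complex.exp (2 * Real.pi * Complex.I * ((r : ℂ) - (q : ℂ) - 1 / 2) / d) = 1 := by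
      linear_combination -hcon
    have h2 : (α * β ^ (q:ℕ)) ^ d = -1 := by
      rw [mul_pow, ← pow_mul, mul_comm (q:ℕ) d, pow_mul, hβ, one_pow, mul_one, hα]
    rw [hzeq q] at h1
    rw [h1, one_pow] at h2
    norm_num at h2
  have hsum : ∑ q : Fin d,
      (1 - Complex.exp (2 * Real.pi * Complex.I * ((r : ℂ) - (q : ℂ) - 1 / 2) / d))⁻¹
      = (d : ℂ) / 2 := by
    rw [Finset.sum_congr rfl (fun q _ => by rw [hzeq q])]
    exact key_sum d hdpos α β hα hβ hβk
  -- cross term splitting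
  have hcross : ∀ i j : Fin d,
      Complex.exp (2 * Real.pi * Complex.I * ((i : ℂ) + (j : ℂ) + 1) / (2 * d))
        = Efun d (((i:ℂ) + 1) / 2) * Efun d ((j:ℂ) / 2) := by
    intro i j
    rw [Efun_mul]
    unfold Efun
    congr 1
    field_simp
    ring
  -- eigenvalue
  have hωr : ω ^ (r : ℕ) = Efun d (r : ℂ) := by
    have : ω = Efun d 1 := by rw [hω]; unfold Efun; norm_num
    rw [this, Efun_pow, mul_one]
  funext i
  simp only [Matrix.mulVec, dotProduct, Pi.smul_apply, smul_eq_mul]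
  have hterm : ∀ j : Fin d, T i j * v j
      = (if i = j then Efun d ((i:ℂ) + 1/2) * v j else 0)
        - (2/(d:ℂ)) * s i * Efun d (((i:ℂ)+1)/2)
            * ((2/(d:ℂ)) * (1 - Complex.exp
                (2 * Real.pi * Complex.I * ((r : ℂ) - (j : ℂ) - 1 / 2) / d))⁻¹) := by
    intro j
    rw [hT i j, hv j, sub_mul]
    congr 1
    · rw [ite_mul, zero_mul]
      congr 1
    · rw [pow_add, hcross i j]
      have hEE : Efun d ((j:ℂ)/2) * Efun d (-(j:ℂ)/2) = 1 := by
        rw [Efun_mul]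
        have : (j:ℂ)/2 + -(j:ℂ)/2 = 0 := by ring
        rw [this, Efun_zero]
      have hEj : Complex.exp (2 * Real.pi * Complex.I * (-(j : ℂ) / 2) / d)
          = Efun d (-(j:ℂ)/2) := rfl
      rw [hEj]
      exact cross_helper (2/(d:ℂ)) (s i) (s j) _ _ _ _ (hs2 j) hEE (hΔne j)
  rw [Finset.sum_congr rfl (fun j _ => hterm j), Finset.sum_sub_distrib,
    Finset.sum_ite_eq Finset.univ i (fun j => Efun d ((i:ℂ) + 1/2) * v j),
    if_pos (Finset.mem_univ i), ← Finset.mul_sum, ← Finset.mul_sum, hsum, hωr]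
  have honemul : (2/(d:ℂ)) * ((d:ℂ)/2) = 1 := by field_simp
  rw [honemul, mul_one, hv i]
  have hEi : Complex.exp (2 * Real.pi * Complex.I * ((i : ℂ) + 1 / 2) / d)
      = Efun d ((i:ℂ) + 1/2) := rfl
  have hEmi : Complex.exp (2 * Real.pi * Complex.I * (-(i : ℂ) / 2) / d)
      = Efun d (-(i:ℂ)/2) := rfl
  rw [hEmi]
  have h1 : Efun d ((i:ℂ) + 1/2) * Efun d (-(i:ℂ)/2) = Efun d (((i:ℂ)+1)/2) := by
    rw [Efun_mul]
    congr 1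
    ring
  have h2 : Efun d (((i:ℂ)+1)/2)
      * Complex.exp (2 * Real.pi * Complex.I * ((r : ℂ) - (i : ℂ) - 1 / 2) / d)
      = Efun d (r:ℂ) * Efun d (-(i:ℂ)/2) := by
    rw [Efun_mul]
    have hz : Complex.exp (2 * Real.pi * Complex.I * ((r : ℂ) - (i : ℂ) - 1 / 2) / d)
        = Efun d ((r:ℂ) - (i:ℂ) - 1/2) := rfl
    rw [hz, Efun_mul]
    congr 1
    ring
  exact final_helper (2/(d:ℂ)) (s i) _ _ _ _ _ (hΔne i) h1 h2
end
end

section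
/- Let ε > 0 and suppose D ≥ 2. Suppose the ideal quadruple satisfies Tr[β̂] = 4(d−1)·D (maximal violation on the maximally mixed state 1/D) and the non-ideal quadruple satisfies Tr[β̂̃] = (4(d−1) − ε)·D. Then ‖ [A_1·(a_1·A_3† + a_1*·ω·A_4†)]·(1/D) − [Ã_1·(a_1·Ã_3† + a_1*·ω·Ã_4†)]·(1/D) ‖_HS < √ε and ‖ [A_2·(a_1*·A_3† + a_1·A_4†)]·(1/D) − [Ã_2·(a_1*·Ã_3† + a_1·Ã_4†)]·(1/D) ‖_HS < √ε, where ‖X‖_HS = √(Tr[X†X]) is the Frobenius (Hilbert–Schmidt) norm and X† is the conjugate transpose. -/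
open Matrix Finset

noncomputable section


section scalars
variable (d : ℕ) (hd : 2 ≤ d) (ω : ℂ) (a : ℕ → ℂ)
  (hω : ω = Complex.exp (2 * Real.pi * Complex.I / d))
  (ha : ∀ k, a k = ((1 - Complex.I) / 2) * Complex.exp (Real.pi * Complex.I * k / (2 * d)))

local notation "conj'" => starRingEnd ℂ

lemma conj_arg (k : ℕ) : conj' (Real.pi * Complex.I * k / (2 * d)) = -(Real.pi * Complex.I * k / (2 * d)) := by
  simp only [map_div₀, _root_.map_mul, Complex.conj_I, Complex.conj_ofReal, map_natCast, map_ofNat]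
  ring

include hd hω in
lemma omega_pow_d : ω ^ d = 1 := by
  have hd0 : (d : ℂ) ≠ 0 := Nat.cast_ne_zero.mpr (by omega)
  rw [hω, ← Complex.exp_nat_mul]
  have : (d : ℂ) * (2 * Real.pi * Complex.I / d) = 2 * Real.pi * Complex.I := by field_simp
  rw [this, Complex.exp_two_pi_mul_I]

include hω in
lemma conj_omega_mul : conj' ω * ω = 1 := by
  rw [hω, ← Complex.exp_conj, ← Complex.exp_add]
  have : conj' (2 * Real.pi * Complex.I / d) = -(2 * Real.pi * Complex.I / d) := by
    simp only [map_div₀, _root_.map_mul, Complex.conj_I, Complex.conj_ofReal, map_natCast, map_ofNat]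
    ring
  rw [this, neg_add_cancel, Complex.exp_zero]

include ha in
lemma a_mod (k : ℕ) : conj' (a k) * a k = 1/2 := by
  rw [ha, _root_.map_mul, ← Complex.exp_conj, conj_arg]
  rw [mul_mul_mul_comm, ← Complex.exp_add, neg_add_cancel, Complex.exp_zero, mul_one]
  have h2 : conj' ((1 - Complex.I) / 2) = (1 + Complex.I)/2 := by
    simp [map_div₀, map_ofNat]
  rw [h2]
  have := Complex.I_mul_I
  field_simp
  linear_combination -this

include hd hω ha in
lemma a_cross (k : ℕ) :
    conj' (a k) * (conj' (a k) * ω ^ k) + a k * a k = 0 := by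
  have hd0 : (d : ℂ) ≠ 0 := Nat.cast_ne_zero.mpr (by omega)
  have hc : conj' (a k) = (1 + Complex.I)/2 * Complex.exp (-(Real.pi * Complex.I * k / (2 * d))) := by
    rw [ha, _root_.map_mul, ← Complex.exp_conj, conj_arg]
    congr 1
    simp [map_div₀, map_ofNat]
  have hωk : ω ^ k = Complex.exp ((k:ℂ) * (2 * Real.pi * Complex.I / d)) := by
    rw [hω, Complex.exp_nat_mul]
  rw [hc, ha, hωk]
  have hkey : Complex.exp (-(Real.pi * Complex.I * k / (2 * d))) *
      Complex.exp (-(Real.pi * Complex.I * k / (2 * d))) *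
      Complex.exp ((k:ℂ) * (2 * Real.pi * Complex.I / d)) =
      Complex.exp (Real.pi * Complex.I * k / (2 * d)) *
      Complex.exp (Real.pi * Complex.I * k / (2 * d)) := by
    rw [← Complex.exp_add, ← Complex.exp_add, ← Complex.exp_add]
    congr 1
    field_simp
    ring
  have hI := Complex.I_mul_I
  linear_combination (Complex.exp (Real.pi * Complex.I * k / (2 * d)) *
      Complex.exp (Real.pi * Complex.I * k / (2 * d)) / 2) * hI
    + ((1 + Complex.I)*(1+Complex.I)/4) * hkey

include hd ha in
lemma a_sub (k : ℕ) (h1 : 1 ≤ k) (h2 : k ≤ d - 1) : a (d - k) = conj' (a k) := by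
  have hd0 : (d : ℂ) ≠ 0 := Nat.cast_ne_zero.mpr (by omega)
  have hkd : k ≤ d := by omega
  have hcast : ((d - k : ℕ) : ℂ) = (d : ℂ) - k := by
    push_cast [Nat.cast_sub hkd]; ring
  have hc : conj' (a k) = (1 + Complex.I)/2 * Complex.exp (-(Real.pi * Complex.I * k / (2 * d))) := by
    rw [ha, _root_.map_mul, ← Complex.exp_conj, conj_arg]
    congr 1
    simp [map_div₀, map_ofNat]
  rw [ha, hc, hcast]
  have harg : (Real.pi : ℂ) * Complex.I * ((d:ℂ) - k) / (2 * d)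
      = (Real.pi : ℂ)/2 * Complex.I + -(Real.pi * Complex.I * k / (2 * d)) := by
    field_simp
    ring
  rw [harg, Complex.exp_add]
  have hexpI : Complex.exp ((Real.pi : ℂ)/2 * Complex.I) = Complex.I := by
    have : ((Real.pi : ℂ)/2) = ((Real.pi/2 : ℝ) : ℂ) := by push_cast; ring
    rw [this, Complex.exp_mul_I]
    simp [Complex.ofReal_cos, Complex.ofReal_sin]
  rw [hexpI]
  have hI := Complex.I_mul_I
  linear_combination (-(Complex.exp (-(Real.pi * Complex.I * (k:ℂ) / (2 * d)))) / 2) * hI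

end scalars


lemma expand_sos {D : ℕ} (X Y U V : Matrix (Fin D) (Fin D) ℂ) (α γ b : ℂ)
    (hX : X * Xᴴ = 1) (hY : Y * Yᴴ = 1) (hU : Uᴴ * U = 1) (hV : Vᴴ * V = 1) :
    (Xᴴ - (α • U + γ • V))ᴴ * (Xᴴ - (α • U + γ • V))
      + (Yᴴ - (b • U + α • V))ᴴ * (Yᴴ - (b • U + α • V))
    = ((2 : ℂ) + (starRingEnd ℂ α * α + starRingEnd ℂ γ * γ
        + starRingEnd ℂ b * b + starRingEnd ℂ α * α)) • (1 : Matrix (Fin D) (Fin D) ℂ)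
      + (starRingEnd ℂ α * γ + starRingEnd ℂ b * α) • (Uᴴ * V)
      + (starRingEnd ℂ γ * α + starRingEnd ℂ α * b) • (Vᴴ * U)
      - (α • (X * U) + γ • (X * V) + b • (Y * U) + α • (Y * V)
        + starRingEnd ℂ α • (Uᴴ * Xᴴ) + starRingEnd ℂ γ • (Vᴴ * Xᴴ)
        + starRingEnd ℂ b • (Uᴴ * Yᴴ) + starRingEnd ℂ α • (Vᴴ * Yᴴ)) := by
  simp only [conjTranspose_sub, conjTranspose_add, conjTranspose_smul,
    conjTranspose_conjTranspose, sub_mul, mul_sub, add_mul, mul_add,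
    smul_mul_assoc, mul_smul_comm, smul_smul, hX, hY, hU, hV, Complex.star_def]
  match_scalars <;> ring

lemma pow_conjT {D d m : ℕ} (B : Matrix (Fin D) (Fin D) ℂ)
    (hB : B ∈ Matrix.unitaryGroup (Fin D) ℂ) (hBd : B ^ d = 1) (hm : m ≤ d) :
    (B ^ m)ᴴ = B ^ (d - m) := by
  have hmem : B ^ m ∈ Matrix.unitaryGroup (Fin D) ℂ := pow_mem hB m
  have h1 : (B ^ m)ᴴ * B ^ m = 1 := by
    have := hmem.1
    rwa [Matrix.star_eq_conjTranspose] at this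
  calc (B ^ m)ᴴ = (B ^ m)ᴴ * (B ^ m * B ^ (d - m)) := by
        rw [← pow_add, show m + (d - m) = d by omega, hBd, mul_one]
    _ = ((B ^ m)ᴴ * B ^ m) * B ^ (d - m) := by rw [mul_assoc]
    _ = B ^ (d - m) := by rw [h1, one_mul]

lemma pow_mul_conjT {D m : ℕ} (B : Matrix (Fin D) (Fin D) ℂ)
    (hB : B ∈ Matrix.unitaryGroup (Fin D) ℂ) :
    (B ^ m) * (B ^ m)ᴴ = 1 := by
  have hmem : B ^ m ∈ Matrix.unitaryGroup (Fin D) ℂ := pow_mem hB m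
  have := hmem.2
  rwa [Matrix.star_eq_conjTranspose] at this

lemma conjT_mul_pow {D m : ℕ} (B : Matrix (Fin D) (Fin D) ℂ)
    (hB : B ∈ Matrix.unitaryGroup (Fin D) ℂ) :
    (B ^ m)ᴴ * (B ^ m) = 1 := by
  have hmem : B ^ m ∈ Matrix.unitaryGroup (Fin D) ℂ := pow_mem hB m
  have := hmem.1
  rwa [Matrix.star_eq_conjTranspose] at this

lemma sos_sum (d D : ℕ) (hd : 2 ≤ d) (a : ℕ → ℂ) (ω : ℂ)
    (hmod : ∀ k, starRingEnd ℂ (a k) * a k = 1/2)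
    (hcross : ∀ k, starRingEnd ℂ (a k) * (starRingEnd ℂ (a k) * ω ^ k) + a k * a k = 0)
    (hωω : starRingEnd ℂ ω * ω = 1)
    (hωd : ω ^ d = 1)
    (hsub : ∀ k, 1 ≤ k → k ≤ d - 1 → a (d - k) = starRingEnd ℂ (a k))
    (B₁ B₂ B₃ B₄ : Matrix (Fin D) (Fin D) ℂ)
    (hB₁ : B₁ ∈ Matrix.unitaryGroup (Fin D) ℂ)
    (hB₂ : B₂ ∈ Matrix.unitaryGroup (Fin D) ℂ)
    (hB₃ : B₃ ∈ Matrix.unitaryGroup (Fin D) ℂ)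
    (hB₄ : B₄ ∈ Matrix.unitaryGroup (Fin D) ℂ)
    (hB₁d : B₁ ^ d = 1) (hB₂d : B₂ ^ d = 1) (hB₃d : B₃ ^ d = 1) (hB₄d : B₄ ^ d = 1) :
    ∑ k ∈ Finset.Icc 1 (d - 1),
      (((B₁ ^ k)ᴴ - (a k • B₃ ^ (d - k) + (starRingEnd ℂ (a k) * ω ^ k) • B₄ ^ (d - k)))ᴴ *
        ((B₁ ^ k)ᴴ - (a k • B₃ ^ (d - k) + (starRingEnd ℂ (a k) * ω ^ k) • B₄ ^ (d - k)))
      + ((B₂ ^ k)ᴴ - (starRingEnd ℂ (a k) • B₃ ^ (d - k) + a k • B₄ ^ (d - k)))ᴴ *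
        ((B₂ ^ k)ᴴ - (starRingEnd ℂ (a k) • B₃ ^ (d - k) + a k • B₄ ^ (d - k))))
    = ((4 * (d - 1) : ℕ) : ℂ) • (1 : Matrix (Fin D) (Fin D) ℂ)
      - ∑ k ∈ Finset.Icc 1 (d - 1),
        (a k • (B₁ ^ k * B₃ ^ (d - k))
          + (starRingEnd ℂ (a k) * ω ^ k) • (B₁ ^ k * B₄ ^ (d - k))
          + starRingEnd ℂ (a k) • (B₂ ^ k * B₃ ^ (d - k))
          + a k • (B₂ ^ k * B₄ ^ (d - k))
          + a k • (B₃ ^ (d - k) * B₁ ^ k)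
          + (starRingEnd ℂ (a k) * ω ^ k) • (B₄ ^ (d - k) * B₁ ^ k)
          + starRingEnd ℂ (a k) • (B₃ ^ (d - k) * B₂ ^ k)
          + a k • (B₄ ^ (d - k) * B₂ ^ k)) := by
  have hωrev : ∀ k, k ≤ d → (starRingEnd ℂ ω) ^ k = ω ^ (d - k) := by
    intro k hk
    have e1 : ω ^ (d - k) * ω ^ k = 1 := by
      rw [← pow_add, show d - k + k = d by omega, hωd]
    have e2 : (starRingEnd ℂ ω) ^ k * ω ^ k = 1 := by
      rw [← mul_pow, hωω, one_pow]
    calc (starRingEnd ℂ ω) ^ k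
        = (starRingEnd ℂ ω) ^ k * (ω ^ (d - k) * ω ^ k) := by rw [e1, mul_one]
      _ = ω ^ (d - k) * ((starRingEnd ℂ ω) ^ k * ω ^ k) := by ring
      _ = ω ^ (d - k) := by rw [e2, mul_one]
  -- pointwise expansion
  have hstep : ∀ k ∈ Finset.Icc 1 (d - 1),
      (((B₁ ^ k)ᴴ - (a k • B₃ ^ (d - k) + (starRingEnd ℂ (a k) * ω ^ k) • B₄ ^ (d - k)))ᴴ *
        ((B₁ ^ k)ᴴ - (a k • B₃ ^ (d - k) + (starRingEnd ℂ (a k) * ω ^ k) • B₄ ^ (d - k)))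
      + ((B₂ ^ k)ᴴ - (starRingEnd ℂ (a k) • B₃ ^ (d - k) + a k • B₄ ^ (d - k)))ᴴ *
        ((B₂ ^ k)ᴴ - (starRingEnd ℂ (a k) • B₃ ^ (d - k) + a k • B₄ ^ (d - k))))
      = (4 : ℂ) • (1 : Matrix (Fin D) (Fin D) ℂ)
        - (a k • (B₁ ^ k * B₃ ^ (d - k))
          + (starRingEnd ℂ (a k) * ω ^ k) • (B₁ ^ k * B₄ ^ (d - k))
          + starRingEnd ℂ (a k) • (B₂ ^ k * B₃ ^ (d - k))
          + a k • (B₂ ^ k * B₄ ^ (d - k))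
          + starRingEnd ℂ (a k) • ((B₃ ^ (d - k))ᴴ * (B₁ ^ k)ᴴ)
          + starRingEnd ℂ (starRingEnd ℂ (a k) * ω ^ k) • ((B₄ ^ (d - k))ᴴ * (B₁ ^ k)ᴴ)
          + starRingEnd ℂ (starRingEnd ℂ (a k)) • ((B₃ ^ (d - k))ᴴ * (B₂ ^ k)ᴴ)
          + starRingEnd ℂ (a k) • ((B₄ ^ (d - k))ᴴ * (B₂ ^ k)ᴴ)) := by
    intro k hk
    rw [expand_sos (B₁ ^ k) (B₂ ^ k) (B₃ ^ (d - k)) (B₄ ^ (d - k))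
      (a k) (starRingEnd ℂ (a k) * ω ^ k) (starRingEnd ℂ (a k))
      (pow_mul_conjT B₁ hB₁) (pow_mul_conjT B₂ hB₂)
      (conjT_mul_pow B₃ hB₃) (conjT_mul_pow B₄ hB₄)]
    have hγ : starRingEnd ℂ (starRingEnd ℂ (a k) * ω ^ k) * (starRingEnd ℂ (a k) * ω ^ k)
        = 1/2 := by
      simp only [_root_.map_mul, map_pow, Complex.conj_conj]
      have hω1 : (starRingEnd ℂ ω) ^ k * ω ^ k = 1 := by rw [← mul_pow, hωω, one_pow]
      linear_combination (a k * starRingEnd ℂ (a k)) * hω1 + hmod k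
    have hb : starRingEnd ℂ (starRingEnd ℂ (a k)) * (starRingEnd ℂ (a k)) = 1/2 := by
      rw [Complex.conj_conj]
      linear_combination hmod k
    have hc4 : starRingEnd ℂ (a k) * (starRingEnd ℂ (a k) * ω ^ k)
        + starRingEnd ℂ (starRingEnd ℂ (a k)) * a k = 0 := by
      rw [Complex.conj_conj]
      linear_combination hcross k
    have hc5 : starRingEnd ℂ (starRingEnd ℂ (a k) * ω ^ k) * a k
        + starRingEnd ℂ (a k) * starRingEnd ℂ (a k) = 0 := by
      have := congrArg (starRingEnd ℂ) (hcross k)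
      simp only [map_add, _root_.map_mul, map_pow, Complex.conj_conj, map_zero] at this
      simp only [_root_.map_mul, map_pow, Complex.conj_conj]
      linear_combination this
    rw [hc4, hc5, zero_smul, zero_smul, add_zero, add_zero, hγ, hb, hmod k]
    norm_num
  have hrev : ∑ k ∈ Finset.Icc 1 (d - 1),
      (starRingEnd ℂ (a k) • ((B₃ ^ (d - k))ᴴ * (B₁ ^ k)ᴴ)
        + starRingEnd ℂ (starRingEnd ℂ (a k) * ω ^ k) • ((B₄ ^ (d - k))ᴴ * (B₁ ^ k)ᴴ)
        + starRingEnd ℂ (starRingEnd ℂ (a k)) • ((B₃ ^ (d - k))ᴴ * (B₂ ^ k)ᴴ)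
        + starRingEnd ℂ (a k) • ((B₄ ^ (d - k))ᴴ * (B₂ ^ k)ᴴ))
      = ∑ k ∈ Finset.Icc 1 (d - 1),
      (a k • (B₃ ^ (d - k) * B₁ ^ k)
        + (starRingEnd ℂ (a k) * ω ^ k) • (B₄ ^ (d - k) * B₁ ^ k)
        + starRingEnd ℂ (a k) • (B₃ ^ (d - k) * B₂ ^ k)
        + a k • (B₄ ^ (d - k) * B₂ ^ k)) := by
    refine Finset.sum_nbij' (i := fun k => d - k) (j := fun k => d - k) ?_ ?_ ?_ ?_ ?_
    · intro k hk
      simp only [Finset.mem_Icc] at hk ⊢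
      omega
    · intro k hk
      simp only [Finset.mem_Icc] at hk ⊢
      omega
    · intro k hk
      simp only [Finset.mem_Icc] at hk
      show d - (d - k) = k
      omega
    · intro k hk
      simp only [Finset.mem_Icc] at hk
      show d - (d - k) = k
      omega
    · intro k hk
      simp only [Finset.mem_Icc] at hk
      obtain ⟨hk1, hk2⟩ := hk
      beta_reduce
      rw [pow_conjT B₃ hB₃ hB₃d (by omega : d - k ≤ d),
        pow_conjT B₄ hB₄ hB₄d (by omega : d - k ≤ d),
        pow_conjT B₁ hB₁ hB₁d (by omega : k ≤ d),
        pow_conjT B₂ hB₂ hB₂d (by omega : k ≤ d),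
        show d - (d - k) = k by omega,
        hsub k hk1 hk2,
        ← hωrev k (by omega)]
      simp only [_root_.map_mul, map_pow, Complex.conj_conj]
      try match_scalars <;> ring
  rw [Finset.sum_congr rfl hstep, Finset.sum_sub_distrib, Finset.sum_const,
    Nat.card_Icc]
  congr 1
  · rw [← Nat.cast_smul_eq_nsmul ℂ, smul_smul]
    congr 1
    push_cast [Nat.cast_sub (show 1 ≤ d by omega)]
    ring
  · calc ∑ k ∈ Finset.Icc 1 (d - 1),
        (a k • (B₁ ^ k * B₃ ^ (d - k))
          + (starRingEnd ℂ (a k) * ω ^ k) • (B₁ ^ k * B₄ ^ (d - k))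
          + starRingEnd ℂ (a k) • (B₂ ^ k * B₃ ^ (d - k))
          + a k • (B₂ ^ k * B₄ ^ (d - k))
          + starRingEnd ℂ (a k) • ((B₃ ^ (d - k))ᴴ * (B₁ ^ k)ᴴ)
          + starRingEnd ℂ (starRingEnd ℂ (a k) * ω ^ k) • ((B₄ ^ (d - k))ᴴ * (B₁ ^ k)ᴴ)
          + starRingEnd ℂ (starRingEnd ℂ (a k)) • ((B₃ ^ (d - k))ᴴ * (B₂ ^ k)ᴴ)
          + starRingEnd ℂ (a k) • ((B₄ ^ (d - k))ᴴ * (B₂ ^ k)ᴴ))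
        = ∑ k ∈ Finset.Icc 1 (d - 1),
        ((a k • (B₁ ^ k * B₃ ^ (d - k))
          + (starRingEnd ℂ (a k) * ω ^ k) • (B₁ ^ k * B₄ ^ (d - k))
          + starRingEnd ℂ (a k) • (B₂ ^ k * B₃ ^ (d - k))
          + a k • (B₂ ^ k * B₄ ^ (d - k)))
          + (starRingEnd ℂ (a k) • ((B₃ ^ (d - k))ᴴ * (B₁ ^ k)ᴴ)
          + starRingEnd ℂ (starRingEnd ℂ (a k) * ω ^ k) • ((B₄ ^ (d - k))ᴴ * (B₁ ^ k)ᴴ)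
          + starRingEnd ℂ (starRingEnd ℂ (a k)) • ((B₃ ^ (d - k))ᴴ * (B₂ ^ k)ᴴ)
          + starRingEnd ℂ (a k) • ((B₄ ^ (d - k))ᴴ * (B₂ ^ k)ᴴ))) :=
          Finset.sum_congr rfl (fun k _ => by abel)
      _ = (∑ k ∈ Finset.Icc 1 (d - 1),
        (a k • (B₁ ^ k * B₃ ^ (d - k))
          + (starRingEnd ℂ (a k) * ω ^ k) • (B₁ ^ k * B₄ ^ (d - k))
          + starRingEnd ℂ (a k) • (B₂ ^ k * B₃ ^ (d - k))
          + a k • (B₂ ^ k * B₄ ^ (d - k))))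
        + ∑ k ∈ Finset.Icc 1 (d - 1),
          (starRingEnd ℂ (a k) • ((B₃ ^ (d - k))ᴴ * (B₁ ^ k)ᴴ)
          + starRingEnd ℂ (starRingEnd ℂ (a k) * ω ^ k) • ((B₄ ^ (d - k))ᴴ * (B₁ ^ k)ᴴ)
          + starRingEnd ℂ (starRingEnd ℂ (a k)) • ((B₃ ^ (d - k))ᴴ * (B₂ ^ k)ᴴ)
          + starRingEnd ℂ (a k) • ((B₄ ^ (d - k))ᴴ * (B₂ ^ k)ᴴ)) :=
          Finset.sum_add_distrib
      _ = _ := by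
          rw [hrev, ← Finset.sum_add_distrib]
          exact Finset.sum_congr rfl (fun k _ => by abel)


def frobS {D : ℕ} (M : Matrix (Fin D) (Fin D) ℂ) : ℝ :=
  ∑ i, ∑ j, Complex.normSq (M j i)

lemma trace_eq_frob {D : ℕ} (M : Matrix (Fin D) (Fin D) ℂ) :
    (Mᴴ * M).trace = ((frobS M : ℝ) : ℂ) := by
  unfold frobS
  simp [Matrix.trace, Matrix.mul_apply, Matrix.diag, Matrix.conjTranspose_apply]
  congr 1; ext i; congr 1; ext j
  rw [Complex.normSq_eq_conj_mul_self]

lemma frobS_nonneg {D : ℕ} (M : Matrix (Fin D) (Fin D) ℂ) : 0 ≤ frobS M :=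
  Finset.sum_nonneg fun _ _ => Finset.sum_nonneg fun _ _ => Complex.normSq_nonneg _

lemma frobS_eq_zero {D : ℕ} {M : Matrix (Fin D) (Fin D) ℂ} (h : frobS M = 0) : M = 0 := by
  unfold frobS at h
  have hrow := (Finset.sum_eq_zero_iff_of_nonneg
    (fun i _ => Finset.sum_nonneg fun j _ => Complex.normSq_nonneg _)).mp h
  ext i j
  have hij := (Finset.sum_eq_zero_iff_of_nonneg
    (fun j _ => Complex.normSq_nonneg _)).mp (hrow j (Finset.mem_univ j)) i (Finset.mem_univ i)
  simpa using Complex.normSq_eq_zero.mp hij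



/-- Robustness: if the ideal observables attain `Tr[β̂] = 4(d−1)·D` and the
non-ideal observables attain `Tr[β̂̃] = (4(d−1)−ε)·D`, then the combinations
`A₁(a₁A₃† + a₁*ωA₄†)` and `A₂(a₁*A₃† + a₁A₄†)` applied to the maximally mixed
state `𝟙/D` are `√ε`-close in Hilbert–Schmidt norm to their non-ideal versions. -/
theorem robustness_of_certification
    (d D : ℕ) (hd : 2 ≤ d) (hD : 2 ≤ D)
    (ε : ℝ) (hε : 0 < ε)
    (ω : ℂ) (hω : ω = Complex.exp (2 * Real.pi * Complex.I / d))
    (a : ℕ → ℂ)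
    (ha : ∀ k, a k = ((1 - Complex.I) / 2) * Complex.exp (Real.pi * Complex.I * k / (2 * d)))
    (A₁ A₂ A₃ A₄ B₁ B₂ B₃ B₄ : Matrix (Fin D) (Fin D) ℂ)
    (hA₁ : A₁ ∈ Matrix.unitaryGroup (Fin D) ℂ)
    (hA₂ : A₂ ∈ Matrix.unitaryGroup (Fin D) ℂ)
    (hA₃ : A₃ ∈ Matrix.unitaryGroup (Fin D) ℂ)
    (hA₄ : A₄ ∈ Matrix.unitaryGroup (Fin D) ℂ)
    (hB₁ : B₁ ∈ Matrix.unitaryGroup (Fin D) ℂ)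
    (hB₂ : B₂ ∈ Matrix.unitaryGroup (Fin D) ℂ)
    (hB₃ : B₃ ∈ Matrix.unitaryGroup (Fin D) ℂ)
    (hB₄ : B₄ ∈ Matrix.unitaryGroup (Fin D) ℂ)
    (hA₁d : A₁ ^ d = 1) (hA₂d : A₂ ^ d = 1) (hA₃d : A₃ ^ d = 1) (hA₄d : A₄ ^ d = 1)
    (hB₁d : B₁ ^ d = 1) (hB₂d : B₂ ^ d = 1) (hB₃d : B₃ ^ d = 1) (hB₄d : B₄ ^ d = 1)
    (β β' : Matrix (Fin D) (Fin D) ℂ)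
    (hβ : β = ∑ k ∈ Finset.Icc 1 (d - 1),
      (a k • (A₁ ^ k * A₃ ^ (d - k))
        + (starRingEnd ℂ (a k) * ω ^ k) • (A₁ ^ k * A₄ ^ (d - k))
        + starRingEnd ℂ (a k) • (A₂ ^ k * A₃ ^ (d - k))
        + a k • (A₂ ^ k * A₄ ^ (d - k))
        + a k • (A₃ ^ (d - k) * A₁ ^ k)
        + (starRingEnd ℂ (a k) * ω ^ k) • (A₄ ^ (d - k) * A₁ ^ k)
        + starRingEnd ℂ (a k) • (A₃ ^ (d - k) * A₂ ^ k)
        + a k • (A₄ ^ (d - k) * A₂ ^ k)))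
    (hβ' : β' = ∑ k ∈ Finset.Icc 1 (d - 1),
      (a k • (B₁ ^ k * B₃ ^ (d - k))
        + (starRingEnd ℂ (a k) * ω ^ k) • (B₁ ^ k * B₄ ^ (d - k))
        + starRingEnd ℂ (a k) • (B₂ ^ k * B₃ ^ (d - k))
        + a k • (B₂ ^ k * B₄ ^ (d - k))
        + a k • (B₃ ^ (d - k) * B₁ ^ k)
        + (starRingEnd ℂ (a k) * ω ^ k) • (B₄ ^ (d - k) * B₁ ^ k)
        + starRingEnd ℂ (a k) • (B₃ ^ (d - k) * B₂ ^ k)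
        + a k • (B₄ ^ (d - k) * B₂ ^ k)))
    (htr : β.trace = ((4 * (d - 1) * D : ℕ) : ℂ))
    (htr' : β'.trace = (((4 * ((d : ℝ) - 1) - ε) * D : ℝ) : ℂ))
    (Y₁ Y₂ : Matrix (Fin D) (Fin D) ℂ)
    (hY₁ : Y₁ = ((D : ℂ))⁻¹ • (A₁ * (a 1 • A₃ᴴ + (starRingEnd ℂ (a 1) * ω) • A₄ᴴ))
        - ((D : ℂ))⁻¹ • (B₁ * (a 1 • B₃ᴴ + (starRingEnd ℂ (a 1) * ω) • B₄ᴴ)))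
    (hY₂ : Y₂ = ((D : ℂ))⁻¹ • (A₂ * (starRingEnd ℂ (a 1) • A₃ᴴ + a 1 • A₄ᴴ))
        - ((D : ℂ))⁻¹ • (B₂ * (starRingEnd ℂ (a 1) • B₃ᴴ + a 1 • B₄ᴴ))) :
    Real.sqrt ((Y₁ᴴ * Y₁).trace.re) < Real.sqrt ε ∧
    Real.sqrt ((Y₂ᴴ * Y₂).trace.re) < Real.sqrt ε := by
  have hdR : (1:ℕ) ≤ d := by omega
  have hD0 : (0:ℝ) < D := by exact_mod_cast (by omega : 0 < D)
  have hmod := a_mod d a ha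
  have hcross := a_cross d hd ω a hω ha
  have hωω := conj_omega_mul d ω hω
  have hωd := omega_pow_d d hd ω hω
  have hsub := a_sub d hd a ha
  have keyA := sos_sum d D hd a ω hmod hcross hωω hωd hsub A₁ A₂ A₃ A₄
    hA₁ hA₂ hA₃ hA₄ hA₁d hA₂d hA₃d hA₄d
  have keyB := sos_sum d D hd a ω hmod hcross hωω hωd hsub B₁ B₂ B₃ B₄
    hB₁ hB₂ hB₃ hB₄ hB₁d hB₂d hB₃d hB₄d
  have h1mem : (1:ℕ) ∈ Finset.Icc 1 (d-1) := Finset.mem_Icc.mpr ⟨le_refl 1, by omega⟩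
  -- A side: all SOS terms vanish
  have trA : ∑ k ∈ Finset.Icc 1 (d-1),
      (frobS ((A₁ ^ k)ᴴ - (a k • A₃ ^ (d - k) + (starRingEnd ℂ (a k) * ω ^ k) • A₄ ^ (d - k)))
       + frobS ((A₂ ^ k)ᴴ - (starRingEnd ℂ (a k) • A₃ ^ (d - k) + a k • A₄ ^ (d - k)))) = 0 := by
    have hC : ((∑ k ∈ Finset.Icc 1 (d-1),
        (frobS ((A₁ ^ k)ᴴ - (a k • A₃ ^ (d - k) + (starRingEnd ℂ (a k) * ω ^ k) • A₄ ^ (d - k)))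
         + frobS ((A₂ ^ k)ᴴ - (starRingEnd ℂ (a k) • A₃ ^ (d - k) + a k • A₄ ^ (d - k)))) : ℝ) : ℂ)
        = ((0:ℝ):ℂ) := by
      push_cast
      simp only [← trace_eq_frob, ← Matrix.trace_add]
      rw [← Matrix.trace_sum, keyA, Matrix.trace_sub, Matrix.trace_smul, Matrix.trace_one,
        ← hβ, htr]
      simp only [Fintype.card_fin, smul_eq_mul]
      push_cast [Nat.cast_sub hdR]
      ring
    exact_mod_cast hC
  have hnnA : ∀ k ∈ Finset.Icc 1 (d-1), 0 ≤
      frobS ((A₁ ^ k)ᴴ - (a k • A₃ ^ (d - k) + (starRingEnd ℂ (a k) * ω ^ k) • A₄ ^ (d - k)))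
       + frobS ((A₂ ^ k)ᴴ - (starRingEnd ℂ (a k) • A₃ ^ (d - k) + a k • A₄ ^ (d - k))) :=
    fun k _ => add_nonneg (frobS_nonneg _) (frobS_nonneg _)
  have hA1sum := (Finset.sum_eq_zero_iff_of_nonneg hnnA).mp trA 1 h1mem
  have hPA0 : frobS ((A₁ ^ 1)ᴴ - (a 1 • A₃ ^ (d - 1) + (starRingEnd ℂ (a 1) * ω ^ 1) • A₄ ^ (d - 1))) = 0 := by
    have h1 := frobS_nonneg ((A₁ ^ 1)ᴴ - (a 1 • A₃ ^ (d - 1) + (starRingEnd ℂ (a 1) * ω ^ 1) • A₄ ^ (d - 1)))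
    have h2 := frobS_nonneg ((A₂ ^ 1)ᴴ - (starRingEnd ℂ (a 1) • A₃ ^ (d - 1) + a 1 • A₄ ^ (d - 1)))
    linarith
  have hQA0 : frobS ((A₂ ^ 1)ᴴ - (starRingEnd ℂ (a 1) • A₃ ^ (d - 1) + a 1 • A₄ ^ (d - 1))) = 0 := by
    have h1 := frobS_nonneg ((A₁ ^ 1)ᴴ - (a 1 • A₃ ^ (d - 1) + (starRingEnd ℂ (a 1) * ω ^ 1) • A₄ ^ (d - 1)))
    have h2 := frobS_nonneg ((A₂ ^ 1)ᴴ - (starRingEnd ℂ (a 1) • A₃ ^ (d - 1) + a 1 • A₄ ^ (d - 1)))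
    linarith
  -- B side: SOS trace equals ε·D
  have trB : ∑ k ∈ Finset.Icc 1 (d-1),
      (frobS ((B₁ ^ k)ᴴ - (a k • B₃ ^ (d - k) + (starRingEnd ℂ (a k) * ω ^ k) • B₄ ^ (d - k)))
       + frobS ((B₂ ^ k)ᴴ - (starRingEnd ℂ (a k) • B₃ ^ (d - k) + a k • B₄ ^ (d - k)))) = ε * D := by
    have hC : ((∑ k ∈ Finset.Icc 1 (d-1),
        (frobS ((B₁ ^ k)ᴴ - (a k • B₃ ^ (d - k) + (starRingEnd ℂ (a k) * ω ^ k) • B₄ ^ (d - k)))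
         + frobS ((B₂ ^ k)ᴴ - (starRingEnd ℂ (a k) • B₃ ^ (d - k) + a k • B₄ ^ (d - k)))) : ℝ) : ℂ)
        = ((ε * D : ℝ):ℂ) := by
      push_cast
      simp only [← trace_eq_frob, ← Matrix.trace_add]
      rw [← Matrix.trace_sum, keyB, Matrix.trace_sub, Matrix.trace_smul, Matrix.trace_one,
        ← hβ', htr']
      simp only [Fintype.card_fin, smul_eq_mul]
      push_cast [Nat.cast_sub hdR]
      ring
    exact_mod_cast hC
  have hnnB : ∀ k ∈ Finset.Icc 1 (d-1), 0 ≤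
      frobS ((B₁ ^ k)ᴴ - (a k • B₃ ^ (d - k) + (starRingEnd ℂ (a k) * ω ^ k) • B₄ ^ (d - k)))
       + frobS ((B₂ ^ k)ᴴ - (starRingEnd ℂ (a k) • B₃ ^ (d - k) + a k • B₄ ^ (d - k))) :=
    fun k _ => add_nonneg (frobS_nonneg _) (frobS_nonneg _)
  have hB1sum : frobS ((B₁ ^ 1)ᴴ - (a 1 • B₃ ^ (d - 1) + (starRingEnd ℂ (a 1) * ω ^ 1) • B₄ ^ (d - 1)))
       + frobS ((B₂ ^ 1)ᴴ - (starRingEnd ℂ (a 1) • B₃ ^ (d - 1) + a 1 • B₄ ^ (d - 1))) ≤ ε * D := by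
    have hle := Finset.single_le_sum hnnB h1mem
    rw [trB] at hle
    exact hle
  have hPB_le : frobS ((B₁ ^ 1)ᴴ - (a 1 • B₃ ^ (d - 1) + (starRingEnd ℂ (a 1) * ω ^ 1) • B₄ ^ (d - 1))) ≤ ε * D := by
    have := frobS_nonneg ((B₂ ^ 1)ᴴ - (starRingEnd ℂ (a 1) • B₃ ^ (d - 1) + a 1 • B₄ ^ (d - 1)))
    linarith
  have hQB_le : frobS ((B₂ ^ 1)ᴴ - (starRingEnd ℂ (a 1) • B₃ ^ (d - 1) + a 1 • B₄ ^ (d - 1))) ≤ ε * D := by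
    have := frobS_nonneg ((B₁ ^ 1)ᴴ - (a 1 • B₃ ^ (d - 1) + (starRingEnd ℂ (a 1) * ω ^ 1) • B₄ ^ (d - 1)))
    linarith
  -- conjTranspose = power d-1
  have hA3H : A₃ᴴ = A₃ ^ (d-1) := by
    have h := pow_conjT (m := 1) A₃ hA₃ hA₃d hdR
    rwa [pow_one] at h
  have hA4H : A₄ᴴ = A₄ ^ (d-1) := by
    have h := pow_conjT (m := 1) A₄ hA₄ hA₄d hdR
    rwa [pow_one] at h
  have hB3H : B₃ᴴ = B₃ ^ (d-1) := by
    have h := pow_conjT (m := 1) B₃ hB₃ hB₃d hdR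
    rwa [pow_one] at h
  have hB4H : B₄ᴴ = B₄ ^ (d-1) := by
    have h := pow_conjT (m := 1) B₄ hB₄ hB₄d hdR
    rwa [pow_one] at h
  have hA₁u : A₁ * A₁ᴴ = 1 := by
    have := hA₁.2; rwa [Matrix.star_eq_conjTranspose] at this
  have hA₂u : A₂ * A₂ᴴ = 1 := by
    have := hA₂.2; rwa [Matrix.star_eq_conjTranspose] at this
  have hB₁u : B₁ * B₁ᴴ = 1 := by
    have := hB₁.2; rwa [Matrix.star_eq_conjTranspose] at this
  have hB₂u : B₂ * B₂ᴴ = 1 := by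
    have := hB₂.2; rwa [Matrix.star_eq_conjTranspose] at this
  have hB₁s : B₁ᴴ * B₁ = 1 := by
    have := hB₁.1; rwa [Matrix.star_eq_conjTranspose] at this
  have hB₂s : B₂ᴴ * B₂ = 1 := by
    have := hB₂.1; rwa [Matrix.star_eq_conjTranspose] at this
  -- ideal relations
  have hGA1 : a 1 • A₃ᴴ + (starRingEnd ℂ (a 1) * ω) • A₄ᴴ = A₁ᴴ := by
    have h2 := (sub_eq_zero.mp (frobS_eq_zero hPA0)).symm
    rw [pow_one, pow_one] at h2
    rw [hA3H, hA4H]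
    exact h2.symm.symm ▸ h2
  have hGA2 : starRingEnd ℂ (a 1) • A₃ᴴ + a 1 • A₄ᴴ = A₂ᴴ := by
    have h2 := (sub_eq_zero.mp (frobS_eq_zero hQA0)).symm
    rw [pow_one] at h2
    rw [hA3H, hA4H]
    exact h2
  -- the generic final bound
  have final : ∀ (Y C P : Matrix (Fin D) (Fin D) ℂ),
      Y = ((D : ℂ))⁻¹ • (C * P) → Cᴴ * C = 1 → frobS P ≤ ε * D →
      Real.sqrt ((Yᴴ * Y).trace.re) < Real.sqrt ε := by
    intro Y C P hYf hCs hPle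
    have hmid : (C * P)ᴴ * (C * P) = Pᴴ * P := by
      rw [conjTranspose_mul, mul_assoc, ← mul_assoc Cᴴ C P, hCs, one_mul]
    have htrY : (Yᴴ * Y).trace = (((D:ℝ)⁻¹ * (D:ℝ)⁻¹ * frobS P : ℝ) : ℂ) := by
      rw [hYf, conjTranspose_smul, smul_mul_assoc, mul_smul_comm, smul_smul, hmid,
        Matrix.trace_smul, trace_eq_frob, smul_eq_mul]
      simp only [Complex.star_def, map_inv₀, Complex.conj_natCast]
      push_cast
      ring
    have hre : (Yᴴ * Y).trace.re = (D:ℝ)⁻¹ * (D:ℝ)⁻¹ * frobS P := by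
      rw [htrY, Complex.ofReal_re]
    have hlt : (Yᴴ * Y).trace.re < ε := by
      rw [hre]
      have h1 : (D:ℝ)⁻¹ * (D:ℝ)⁻¹ * frobS P ≤ (D:ℝ)⁻¹ * (D:ℝ)⁻¹ * (ε * D) :=
        mul_le_mul_of_nonneg_left hPle (by positivity)
      have h2 : (D:ℝ)⁻¹ * (D:ℝ)⁻¹ * (ε * D) = ε / D := by
        field_simp
      have h3 : ε / D < ε := div_lt_self hε (by exact_mod_cast hD)
      linarith
    exact Real.sqrt_lt_sqrt (by rw [hre]; exact mul_nonneg (by positivity) (frobS_nonneg _)) hlt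
  constructor
  · -- Y₁
    have hPBe : (B₁ ^ 1)ᴴ - (a 1 • B₃ ^ (d - 1) + (starRingEnd ℂ (a 1) * ω ^ 1) • B₄ ^ (d - 1))
        = B₁ᴴ - (a 1 • B₃ᴴ + (starRingEnd ℂ (a 1) * ω) • B₄ᴴ) := by
      rw [pow_one, pow_one, hB3H, hB4H]
    rw [hPBe] at hPB_le
    refine final Y₁ B₁ (B₁ᴴ - (a 1 • B₃ᴴ + (starRingEnd ℂ (a 1) * ω) • B₄ᴴ)) ?_ hB₁s hPB_le
    rw [hY₁, hGA1, hA₁u, mul_sub, hB₁u, smul_sub]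
  · -- Y₂
    have hQBe : (B₂ ^ 1)ᴴ - (starRingEnd ℂ (a 1) • B₃ ^ (d - 1) + a 1 • B₄ ^ (d - 1))
        = B₂ᴴ - (starRingEnd ℂ (a 1) • B₃ᴴ + a 1 • B₄ᴴ) := by
      rw [pow_one, hB3H, hB4H]
    rw [hQBe] at hQB_le
    refine final Y₂ B₂ (B₂ᴴ - (starRingEnd ℂ (a 1) • B₃ᴴ + a 1 • B₄ᴴ)) ?_ hB₂s hQB_le
    rw [hY₂, hGA2, hA₂u, mul_sub, hB₂u, smul_sub]
end
end
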